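/- arXiv:2511.03135 — 7 statements merged into one kernel-verified Lean document; each statement's English description precedes it below -/
import Mathlib

section
/- Let M and N be matroids on the same ground set V. For any 2n-1 subsets A_1, …, A_{2n-1} of V, each of size n and independent in both M and N, there exist indices 1 ≤ i_1 < ⋯ < i_n ≤ 2n-1 and distinct elements x_j ∈ A_{i_j} such that {x_1, …, x_n} is independent in both M and N. -/
open Set Matroid
namespace KZ



variable {α : Type*} {M : Matroid α}

/-- An independent set inside the closure of an independent set is at most as large. -/
lemma encard_le_of_subset_closure {I S : Set α} (hI : M.Indep I) (hS : M.Indep S)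
    (h : I ⊆ M.closure S) : I.encard ≤ S.encard := by
  by_contra h'
  obtain ⟨e, he, hins⟩ := hS.augment hI (lt_of_not_ge h')
  have heS : e ∉ S := he.2
  have : e ∈ M.E \ M.closure S := (hS.insert_indep_iff_of_notMem heS).mp hins
  exact this.2 (h he.1)

/-- existence of a minimal spanning subset with "fundamental circuit" property -/
lemma exists_min_span (R : Finset α) (hR : M.Indep (R : Set α)) {x : α}
    (hx : x ∈ M.closure (R : Set α)) :
    ∃ S : Finset α, S ⊆ R ∧ x ∈ M.closure (S : Set α) ∧
      ∀ r ∈ S, x ∉ M.closure ((R : Set α) \ {r}) := by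
  classical
  have hne : (R.powerset.filter (fun S : Finset α => x ∈ M.closure (S : Set α))).Nonempty :=
    ⟨R, by simp [hx]⟩
  obtain ⟨S, hSmem, hSmin⟩ := Finset.exists_min_image _ Finset.card hne
  simp only [Finset.mem_filter, Finset.mem_powerset] at hSmem
  refine ⟨S, hSmem.1, hSmem.2, fun r hr hmem => ?_⟩
  -- minimality : x ∉ closure (S.erase r)
  have hmin : x ∉ M.closure ((S.erase r : Finset α) : Set α) := by
    intro hxe
    have : S.card ≤ (S.erase r).card := by
      refine hSmin _ ?_
      simp only [Finset.mem_filter, Finset.mem_powerset]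
      exact ⟨(S.erase_subset r).trans hSmem.1, hxe⟩
    have := Finset.card_erase_lt_of_mem hr
    omega
  have hcoe : ((S.erase r : Finset α) : Set α) = (S : Set α) \ {r} := by
    simp [Finset.coe_erase]
  rw [hcoe] at hmin
  -- closure exchange
  have hxin : x ∈ M.closure (insert r ((S : Set α) \ {r})) := by
    rw [Set.insert_diff_singleton]
    have h1 : insert r (S : Set α) = (S : Set α) := Set.insert_eq_self.mpr (by exact_mod_cast hr)
    rw [h1]; exact hSmem.2
  have hex := Matroid.closure_exchange (X := (S : Set α) \ {r}) (e := x) (f := r) ⟨hxin, hmin⟩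
  -- now r ∈ closure ((S\{r}) + x) ⊆ closure (R\{r}) since x ∈ closure (R\{r})
  have hsub : insert x ((S : Set α) \ {r}) ⊆ M.closure ((R : Set α) \ {r}) := by
    refine Set.insert_subset hmem ?_
    refine (Set.diff_subset_diff_left ?_).trans (M.subset_closure _ ?_)
    · exact_mod_cast hSmem.1
    · exact diff_subset.trans hR.subset_ground
  have : r ∈ M.closure ((R : Set α) \ {r}) :=
    (M.closure_subset_closure_of_subset_closure hsub) hex.1
  exact hR.notMem_closure_diff_of_mem (by exact_mod_cast hSmem.1 hr) this

/-- if `x ∈ closure R` and `x` is in the closure of `R` minus each element of `D` separately,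
then `x ∈ closure (R \ D)`. -/
lemma mem_closure_diff_of_forall (R : Finset α) (hR : M.Indep (R : Set α)) {x : α}
    (hx : x ∈ M.closure (R : Set α)) (D : Set α)
    (hD : ∀ r ∈ D, x ∈ M.closure ((R : Set α) \ {r})) :
    x ∈ M.closure ((R : Set α) \ D) := by
  obtain ⟨S, hSR, hxS, hSmin⟩ := exists_min_span R hR hx
  have hSD : (S : Set α) ⊆ (R : Set α) \ D := by
    intro r hr
    refine ⟨by exact_mod_cast hSR (by exact_mod_cast hr), fun hrD => ?_⟩
    exact hSmin r (by exact_mod_cast hr) (hD r hrD)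
  exact M.closure_subset_closure hSD hxS

/-- from `x ∈ closure R`, `x ∉ closure (R \ Sel)`: get an arc into Sel -/
lemma exists_arc_into (R : Finset α) (hR : M.Indep (R : Set α)) {x : α} (Sel : Set α)
    (hx : x ∈ M.closure (R : Set α)) (hx2 : x ∉ M.closure ((R : Set α) \ Sel)) :
    ∃ r ∈ Sel, r ∈ (R : Set α) ∧ x ∉ M.closure ((R : Set α) \ {r}) := by
  obtain ⟨S, hSR, hxS, hSmin⟩ := exists_min_span R hR hx
  by_cases h : ∃ r ∈ (S : Set α), r ∈ Sel
  · obtain ⟨r, hrS, hrSel⟩ := h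
    exact ⟨r, hrSel, by exact_mod_cast hSR (by exact_mod_cast hrS), hSmin r (by exact_mod_cast hrS)⟩
  · push_neg at h
    have hsub : (S : Set α) ⊆ ((R : Set α) \ Sel) := by
      intro y hy
      exact ⟨by exact_mod_cast hSR (by exact_mod_cast hy), h y hy⟩
    exact absurd (M.closure_subset_closure hsub hxS) hx2

/-- from `x ∈ closure R`, `x ∉ closure Sel`: get an arc avoiding Sel -/
lemma exists_arc_avoiding (R : Finset α) (hR : M.Indep (R : Set α)) {x : α} (Sel : Set α)
    (hx : x ∈ M.closure (R : Set α)) (hx2 : x ∉ M.closure Sel) (hSelR : Sel ⊆ (R : Set α)) :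
    ∃ r ∈ (R : Set α), r ∉ Sel ∧ x ∉ M.closure ((R : Set α) \ {r}) := by
  obtain ⟨S, hSR, hxS, hSmin⟩ := exists_min_span R hR hx
  by_cases h : ∃ r ∈ (S : Set α), r ∉ Sel
  · obtain ⟨r, hrS, hrSel⟩ := h
    exact ⟨r, by exact_mod_cast hSR (by exact_mod_cast hrS), hrSel, hSmin r (by exact_mod_cast hrS)⟩
  · push_neg at h
    exact absurd (M.closure_subset_closure (fun y hy => h y hy) hxS) hx2

variable {α : Type*} {M : Matroid α}

/-- single swap -/
lemma swap_indep {R : Set α} (hR : M.Indep R) {b r : α} (hr : r ∈ R)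
    (hb1 : b ∈ M.closure R) (hb2 : b ∉ M.closure (R \ {r})) :
    M.Indep (insert b (R \ {r})) ∧ M.closure (insert b (R \ {r})) ⊆ M.closure R := by
  have hdiff : M.Indep (R \ {r}) := hR.subset diff_subset
  have hbE : b ∈ M.E := M.closure_subset_ground R hb1
  have hbnotmem : b ∉ R \ {r} := fun hmem => hb2 (M.subset_closure _ hdiff.subset_ground hmem)
  have hind : M.Indep (insert b (R \ {r})) :=
    (hdiff.insert_indep_iff_of_notMem hbnotmem).mpr ⟨hbE, hb2⟩
  refine ⟨hind, ?_⟩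
  have hsub : insert b (R \ {r}) ⊆ M.closure R :=
    insert_subset hb1 ((diff_subset).trans (M.subset_closure R hR.subset_ground))
  exact M.closure_subset_closure_of_subset_closure hsub

/-- A sequence of swaps, each valid w.r.t. the current set. -/
def TriW (M : Matroid α) : Set α → List (α × α) → Prop
  | _, [] => True
  | R, (b, r) :: L => r ∈ R ∧ b ∈ M.closure R ∧ b ∉ M.closure (R \ {r}) ∧
      TriW M (insert b (R \ {r})) L

def applyL : Set α → List (α × α) → Set α
  | R, [] => R
  | R, (b, r) :: L => applyL (insert b (R \ {r})) L

lemma triW_indep (M : Matroid α) : ∀ (L : List (α × α)) (R : Set α), M.Indep R → TriW M R L →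
    M.Indep (applyL R L) ∧ M.closure (applyL R L) ⊆ M.closure R
  | [], R, hR, _ => ⟨hR, subset_rfl⟩
  | (b, r) :: L, R, hR, h => by
    obtain ⟨hr, hb1, hb2, htail⟩ := h
    have hswap := swap_indep hR hr hb1 hb2
    obtain ⟨h1, h2⟩ := triW_indep M L _ hswap.1 htail
    exact ⟨h1, h2.trans hswap.2⟩

/-- Triangular system of exchanges, stated w.r.t. the ORIGINAL independent set `R`.
`D` accumulates removed elements, `B` accumulates added elements. -/
def TriS (M : Matroid α) (R : Set α) : Set α → Set α → List (α × α) → Prop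
  | _, _, [] => True
  | D, B, (b, r) :: L => r ∈ R ∧ r ∉ D ∧ b ∉ R ∧ b ∉ B ∧ b ∈ M.closure (R \ D) ∧
      b ∉ M.closure (R \ insert r D) ∧ TriS M R (insert r D) (insert b B) L

lemma triS_shift (M : Matroid α) {R : Set α} (hR : M.Indep R) {b r : α}
    (hr : r ∈ R) (hb1 : b ∈ M.closure R) (hb2 : b ∉ M.closure (R \ {r})) (hbR : b ∉ R) :
    ∀ (L : List (α × α)) (D B : Set α), D ⊆ R → r ∈ D → b ∈ B →
      TriS M R D B L → TriS M (insert b (R \ {r})) (D \ {r}) (B \ {b}) L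
  | [], D, B, _, _, _, _ => trivial
  | (b', r') :: L, D, B, hDR, hrD, hbB, h => by
    obtain ⟨hr'R, hr'D, hb'R, hb'B, hb'1, hb'2, htail⟩ := h
    have hr'ne : r' ≠ r := fun hrr => hr'D (hrr ▸ hrD)
    have hb'ne : b' ≠ b := fun hbb => hb'B (hbb ▸ hbB)
    refine ⟨?_, ?_, ?_, ?_, ?_, ?_, ?_⟩
    · exact mem_insert_of_mem _ ⟨hr'R, hr'ne⟩
    · exact fun hmem => hr'D hmem.1
    · rintro (rfl | hmem)
      · exact hb'ne rfl
      · exact hb'R hmem.1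
    · exact fun hmem => hb'B hmem.1
    · refine M.closure_subset_closure ?_ hb'1
      rintro x ⟨hxR, hxD⟩
      exact ⟨mem_insert_of_mem _ ⟨hxR, fun hxr => hxD (hxr ▸ hrD)⟩, fun hmem => hxD hmem.1⟩
    · -- the key exchange step
      have hset : (insert b (R \ {r})) \ insert r' (D \ {r}) = insert b (R \ insert r' D) := by
        ext x
        simp only [mem_diff, mem_insert_iff, mem_singleton_iff]
        constructor
        · rintro ⟨(rfl | ⟨hxR, hxr⟩), hx2⟩
          · exact Or.inl rfl
          · refine Or.inr ⟨hxR, ?_⟩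
            rintro (rfl | hxD)
            · exact hx2 (Or.inl rfl)
            · exact hx2 (Or.inr ⟨hxD, hxr⟩)
        · rintro (rfl | ⟨hxR, hx2⟩)
          · refine ⟨Or.inl rfl, ?_⟩
            rintro (rfl | hmem)
            · exact hbR hr'R
            · exact hbR (hDR hmem.1)
          · have hxr : x ≠ r := fun hxr => hx2 (Or.inr (hxr ▸ hrD))
            refine ⟨Or.inr ⟨hxR, hxr⟩, ?_⟩
            rintro (rfl | hmem)
            · exact hx2 (Or.inl rfl)
            · exact hx2 (Or.inr hmem.1)
      rw [hset]
      intro hcon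
      have hex := Matroid.closure_exchange (X := R \ insert r' D) (e := b') (f := b) ⟨hcon, hb'2⟩
      have hXsub : R \ insert r' D ⊆ R \ {r} := by
        rintro x ⟨hxR, hx2⟩
        exact ⟨hxR, fun hxr => hx2 (mem_insert_of_mem _ ((mem_singleton_iff.mp hxr) ▸ hrD))⟩
      have hb'mem : b' ∈ M.closure (R \ {r}) := by
        refine M.closure_subset_closure ?_ hb'1
        rintro x ⟨hxR, hxD⟩
        exact ⟨hxR, fun hxr => hxD ((mem_singleton_iff.mp hxr) ▸ hrD)⟩
      have hsub2 : insert b' (R \ insert r' D) ⊆ M.closure (R \ {r}) :=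
        insert_subset hb'mem (hXsub.trans (M.subset_closure _ ((diff_subset).trans hR.subset_ground)))
      exact hb2 (M.closure_subset_closure_of_subset_closure hsub2 hex.1)
    · have := triS_shift M hR hr hb1 hb2 hbR L (insert r' D) (insert b' B)
        (insert_subset hr'R hDR) (mem_insert_of_mem _ hrD) (mem_insert_of_mem _ hbB) htail
      rwa [insert_diff_of_notMem _ (by simp [hr'ne]), insert_diff_of_notMem _ (by simp [hb'ne])] at this

lemma triS_triW (M : Matroid α) : ∀ (L : List (α × α)) (R : Set α), M.Indep R →
    TriS M R ∅ ∅ L → TriW M R L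
  | [], _, _, _ => trivial
  | (b, r) :: L, R, hR, h => by
    obtain ⟨hrR, -, hbR, -, hb1, hb2, htail⟩ := h
    rw [diff_empty] at hb1
    have hb2' : b ∉ M.closure (R \ {r}) := by rwa [show insert r (∅ : Set α) = {r} by simp] at hb2
    refine ⟨hrR, hb1, hb2', ?_⟩
    have hshift := triS_shift M hR hrR hb1 hb2' hbR L {r} {b} (by simpa using hrR) rfl rfl
      (by rwa [show insert r (∅ : Set α) = {r} by simp, show insert b (∅ : Set α) = {b} by simp] at htail)
    rw [sdiff_self, sdiff_self] at hshift
    exact triS_triW M L _ (swap_indep hR hrR hb1 hb2').1 (by simpa using hshift)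

def rset (L : List (α × α)) : Set α := {x | ∃ p ∈ L, p.2 = x}
def bset (L : List (α × α)) : Set α := {x | ∃ p ∈ L, p.1 = x}

@[simp] lemma rset_nil : rset ([] : List (α × α)) = ∅ := by simp [rset]
@[simp] lemma bset_nil : bset ([] : List (α × α)) = ∅ := by simp [bset]
lemma rset_cons (b r : α) (L : List (α × α)) : rset ((b, r) :: L) = insert r (rset L) := by
  ext x; simp [rset]; tauto
lemma bset_cons (b r : α) (L : List (α × α)) : bset ((b, r) :: L) = insert b (bset L) := by
  ext x; simp [bset]; tauto

lemma triS_facts (M : Matroid α) : ∀ (L : List (α × α)) (R D B : Set α), TriS M R D B L →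
    (∀ x ∈ rset L, x ∈ R ∧ x ∉ D) ∧ (∀ x ∈ bset L, x ∉ R ∧ x ∉ B)
  | [], _, _, _, _ => by simp
  | (b, r) :: L, R, D, B, h => by
    obtain ⟨hrR, hrD, hbR, hbB, -, -, htail⟩ := h
    obtain ⟨ih1, ih2⟩ := triS_facts M L R _ _ htail
    constructor
    · intro x hx
      rw [rset_cons] at hx
      rcases hx with rfl | hx
      · exact ⟨hrR, hrD⟩
      · obtain ⟨h1, h2⟩ := ih1 x hx
        exact ⟨h1, fun hmem => h2 (mem_insert_of_mem _ hmem)⟩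
    · intro x hx
      rw [bset_cons] at hx
      rcases hx with rfl | hx
      · exact ⟨hbR, hbB⟩
      · obtain ⟨h1, h2⟩ := ih2 x hx
        exact ⟨h1, fun hmem => h2 (mem_insert_of_mem _ hmem)⟩

lemma triS_applyL (M : Matroid α) : ∀ (L : List (α × α)) (R : Set α), M.Indep R →
    TriS M R ∅ ∅ L → applyL R L = (R \ rset L) ∪ bset L
  | [], R, _, _ => by simp [applyL]
  | (b, r) :: L, R, hR, h => by
    obtain ⟨hrR, -, hbR, -, hb1, hb2, htail⟩ := h
    rw [diff_empty] at hb1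
    have hb2' : b ∉ M.closure (R \ {r}) := by rwa [show insert r (∅ : Set α) = {r} by simp] at hb2
    have htail' : TriS M R {r} {b} L := by
      rwa [show insert r (∅ : Set α) = {r} by simp, show insert b (∅ : Set α) = {b} by simp] at htail
    have hshift := triS_shift M hR hrR hb1 hb2' hbR L {r} {b} (by simpa using hrR) rfl rfl htail'
    rw [sdiff_self, sdiff_self] at hshift
    have hR' : M.Indep (insert b (R \ {r})) := (swap_indep hR hrR hb1 hb2').1
    have ih := triS_applyL M L (insert b (R \ {r})) hR' (by simpa using hshift)
    obtain ⟨hfr, hfb⟩ := triS_facts M L R _ _ htail'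
    show applyL (insert b (R \ {r})) L = _
    rw [ih, rset_cons, bset_cons]
    ext x
    simp only [mem_union, mem_diff, mem_insert_iff, mem_singleton_iff]
    constructor
    · rintro (⟨(rfl | ⟨hxR, hxr⟩), hx2⟩ | hx)
      · exact Or.inr (Or.inl rfl)
      · exact Or.inl ⟨hxR, fun h => h.elim (fun h => hxr h) hx2⟩
      · exact Or.inr (Or.inr hx)
    · rintro (⟨hxR, hx2⟩ | (rfl | hx))
      · exact Or.inl ⟨Or.inr ⟨hxR, fun h => hx2 (Or.inl h)⟩, fun h => hx2 (Or.inr h)⟩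
      · exact Or.inl ⟨Or.inl rfl, fun h => hbR (hfr x h).1⟩
      · exact Or.inr hx

lemma exchange_final (M : Matroid α) (R : Set α) (L : List (α × α)) (hR : M.Indep R)
    (h : TriS M R ∅ ∅ L) :
    M.Indep ((R \ rset L) ∪ bset L) ∧ M.closure ((R \ rset L) ∪ bset L) ⊆ M.closure R := by
  have h1 := triS_triW M L R hR h
  have h2 := triW_indep M L R hR h1
  rwa [triS_applyL M L R hR h] at h2

variable {α : Type*} {M N : Matroid α}

/-- `r` is in the "fundamental circuit" of `x` over `R` -/
def arc (M : Matroid α) (R : Set α) (x r : α) : Prop :=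
  r ∈ R ∧ x ∈ M.closure R ∧ x ∉ M.closure (R \ {r})

/-- alternating chain: `x` then pairs `(r, b)`: arc N x r, arc M b r, continue from b. -/
def Chain (M N : Matroid α) (R : Set α) : α → List (α × α) → α → Prop
  | x, [], y => x = y
  | x, (r, b) :: L, y => arc N R x r ∧ arc M R b r ∧ Chain M N R b L y

def endpt : α → List (α × α) → α
  | x, [] => x
  | _, (_, b) :: L => endpt b L

def xelts (x : α) (L : List (α × α)) : List α := x :: L.map Prod.snd

def npairs : α → List (α × α) → List (α × α)
  | _, [] => []
  | z, (r, b) :: L => (z, r) :: npairs b L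

@[simp] lemma endpt_nil (x : α) : endpt x [] = x := rfl
@[simp] lemma endpt_cons (x r b : α) (L : List (α × α)) :
    endpt x ((r, b) :: L) = endpt b L := rfl

lemma endpt_append (x : α) (L₁ L₂ : List (α × α)) :
    endpt x (L₁ ++ L₂) = endpt (endpt x L₁) L₂ := by
  induction L₁ generalizing x with
  | nil => rfl
  | cons p L ih => obtain ⟨r, b⟩ := p; simp [endpt, ih]

lemma npairs_append (x : α) (L₁ L₂ : List (α × α)) :
    npairs x (L₁ ++ L₂) = npairs x L₁ ++ npairs (endpt x L₁) L₂ := by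
  induction L₁ generalizing x with
  | nil => rfl
  | cons p L ih => obtain ⟨r, b⟩ := p; simp [npairs, endpt, ih]

lemma endpt_mem_xelts (x : α) (L : List (α × α)) : endpt x L ∈ xelts x L := by
  induction L generalizing x with
  | nil => simp [endpt, xelts]
  | cons p L ih =>
    obtain ⟨r, b⟩ := p
    have := ih (x := b)
    simp only [xelts, List.mem_cons] at this ⊢
    simp only [endpt]
    tauto

lemma chain_endpt {R : Set α} {x y : α} {L : List (α × α)} (h : Chain M N R x L y) :
    endpt x L = y := by
  induction L generalizing x with
  | nil => exact h
  | cons p L ih => obtain ⟨r, b⟩ := p; exact ih h.2.2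

lemma chain_append {R : Set α} {x z y : α} {L₁ L₂ : List (α × α)}
    (h₁ : Chain M N R x L₁ z) (h₂ : Chain M N R z L₂ y) : Chain M N R x (L₁ ++ L₂) y := by
  induction L₁ generalizing x with
  | nil => cases h₁; exact h₂
  | cons p L ih => obtain ⟨r, b⟩ := p; exact ⟨h₁.1, h₁.2.1, ih h₁.2.2⟩

lemma chain_comp {R : Set α} {x z y b r : α} {L₁ L₂ : List (α × α)}
    (h₁ : Chain M N R x L₁ z) (ha : arc N R z r) (hb : arc M R b r)
    (h₂ : Chain M N R b L₂ y) : Chain M N R x (L₁ ++ (r, b) :: L₂) y :=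
  chain_append h₁ ⟨ha, hb, h₂⟩

lemma chain_decomp {R : Set α} {x y b r : α} {L₁ L₂ : List (α × α)}
    (h : Chain M N R x (L₁ ++ (r, b) :: L₂) y) :
    Chain M N R x L₁ (endpt x L₁) ∧ arc N R (endpt x L₁) r ∧ arc M R b r ∧ Chain M N R b L₂ y := by
  induction L₁ generalizing x with
  | nil => exact ⟨rfl, h.1, h.2.1, h.2.2⟩
  | cons p L ih =>
    obtain ⟨r', b'⟩ := p
    obtain ⟨h1, h2, h3⟩ := h
    obtain ⟨c1, c2, c3, c4⟩ := ih h3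
    exact ⟨⟨h1, h2, c1⟩, c2, c3, c4⟩

lemma xelts_append_sub {x : α} {L₁ L₂ : List (α × α)} :
    ∀ e ∈ xelts (endpt x L₁) L₂, e ∈ xelts x (L₁ ++ L₂) := by
  intro e he
  simp only [xelts, List.mem_cons, List.map_append, List.mem_append] at he ⊢
  rcases he with rfl | he
  · have := endpt_mem_xelts x L₁
    simp only [xelts, List.mem_cons] at this
    tauto
  · tauto

lemma xelts_prefix_sub {x : α} {L₁ L₂ : List (α × α)} :
    ∀ e ∈ xelts x L₁, e ∈ xelts x (L₁ ++ L₂) := by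
  intro e he
  simp only [xelts, List.mem_cons, List.map_append, List.mem_append] at he ⊢
  tauto

lemma bset_npairs_sub (z : α) (L : List (α × α)) :
    ∀ e, e ∈ bset (npairs z L) → e ∈ xelts z L := by
  induction L generalizing z with
  | nil => simp [npairs, bset]
  | cons p L ih =>
    obtain ⟨r, b⟩ := p
    intro e he
    simp only [npairs, bset_cons] at he  -- (z, r) :: npairs b L : bset = insert z _
    rcases he with rfl | he
    · simp [xelts]
    · have := ih b e he
      simp only [xelts, List.mem_cons, List.map_cons] at this ⊢
      tauto

lemma rset_npairs (z : α) (L : List (α × α)) :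
    rset (npairs z L) = bset L := by
  induction L generalizing z with
  | nil => simp [npairs]
  | cons p L ih =>
    obtain ⟨r, b⟩ := p
    rw [npairs, rset_cons, bset_cons, ih]

lemma rset_map_swap (L : List (α × α)) : rset (L.map Prod.swap) = bset L := by
  induction L with
  | nil => simp
  | cons p L ih => obtain ⟨r, b⟩ := p; simp [rset_cons, bset_cons, ih]

lemma bset_map_swap (L : List (α × α)) : bset (L.map Prod.swap) = rset L := by
  induction L with
  | nil => simp
  | cons p L ih => obtain ⟨r, b⟩ := p; simp [rset_cons, bset_cons, ih]

lemma rset_reverse (L : List (α × α)) : rset L.reverse = rset L := by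
  ext a; simp [rset]

lemma bset_reverse (L : List (α × α)) : bset L.reverse = bset L := by
  ext a; simp [bset]

lemma xelts_set_eq (z : α) (L : List (α × α)) :
    {a | a ∈ xelts z L} = bset (npairs z L) ∪ {endpt z L} := by
  induction L generalizing z with
  | nil => simp [xelts, npairs, endpt]
  | cons p L ih =>
    obtain ⟨r, b⟩ := p
    have := ih b
    ext a
    simp only [xelts, List.mem_cons, List.map_cons, npairs, bset_cons, endpt_cons, mem_union,
      mem_insert_iff, mem_setOf_eq, mem_singleton_iff] at this ⊢
    have h2 := Set.ext_iff.mp this a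
    simp only [mem_union, mem_setOf_eq, mem_singleton_iff, List.mem_cons] at h2
    tauto

lemma rset_append (L₁ L₂ : List (α × α)) : rset (L₁ ++ L₂) = rset L₁ ∪ rset L₂ := by
  ext a
  constructor
  · rintro ⟨p, hp, rfl⟩
    rcases List.mem_append.mp hp with hp | hp
    · exact Or.inl ⟨p, hp, rfl⟩
    · exact Or.inr ⟨p, hp, rfl⟩
  · rintro (⟨p, hp, rfl⟩ | ⟨p, hp, rfl⟩)
    · exact ⟨p, List.mem_append.mpr (Or.inl hp), rfl⟩
    · exact ⟨p, List.mem_append.mpr (Or.inr hp), rfl⟩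

lemma bset_append (L₁ L₂ : List (α × α)) : bset (L₁ ++ L₂) = bset L₁ ∪ bset L₂ := by
  ext a
  constructor
  · rintro ⟨p, hp, rfl⟩
    rcases List.mem_append.mp hp with hp | hp
    · exact Or.inl ⟨p, hp, rfl⟩
    · exact Or.inr ⟨p, hp, rfl⟩
  · rintro (⟨p, hp, rfl⟩ | ⟨p, hp, rfl⟩)
    · exact ⟨p, List.mem_append.mpr (Or.inl hp), rfl⟩
    · exact ⟨p, List.mem_append.mpr (Or.inr hp), rfl⟩

lemma xelts_set_insert (x : α) (L : List (α × α)) :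
    {a | a ∈ xelts x L} = insert x (rset L) := by
  ext a
  constructor
  · intro ha
    rcases List.mem_cons.mp ha with rfl | ha
    · exact Or.inl rfl
    · obtain ⟨p, hp, hp2⟩ := List.mem_map.mp ha
      exact Or.inr ⟨p, hp, hp2⟩
  · rintro (rfl | ⟨p, hp, rfl⟩)
    · exact List.mem_cons_self
    · exact List.mem_cons_of_mem _ (List.mem_map.mpr ⟨p, hp, rfl⟩)

lemma chain_fst_mem {R : Set α} {x y : α} {L : List (α × α)} (h : Chain M N R x L y) :
    ∀ p ∈ L, p.1 ∈ R := by
  induction L generalizing x with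
  | nil => simp
  | cons q L ih =>
    obtain ⟨r, b⟩ := q
    intro p hp
    rcases List.mem_cons.mp hp with rfl | hp
    · exact h.1.1
    · exact ih h.2.2 p hp

lemma mem_bset_iff {a : α} {L : List (α × α)} : a ∈ bset L ↔ ∃ p ∈ L, p.1 = a := Iff.rfl
lemma mem_rset_iff {a : α} {L : List (α × α)} : a ∈ rset L ↔ ∃ p ∈ L, p.2 = a := Iff.rfl

variable {α : Type*} {M N : Matroid α}

/-- A minimal augmenting chain structure. -/
structure MinChain (M N : Matroid α) (R : Finset α) (TT : Set α) where
  x : α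
  L : List (α × α)
  y : α
  chain : Chain M N (R : Set α) x L y
  hx : x ∉ M.closure (R : Set α)
  hy : y ∉ N.closure (R : Set α)
  htt : ∀ e ∈ xelts x L, e ∈ TT
  hmin : ∀ (x' : α) (L' : List (α × α)) (y' : α), Chain M N (R : Set α) x' L' y' →
    x' ∉ M.closure (R : Set α) → y' ∉ N.closure (R : Set α) →
    (∀ e ∈ xelts x' L', e ∈ TT) → L.length ≤ L'.length

namespace MinChain

variable {R : Finset α} {TT : Set α} (C : MinChain M N R TT)

lemma not_shorter {x' y' : α} {L' : List (α × α)} (hch : Chain M N (R : Set α) x' L' y')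
    (hx' : x' ∉ M.closure (R : Set α)) (hy' : y' ∉ N.closure (R : Set α))
    (htt' : ∀ e ∈ xelts x' L', e ∈ TT) (hlen : L'.length < C.L.length) : False :=
  absurd (C.hmin x' L' y' hch hx' hy' htt') (by omega)

lemma htt_sub {L' : List (α × α)} (hsub : ∀ p ∈ L', ∃ q ∈ C.L, q.2 = p.2) :
    ∀ e ∈ xelts C.x L', e ∈ TT := by
  intro e he
  refine C.htt e ?_
  simp only [xelts, List.mem_cons, List.mem_map] at he ⊢
  rcases he with rfl | ⟨p, hp, h2⟩
  · exact Or.inl rfl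
  · obtain ⟨q, hq, hq2⟩ := hsub p hp
    exact Or.inr ⟨q, hq, hq2.trans h2⟩

/-- H1: the added element of a pair differs from all earlier x-elements -/
lemma H1 {L₁ L₂ : List (α × α)} {r b : α} (h : C.L = L₁ ++ (r, b) :: L₂) :
    b ∉ {a | a ∈ xelts C.x L₁} := by
  have hd := chain_decomp (h ▸ C.chain)
  intro hb
  simp only [mem_setOf_eq, xelts, List.mem_cons, List.mem_map] at hb
  rcases hb with rfl | ⟨p, hpL, hp2⟩
  · exact C.hx hd.2.2.1.2.1
  · obtain ⟨r₀, b₀⟩ := p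
    obtain ⟨P, Q, hPQ⟩ := List.append_of_mem hpL
    have hb0 : b₀ = b := hp2
    have hL' : C.L = P ++ (r₀, b₀) :: (Q ++ (r, b) :: L₂) := by rw [h, hPQ]; simp
    have hd2 := chain_decomp (hL' ▸ C.chain)
    have htail : Chain M N (R : Set α) b₀ L₂ C.y := by rw [hb0]; exact hd.2.2.2
    refine C.not_shorter (chain_comp hd2.1 hd2.2.1 hd2.2.2.1 htail) C.hx C.hy
      (C.htt_sub fun p hp => by
        rcases List.mem_append.mp hp with hp | hp
        · exact ⟨p, by rw [hL']; simp [hp], rfl⟩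
        · rcases List.mem_cons.mp hp with rfl | hp
          · exact ⟨(r₀, b₀), by rw [hL']; simp, rfl⟩
          · exact ⟨p, by rw [h]; simp [hp], rfl⟩) ?_
    rw [h, hPQ]
    simp only [List.length_append, List.length_cons]
    omega

/-- H2: the endpoint of a prefix differs from all later x-elements -/
lemma H2 {L₁ L₂ : List (α × α)} {r b : α} (h : C.L = L₁ ++ (r, b) :: L₂) :
    endpt C.x L₁ ∉ {a | a ∈ xelts b L₂} := by
  have hd := chain_decomp (h ▸ C.chain)
  intro hb
  simp only [mem_setOf_eq, xelts, List.mem_cons, List.mem_map] at hb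
  rcases hb with heq | ⟨p, hpL, hp2⟩
  · have h1 : Chain M N (R : Set α) C.x L₁ b := heq ▸ hd.1
    refine C.not_shorter (chain_append h1 hd.2.2.2) C.hx C.hy
      (C.htt_sub fun p hp => ⟨p, by rw [h]; rcases List.mem_append.mp hp with hp | hp <;> simp [hp], rfl⟩) ?_
    rw [h]
    simp only [List.length_append, List.length_cons]
    omega
  · obtain ⟨r₂, c⟩ := p
    obtain ⟨P, Q, hPQ⟩ := List.append_of_mem hpL
    have hc : c = endpt C.x L₁ := hp2
    have hL₂ : Chain M N (R : Set α) b L₂ C.y := hd.2.2.2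
    rw [hPQ] at hL₂
    have hd2 := chain_decomp hL₂
    have htail : Chain M N (R : Set α) (endpt C.x L₁) Q C.y := by rw [← hc]; exact hd2.2.2.2
    refine C.not_shorter (chain_append hd.1 htail) C.hx C.hy
      (C.htt_sub fun p hp => by
        rcases List.mem_append.mp hp with hp | hp
        · exact ⟨p, by rw [h]; simp [hp], rfl⟩
        · exact ⟨p, by rw [h, hPQ]; simp [hp], rfl⟩) ?_
    rw [h, hPQ]
    simp only [List.length_append, List.length_cons]
    omega

/-- H3a: removed element of a pair differs from removed elements of earlier pairs -/
lemma H3a {L₁ L₂ : List (α × α)} {r b : α} (h : C.L = L₁ ++ (r, b) :: L₂) :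
    r ∉ bset L₁ := by
  have hd := chain_decomp (h ▸ C.chain)
  rintro ⟨p, hpL, hp1⟩
  obtain ⟨r₀, b₀⟩ := p
  have hr0 : r₀ = r := hp1
  obtain ⟨P, Q, hPQ⟩ := List.append_of_mem hpL
  have hL' : C.L = P ++ (r₀, b₀) :: (Q ++ (r, b) :: L₂) := by rw [h, hPQ]; simp
  have hd2 := chain_decomp (hL' ▸ C.chain)
  have harcN : arc N (R : Set α) (endpt C.x P) r := by rw [← hr0]; exact hd2.2.1
  refine C.not_shorter (chain_comp hd2.1 harcN hd.2.2.1 hd.2.2.2) C.hx C.hy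
    (C.htt_sub fun p hp => by
      rcases List.mem_append.mp hp with hp | hp
      · exact ⟨p, by rw [hL']; simp [hp], rfl⟩
      · rcases List.mem_cons.mp hp with rfl | hp
        · exact ⟨(r, b), by rw [h]; simp, rfl⟩
        · exact ⟨p, by rw [h]; simp [hp], rfl⟩) ?_
  rw [h, hPQ]
  simp only [List.length_append, List.length_cons]
  omega

/-- H3b: removed element of a pair differs from removed elements of later pairs -/
lemma H3b {L₁ L₂ : List (α × α)} {r b : α} (h : C.L = L₁ ++ (r, b) :: L₂) :
    r ∉ bset L₂ := by
  have hd := chain_decomp (h ▸ C.chain)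
  rintro ⟨p, hpL, hp1⟩
  obtain ⟨r₂, b₂⟩ := p
  have hr2 : r₂ = r := hp1
  obtain ⟨P, Q, hPQ⟩ := List.append_of_mem hpL
  have hL₂ : Chain M N (R : Set α) b L₂ C.y := hd.2.2.2
  rw [hPQ] at hL₂
  have hd2 := chain_decomp hL₂
  have harcM : arc M (R : Set α) b₂ r := by rw [← hr2]; exact hd2.2.2.1
  refine C.not_shorter (chain_comp hd.1 hd.2.1 harcM hd2.2.2.2) C.hx C.hy
    (C.htt_sub fun p hp => by
      rcases List.mem_append.mp hp with hp | hp
      · exact ⟨p, by rw [h]; simp [hp], rfl⟩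
      · rcases List.mem_cons.mp hp with rfl | hp
        · exact ⟨(r₂, b₂), by rw [h, hPQ]; simp, rfl⟩
        · exact ⟨p, by rw [h, hPQ]; simp [hp], rfl⟩) ?_
  rw [h, hPQ]
  simp only [List.length_append, List.length_cons]
  omega

/-- H4: no N-arc from the endpoint of a prefix to a removed element strictly later -/
lemma H4 {L₁ L₂ L₃ : List (α × α)} {r b r₂ b₂ : α}
    (h : C.L = L₁ ++ (r, b) :: (L₂ ++ (r₂, b₂) :: L₃)) :
    ¬ arc N (R : Set α) (endpt C.x L₁) r₂ := by
  have hd := chain_decomp (h ▸ C.chain)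
  have hd2 := chain_decomp hd.2.2.2
  intro harc
  refine C.not_shorter (chain_comp hd.1 harc hd2.2.2.1 hd2.2.2.2) C.hx C.hy
    (C.htt_sub fun p hp => by
      rcases List.mem_append.mp hp with hp | hp
      · exact ⟨p, by rw [h]; simp [hp], rfl⟩
      · rcases List.mem_cons.mp hp with rfl | hp
        · exact ⟨(r₂, b₂), by rw [h]; simp, rfl⟩
        · exact ⟨p, by rw [h]; simp [hp], rfl⟩) ?_
  rw [h]
  simp only [List.length_append, List.length_cons]
  omega

/-- H5: no M-arc from a strictly later added element to an earlier removed element -/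
lemma H5 {L₁ L₂ L₃ : List (α × α)} {r b r₂ b₂ : α}
    (h : C.L = L₁ ++ (r, b) :: (L₂ ++ (r₂, b₂) :: L₃)) :
    ¬ arc M (R : Set α) b₂ r := by
  have hd := chain_decomp (h ▸ C.chain)
  have hd2 := chain_decomp hd.2.2.2
  intro harc
  refine C.not_shorter (chain_comp hd.1 hd.2.1 harc hd2.2.2.2) C.hx C.hy
    (C.htt_sub fun p hp => by
      rcases List.mem_append.mp hp with hp | hp
      · exact ⟨p, by rw [h]; simp [hp], rfl⟩
      · rcases List.mem_cons.mp hp with rfl | hp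
        · exact ⟨(r₂, b₂), by rw [h]; simp, rfl⟩
        · exact ⟨p, by rw [h]; simp [hp], rfl⟩) ?_
  rw [h]
  simp only [List.length_append, List.length_cons]
  omega

end MinChain
variable {α : Type*} {M N : Matroid α}

namespace MinChain

variable {R : Finset α} {TT : Set α} (C : MinChain M N R TT)

lemma mem_xelts_of_split {L₁ L₂ : List (α × α)} {r b : α} (h : C.L = L₁ ++ (r, b) :: L₂) :
    b ∈ xelts C.x C.L := by
  rw [h]
  simp only [xelts, List.mem_cons, List.mem_map, List.mem_append]
  exact Or.inr ⟨(r, b), Or.inr (Or.inl rfl), rfl⟩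

lemma endpt_mem_xelts_full (L₁ L₂ : List (α × α)) (h : C.L = L₁ ++ L₂) :
    endpt C.x L₁ ∈ xelts C.x C.L := by
  rw [h]
  exact xelts_prefix_sub _ (endpt_mem_xelts C.x L₁)

/-- the M-side triangular system -/
lemma tris_M (hMR : M.Indep (R : Set α)) (hTTR : ∀ e ∈ TT, e ∉ (R : Set α))
    (L₂ : List (α × α)) : ∀ L₁, C.L = L₁ ++ L₂ →
      TriS M (R : Set α) (bset L₁) (rset L₁) (L₂.map Prod.swap) := by
  induction L₂ with
  | nil => intro L₁ h; trivial
  | cons p L₂' ih =>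
    obtain ⟨r, b⟩ := p
    intro L₁ h
    have hd := chain_decomp (h ▸ C.chain)
    have harc : arc M (R : Set α) b r := hd.2.2.1
    show TriS M (R : Set α) (bset L₁) (rset L₁) ((b, r) :: L₂'.map Prod.swap)
    refine ⟨harc.1, C.H3a h, hTTR b (C.htt b (C.mem_xelts_of_split h)), ?_, ?_, ?_, ?_⟩
    · -- b ∉ rset L₁
      rintro ⟨p, hp, hp2⟩
      refine C.H1 h ?_
      rw [xelts_set_insert]
      exact Or.inr ⟨p, hp, hp2⟩
    · -- b ∈ M.closure (R \ bset L₁)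
      refine mem_closure_diff_of_forall R hMR harc.2.1 _ ?_
      rintro r' ⟨p, hp, hp1⟩
      obtain ⟨r₀, b₀⟩ := p
      obtain ⟨P, Q, hPQ⟩ := List.append_of_mem hp
      have hL' : C.L = P ++ (r₀, b₀) :: (Q ++ (r, b) :: L₂') := by rw [h, hPQ]; simp
      have hnarc := C.H5 hL'
      have hd2 := chain_decomp (hL' ▸ C.chain)
      have hr0R : r₀ ∈ (R : Set α) := hd2.2.1.1
      by_contra hcon
      rw [← hp1] at hcon
      exact hnarc ⟨hr0R, harc.2.1, hcon⟩
    · -- b ∉ M.closure (R \ insert r (bset L₁))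
      intro hcon
      refine harc.2.2 (M.closure_subset_closure ?_ hcon)
      exact diff_subset_diff_right (by simp)
    · -- tail
      have := ih (L₁ ++ [(r, b)]) (by rw [h]; simp)
      rwa [bset_append, rset_append, show bset [(r, b)] = {r} by ext a; simp [bset],
        show rset [(r, b)] = {b} by ext a; simp [rset], union_singleton, union_singleton] at this

/-- the N-side triangular system -/
lemma tris_N (hNR : N.Indep (R : Set α)) (hTTR : ∀ e ∈ TT, e ∉ (R : Set α))
    (L₁ : List (α × α)) : ∀ L₂, C.L = L₁ ++ L₂ →
      TriS N (R : Set α) (bset L₂) (bset (npairs (endpt C.x L₁) L₂)) ((npairs C.x L₁).reverse) := by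
  induction L₁ using List.reverseRecOn with
  | nil => intro L₂ h; show TriS N (R : Set α) _ _ ([] : List (α × α)).reverse; exact trivial
  | append_singleton L₁' p ih =>
    obtain ⟨r, b⟩ := p
    intro L₂ h
    have h' : C.L = L₁' ++ ((r, b) :: L₂) := by rw [h]; simp
    have hd := chain_decomp (h' ▸ C.chain)
    have harc : arc N (R : Set α) (endpt C.x L₁') r := hd.2.1
    have hnp : (npairs C.x (L₁' ++ [(r, b)])).reverse
        = (endpt C.x L₁', r) :: (npairs C.x L₁').reverse := by
      rw [npairs_append]
      simp [npairs]
    have hend : endpt C.x (L₁' ++ [(r, b)]) = b := by rw [endpt_append]; rfl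
    rw [hnp, hend]
    refine ⟨harc.1, C.H3b h', ?_, ?_, ?_, ?_, ?_⟩
    · exact hTTR _ (C.htt _ (C.endpt_mem_xelts_full L₁' ((r, b) :: L₂) h'))
    · exact fun hmem => C.H2 h' (bset_npairs_sub b L₂ _ hmem)
    · -- endpt ∈ N.closure (R \ bset L₂)
      refine mem_closure_diff_of_forall R hNR harc.2.1 _ ?_
      rintro r₂ ⟨p, hp, hp1⟩
      obtain ⟨r₂', b₂⟩ := p
      obtain ⟨P, Q, hPQ⟩ := List.append_of_mem hp
      have hL' : C.L = L₁' ++ (r, b) :: (P ++ (r₂', b₂) :: Q) := by rw [h', hPQ]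
      have hnarc := C.H4 hL'
      have hLtail : Chain M N (R : Set α) b (P ++ (r₂', b₂) :: Q) C.y := by
        have := hd.2.2.2
        rwa [hPQ] at this
      have hd2 := chain_decomp hLtail
      have hr2R : r₂' ∈ (R : Set α) := hd2.2.1.1
      by_contra hcon
      rw [← hp1] at hcon
      exact hnarc ⟨hr2R, harc.2.1, hcon⟩
    · intro hcon
      refine harc.2.2 (N.closure_subset_closure ?_ hcon)
      exact diff_subset_diff_right (by simp)
    · have := ih ((r, b) :: L₂) h'
      rwa [bset_cons, show npairs (endpt C.x L₁') ((r, b) :: L₂)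
        = (endpt C.x L₁', r) :: npairs b L₂ from rfl, bset_cons] at this

lemma xelts_nodup_split (L₂ : List (α × α)) : ∀ L₁, C.L = L₁ ++ L₂ →
    (xelts (endpt C.x L₁) L₂).Nodup := by
  induction L₂ with
  | nil => intro L₁ h; simp [xelts]
  | cons p L₂' ih =>
    obtain ⟨r, b⟩ := p
    intro L₁ h
    have h2 := C.H2 h
    have ihh := ih (L₁ ++ [(r, b)]) (by rw [h]; simp)
    have hend : endpt C.x (L₁ ++ [(r, b)]) = b := by rw [endpt_append]; rfl
    rw [hend] at ihh
    show ((endpt C.x L₁) :: xelts b L₂').Nodup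
    exact List.nodup_cons.mpr ⟨fun hmem => h2 hmem, ihh⟩

lemma xelts_nodup : (xelts C.x C.L).Nodup := by
  have := C.xelts_nodup_split C.L [] rfl
  simpa using this

lemma rlist_nodup_split (L₂ : List (α × α)) : ∀ L₁, C.L = L₁ ++ L₂ →
    (L₂.map Prod.fst).Nodup := by
  induction L₂ with
  | nil => intro L₁ h; simp
  | cons p L₂' ih =>
    obtain ⟨r, b⟩ := p
    intro L₁ h
    have h3 := C.H3b h
    have ihh := ih (L₁ ++ [(r, b)]) (by rw [h]; simp)
    refine List.nodup_cons.mpr ⟨fun hmem => ?_, ihh⟩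
    obtain ⟨p, hp, hp1⟩ := List.mem_map.mp hmem
    exact h3 ⟨p, hp, hp1⟩

lemma rlist_nodup : (C.L.map Prod.fst).Nodup := C.rlist_nodup_split C.L [] rfl

/-- the augmented common independent set from a minimal chain -/
lemma augmented (hMR : M.Indep (R : Set α)) (hNR : N.Indep (R : Set α))
    (hTT' : ∀ e ∈ TT, e ∈ M.E ∧ e ∈ N.E ∧ e ∉ (R : Set α)) :
    M.Indep (((R : Set α) \ bset C.L) ∪ {a | a ∈ xelts C.x C.L}) ∧
    N.Indep (((R : Set α) \ bset C.L) ∪ {a | a ∈ xelts C.x C.L}) := by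
  have hTTR : ∀ e ∈ TT, e ∉ (R : Set α) := fun e he => (hTT' e he).2.2
  constructor
  · -- M side
    have hsys := C.tris_M hMR hTTR C.L [] rfl
    rw [show bset ([] : List (α × α)) = ∅ from bset_nil,
      show rset ([] : List (α × α)) = ∅ from rset_nil] at hsys
    obtain ⟨hind, hcl⟩ := exchange_final M (R : Set α) (C.L.map Prod.swap) hMR hsys
    rw [rset_map_swap, bset_map_swap] at hind hcl
    have hxE : C.x ∈ M.E := (hTT' C.x (C.htt C.x (List.mem_cons_self))).1
    have hxcl : C.x ∉ M.closure (((R : Set α) \ bset C.L) ∪ rset C.L) :=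
      fun hmem => C.hx (hcl hmem)
    have hxmem : C.x ∉ ((R : Set α) \ bset C.L) ∪ rset C.L :=
      fun hmem => hxcl (M.subset_closure _ hind.subset_ground hmem)
    have hZ := (hind.insert_indep_iff_of_notMem hxmem).mpr ⟨hxE, hxcl⟩
    have hset : insert C.x (((R : Set α) \ bset C.L) ∪ rset C.L)
        = ((R : Set α) \ bset C.L) ∪ {a | a ∈ xelts C.x C.L} := by
      rw [xelts_set_insert]
      ext a; simp only [mem_insert_iff, mem_union]; tauto
    rwa [hset] at hZ
  · -- N side
    have hsys := C.tris_N hNR hTTR C.L [] (by simp)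
    rw [show bset ([] : List (α × α)) = ∅ from bset_nil,
      show npairs (endpt C.x C.L) [] = [] from rfl,
      show bset ([] : List (α × α)) = ∅ from bset_nil] at hsys
    obtain ⟨hind, hcl⟩ := exchange_final N (R : Set α) ((npairs C.x C.L).reverse) hNR hsys
    rw [rset_reverse, bset_reverse, rset_npairs] at hind hcl
    have hyx : C.y ∈ xelts C.x C.L := by
      have := endpt_mem_xelts C.x C.L
      rwa [chain_endpt C.chain] at this
    have hyE : C.y ∈ N.E := (hTT' C.y (C.htt C.y hyx)).2.1
    have hycl : C.y ∉ N.closure (((R : Set α) \ bset C.L) ∪ bset (npairs C.x C.L)) :=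
      fun hmem => C.hy (hcl hmem)
    have hymem : C.y ∉ ((R : Set α) \ bset C.L) ∪ bset (npairs C.x C.L) :=
      fun hmem => hycl (N.subset_closure _ hind.subset_ground hmem)
    have hZ := (hind.insert_indep_iff_of_notMem hymem).mpr ⟨hyE, hycl⟩
    have hset : insert C.y (((R : Set α) \ bset C.L) ∪ bset (npairs C.x C.L))
        = ((R : Set α) \ bset C.L) ∪ {a | a ∈ xelts C.x C.L} := by
      rw [xelts_set_eq, chain_endpt C.chain]
      ext a
      simp only [mem_insert_iff, mem_union, mem_singleton_iff]
      tauto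
    rwa [hset] at hZ

end MinChain
variable {α : Type*} {M N : Matroid α}

lemma exists_augment (M N : Matroid α) (R : Finset α) (hMR : M.Indep (R : Set α))
    (hNR : N.Indep (R : Set α)) (TT : Set α)
    (hTT' : ∀ e ∈ TT, e ∈ M.E ∧ e ∈ N.E ∧ e ∉ (R : Set α))
    (hex : ∃ x L y, Chain M N (R : Set α) x L y ∧ x ∉ M.closure (R : Set α) ∧
      y ∉ N.closure (R : Set α) ∧ ∀ e ∈ xelts x L, e ∈ TT) :
    ∃ (xl rl : List α), xl.Nodup ∧ rl.Nodup ∧ (∀ e ∈ xl, e ∈ TT) ∧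
      (∀ e ∈ rl, e ∈ (R : Set α)) ∧ xl.length = rl.length + 1 ∧
      M.Indep (((R : Set α) \ {a | a ∈ rl}) ∪ {a | a ∈ xl}) ∧
      N.Indep (((R : Set α) \ {a | a ∈ rl}) ∪ {a | a ∈ xl}) := by
  classical
  have hP : ∃ n : ℕ, ∃ x L y, (L : List (α × α)).length = n ∧ Chain M N (R : Set α) x L y ∧
      x ∉ M.closure (R : Set α) ∧ y ∉ N.closure (R : Set α) ∧ ∀ e ∈ xelts x L, e ∈ TT := by
    obtain ⟨x, L, y, h1, h2, h3, h4⟩ := hex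
    exact ⟨L.length, x, L, y, rfl, h1, h2, h3, h4⟩
  obtain ⟨x, L, y, hlen, h1, h2, h3, h4⟩ := Nat.find_spec hP
  have hmin : ∀ (x' : α) (L' : List (α × α)) (y' : α), Chain M N (R : Set α) x' L' y' →
      x' ∉ M.closure (R : Set α) → y' ∉ N.closure (R : Set α) →
      (∀ e ∈ xelts x' L', e ∈ TT) → L.length ≤ L'.length := by
    intro x' L' y' hc ha hb hc2
    by_contra hcon
    push_neg at hcon
    rw [hlen] at hcon
    exact Nat.find_min hP hcon ⟨x', L', y', rfl, hc, ha, hb, hc2⟩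
  let C : MinChain M N R TT := ⟨x, L, y, h1, h2, h3, h4, hmin⟩
  obtain ⟨hMind, hNind⟩ := C.augmented hMR hNR hTT'
  have hbs : {a | a ∈ L.map Prod.fst} = bset L := by
    ext a
    constructor
    · intro ha
      obtain ⟨p, hp, hp1⟩ := List.mem_map.mp ha
      exact ⟨p, hp, hp1⟩
    · rintro ⟨p, hp, rfl⟩
      exact List.mem_map.mpr ⟨p, hp, rfl⟩
  refine ⟨xelts x L, L.map Prod.fst, C.xelts_nodup, C.rlist_nodup, h4, ?_, by simp [xelts], ?_, ?_⟩
  · intro e he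
    obtain ⟨p, hp, hp1⟩ := List.mem_map.mp he
    exact hp1 ▸ chain_fst_mem h1 p hp
  · rw [hbs]; exact hMind
  · rw [hbs]; exact hNind

section Grow

variable {ι : Type*}

/-- reachability of elements through the discovered arcs -/
inductive RB (M N : Matroid α) (R : Set α) (D : Finset (α × ι)) : α → Prop
  | root (b : α) (u : ι) : (b, u) ∈ D → b ∉ M.closure R → RB M N R D b
  | step (b r b' : α) (u' : ι) : RB M N R D b → arc N R b r → arc M R b' r →
      (b', u') ∈ D → RB M N R D b'

lemma RB_mono {R : Set α} {D D' : Finset (α × ι)} (hsub : D ⊆ D') {b : α}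
    (h : RB M N R D b) : RB M N R D' b := by
  induction h with
  | root b u hmem hb => exact RB.root b u (hsub hmem) hb
  | step b r b' u' hRB harcN harcM hmem ih => exact RB.step b r b' u' ih harcN harcM (hsub hmem)

lemma RB_chain {R : Set α} {D : Finset (α × ι)} {b : α} (h : RB M N R D b) :
    ∃ x L, Chain M N R x L b ∧ x ∉ M.closure R ∧
      (∀ e ∈ xelts x L, ∃ u, (e, u) ∈ D) := by
  induction h with
  | root b u hmem hb =>
    refine ⟨b, [], rfl, hb, ?_⟩
    intro e he
    simp only [xelts, List.map_nil, List.mem_cons, List.not_mem_nil, or_false] at he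
    exact he ▸ ⟨u, hmem⟩
  | step b r b' u' hRB harcN harcM hmem ih =>
    obtain ⟨x, L, hch, hx, htag⟩ := ih
    refine ⟨x, L ++ [(r, b')], chain_comp hch harcN harcM rfl, hx, ?_⟩
    intro e he
    simp only [xelts, List.mem_cons, List.map_append, List.mem_append, List.map_cons,
      List.map_nil] at he
    rcases he with rfl | he | he
    · exact htag e (List.mem_cons_self)
    · exact htag e (List.mem_cons_of_mem _ (List.mem_map.mpr (by
        obtain ⟨p, hp, hp2⟩ := List.mem_map.mp he; exact ⟨p, hp, hp2⟩)))
    · simp only [List.mem_cons, List.not_mem_nil, or_false] at he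
      exact he ▸ ⟨u', hmem⟩

/-- The growth lemma: from any state, we can grow the selected set or find a finishing chain. -/
lemma grow [DecidableEq ι] (M N : Matroid α) (A : ι → Finset α) (R : Finset α) (U : Finset ι)
    (hMR : M.Indep (R : Set α)) (hNR : N.Indep (R : Set α))
    (hU : ∀ u ∈ U, M.Indep ((A u : Set α)) ∧ N.Indep ((A u : Set α)) ∧ R.card + 1 ≤ (A u).card)
    (hUcard : R.card + 1 ≤ U.card) :
    ∀ (k : ℕ) (Sel : Finset α) (D : Finset (α × ι)),
      Sel.card + k = R.card + 1 → Sel ⊆ R → D.card ≤ Sel.card →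
      (∀ p ∈ D, p.1 ∈ A p.2 ∧ p.2 ∈ U ∧ p.1 ∉ (R : Set α) ∧ RB M N (R : Set α) D p.1) →
      (∀ p ∈ D, ∀ q ∈ D, p.1 = q.1 ↔ p.2 = q.2) →
      (∀ r ∈ Sel, ∃ b, RB M N (R : Set α) D b ∧ arc N (R : Set α) b r) →
      ∃ (D' : Finset (α × ι)) (x y : α) (L : List (α × α)),
        (∀ p ∈ D', p.1 ∈ A p.2 ∧ p.2 ∈ U ∧ p.1 ∉ (R : Set α)) ∧
        (∀ p ∈ D', ∀ q ∈ D', p.1 = q.1 ↔ p.2 = q.2) ∧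
        Chain M N (R : Set α) x L y ∧ x ∉ M.closure (R : Set α) ∧ y ∉ N.closure (R : Set α) ∧
        (∀ e ∈ xelts x L, ∃ u, (e, u) ∈ D') := by
  classical
  intro k
  induction k with
  | zero =>
    intro Sel D hcard hSelR _ _ _ _
    have := Finset.card_le_card hSelR
    omega
  | succ k ih =>
    intro Sel D hcard hSelR hDcard hD hDinj hSel
    -- find a fresh index u
    have himg : (D.image Prod.snd).card < U.card := by
      have h1 : (D.image Prod.snd).card ≤ D.card := Finset.card_image_le
      have h2 := Finset.card_le_card hSelR
      omega
    have hexu : ∃ u ∈ U, u ∉ D.image Prod.snd := by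
      by_contra hcon
      push_neg at hcon
      exact absurd (Finset.card_le_card fun u hu => hcon u hu) (by omega)
    obtain ⟨u, hu, hufresh⟩ := hexu
    obtain ⟨hMA, hNA, hAcard⟩ := hU u hu
    -- counting: find a good element b
    have hgood : ∃ b ∈ A u, b ∉ M.closure ((R : Set α) \ (Sel : Set α)) ∧
        b ∉ N.closure (Sel : Set α) := by
      by_contra hcon
      push_neg at hcon
      set F1 := (A u).filter (fun a => a ∈ M.closure ((R : Set α) \ (Sel : Set α))) with hF1
      set F2 := (A u).filter (fun a => a ∈ N.closure (Sel : Set α)) with hF2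
      have hsub : A u ⊆ F1 ∪ F2 := by
        intro a ha
        rcases em (a ∈ M.closure ((R : Set α) \ (Sel : Set α))) with h | h
        · exact Finset.mem_union_left _ (Finset.mem_filter.mpr ⟨ha, h⟩)
        · exact Finset.mem_union_right _ (Finset.mem_filter.mpr ⟨ha, hcon a ha h⟩)
      have hF1card : F1.card ≤ (R \ Sel).card := by
        have hind : M.Indep (F1 : Set α) := hMA.subset (Finset.coe_subset.mpr (Finset.filter_subset _ _))
        have hsub1 : (F1 : Set α) ⊆ M.closure ((R \ Sel : Finset α) : Set α) := by
          intro a ha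
          rw [Finset.coe_sdiff]
          exact (Finset.mem_filter.mp (Finset.mem_coe.mp ha)).2
        have hRS : M.Indep ((R \ Sel : Finset α) : Set α) :=
          hMR.subset (by rw [Finset.coe_sdiff]; exact diff_subset)
        have := encard_le_of_subset_closure hind hRS hsub1
        rwa [Set.encard_coe_eq_coe_finsetCard, Set.encard_coe_eq_coe_finsetCard,
          Nat.cast_le] at this
      have hF2card : F2.card ≤ Sel.card := by
        have hind : N.Indep (F2 : Set α) := hNA.subset (Finset.coe_subset.mpr (Finset.filter_subset _ _))
        have hsub2 : (F2 : Set α) ⊆ N.closure (Sel : Set α) := by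
          intro a ha
          exact (Finset.mem_filter.mp (Finset.mem_coe.mp ha)).2
        have hSind : N.Indep (Sel : Set α) := hNR.subset (by exact_mod_cast hSelR)
        have := encard_le_of_subset_closure hind hSind hsub2
        rwa [Set.encard_coe_eq_coe_finsetCard, Set.encard_coe_eq_coe_finsetCard,
          Nat.cast_le] at this
      have hcards : (A u).card ≤ F1.card + F2.card :=
        le_trans (Finset.card_le_card hsub) (Finset.card_union_le _ _)
      have hRS : (R \ Sel).card = R.card - Sel.card := Finset.card_sdiff_of_subset hSelR
      have := Finset.card_le_card hSelR
      omega
    obtain ⟨b, hbA, hb1, hb2⟩ := hgood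
    -- b ∉ R
    have hbR : b ∉ (R : Set α) := by
      intro hmem
      by_cases hbSel : b ∈ (Sel : Set α)
      · exact hb2 (N.subset_closure _ ((Finset.coe_subset.mpr hSelR).trans hNR.subset_ground) hbSel)
      · exact hb1 (M.subset_closure _ ((diff_subset).trans hMR.subset_ground) ⟨hmem, hbSel⟩)
    -- extend D if necessary
    have hD' : ∃ D' : Finset (α × ι), D ⊆ D' ∧ D'.card ≤ D.card + 1 ∧ (∃ u₀, (b, u₀) ∈ D') ∧
        (∀ p ∈ D', p.1 ∈ A p.2 ∧ p.2 ∈ U ∧ p.1 ∉ (R : Set α)) ∧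
        (∀ p ∈ D', ∀ q ∈ D', p.1 = q.1 ↔ p.2 = q.2) ∧
        (∀ p ∈ D', p ∈ D ∨ p.1 = b) := by
      by_cases hbD : ∃ u₀, (b, u₀) ∈ D
      · exact ⟨D, subset_rfl, by omega, hbD,
          fun p hp => ⟨(hD p hp).1, (hD p hp).2.1, (hD p hp).2.2.1⟩, hDinj, fun p hp => Or.inl hp⟩
      · push_neg at hbD
        refine ⟨insert (b, u) D, Finset.subset_insert _ _, Finset.card_insert_le _ _,
          ⟨u, Finset.mem_insert_self _ _⟩, ?_, ?_, ?_⟩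
        · intro p hp
          rcases Finset.mem_insert.mp hp with rfl | hp
          · exact ⟨hbA, hu, hbR⟩
          · exact ⟨(hD p hp).1, (hD p hp).2.1, (hD p hp).2.2.1⟩
        · intro p hp q hq
          rcases Finset.mem_insert.mp hp with hpe | hpD
          · rcases Finset.mem_insert.mp hq with hqe | hqD
            · rw [hpe, hqe]
              simp
            · rw [hpe]
              constructor
              · intro h1
                exfalso
                refine hbD q.2 ?_
                have : ((b, u).1, q.2) ∈ D := by rw [h1, Prod.mk.eta]; exact hqD
                exact this
              · intro h2
                exfalso
                exact hufresh (Finset.mem_image.mpr ⟨q, hqD, h2.symm⟩)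
          · rcases Finset.mem_insert.mp hq with hqe | hqD
            · rw [hqe]
              constructor
              · intro h1
                exfalso
                refine hbD p.2 ?_
                have : ((b, u).1, p.2) ∈ D := by rw [← h1, Prod.mk.eta]; exact hpD
                exact this
              · intro h2
                exfalso
                exact hufresh (Finset.mem_image.mpr ⟨p, hpD, h2⟩)
            · exact hDinj _ hpD _ hqD
        · intro p hp
          rcases Finset.mem_insert.mp hp with rfl | hp
          · exact Or.inr rfl
          · exact Or.inl hp
    obtain ⟨D', hDsub, hD'card, ⟨u₀, hbu₀⟩, hD'mem, hD'inj, hD'or⟩ := hD'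
    -- b is reachable w.r.t. D'
    have hRBb : RB M N (R : Set α) D' b := by
      by_cases hbM : b ∈ M.closure (R : Set α)
      · obtain ⟨rh, hrhSel, hrhR, hbrh⟩ := exists_arc_into R hMR (Sel : Set α) hbM hb1
        obtain ⟨b₀, hb₀RB, hb₀arc⟩ := hSel rh hrhSel
        exact RB.step b₀ rh b u₀ (RB_mono hDsub hb₀RB) hb₀arc ⟨hrhR, hbM, hbrh⟩ hbu₀
      · exact RB.root b u₀ hbu₀ hbM
    by_cases hbN : b ∈ N.closure (R : Set α)
    · -- productive step
      obtain ⟨rn, hrnR, hrnSel, hbrn⟩ := exists_arc_avoiding R hNR (Sel : Set α) hbN hb2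
        (Finset.coe_subset.mpr hSelR)
      have hrnSel' : rn ∉ Sel := fun h => hrnSel h
      have hrnR' : rn ∈ R := hrnR
      refine ih (insert rn Sel) D' ?_ ?_ ?_ ?_ hD'inj ?_
      · rw [Finset.card_insert_of_notMem hrnSel']; omega
      · exact Finset.insert_subset hrnR' hSelR
      · rw [Finset.card_insert_of_notMem hrnSel']; omega
      · intro p hp
        refine ⟨(hD'mem p hp).1, (hD'mem p hp).2.1, (hD'mem p hp).2.2, ?_⟩
        rcases hD'or p hp with hpD | hpb
        · exact RB_mono hDsub (hD p hpD).2.2.2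
        · rw [hpb]
          exact hRBb
      · intro r hr
        rcases Finset.mem_insert.mp hr with rfl | hr
        · exact ⟨b, hRBb, ⟨hrnR, hbN, hbrn⟩⟩
        · obtain ⟨b₀, hb₀RB, hb₀arc⟩ := hSel r hr
          exact ⟨b₀, RB_mono hDsub hb₀RB, hb₀arc⟩
    · -- finisher!
      obtain ⟨x, L, hch, hx, htag⟩ := RB_chain hRBb
      exact ⟨D', x, b, L, hD'mem, hD'inj, hch, hx, hbN, htag⟩

end Grow
variable {α : Type*} {M N : Matroid α}

def Rainbow {ι : Type*} (M N : Matroid α) (A : ι → Finset α) (k : ℕ) : Prop :=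
  ∃ (T : Finset α) (f : α → ι), T.card = k ∧ M.Indep (T : Set α) ∧ N.Indep (T : Set α) ∧
    Set.InjOn f (T : Set α) ∧ ∀ t ∈ T, t ∈ A (f t)

lemma rainbow_augment {ι : Type*} [Fintype ι] [DecidableEq ι] [DecidableEq α] (M N : Matroid α)
    (A : ι → Finset α) (R : Finset α) (f : α → ι)
    (hMR : M.Indep (R : Set α)) (hNR : N.Indep (R : Set α))
    (hf : Set.InjOn f (R : Set α)) (hmem : ∀ r ∈ R, r ∈ A (f r))
    (hA : ∀ u ∈ (Finset.univ \ R.image f), M.Indep ((A u : Set α)) ∧ N.Indep ((A u : Set α)) ∧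
      R.card + 1 ≤ (A u).card)
    (hUcard : R.card + 1 ≤ (Finset.univ \ R.image f).card) :
    Rainbow M N A (R.card + 1) := by
  classical
  set U := Finset.univ \ R.image f with hUdef
  obtain ⟨D', x, y, L, hD'mem, hD'inj, hch, hx, hy, htags⟩ :=
    grow M N A R U hMR hNR (fun u hu => hA u hu) hUcard (R.card + 1) ∅ ∅ (by simp) (by simp)
      (by simp) (by simp) (by simp) (by simp)
  set TT : Set α := {a | ∃ u, (a, u) ∈ D'} with hTTdef
  have hTT' : ∀ e ∈ TT, e ∈ M.E ∧ e ∈ N.E ∧ e ∉ (R : Set α) := by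
    rintro e ⟨u, heu⟩
    obtain ⟨h1, h2, h3⟩ := hD'mem (e, u) heu
    obtain ⟨hMA, hNA, -⟩ := hA u h2
    exact ⟨hMA.subset_ground (by exact_mod_cast h1), hNA.subset_ground (by exact_mod_cast h1), h3⟩
  obtain ⟨xl, rl, hxlnd, hrlnd, hxlT, hrlR, hlen, hMZ, hNZ⟩ :=
    exists_augment M N R hMR hNR TT hTT' ⟨x, L, y, hch, hx, hy, fun e he => htags e he⟩
  -- build the new rainbow set
  set Z : Finset α := (R \ rl.toFinset) ∪ xl.toFinset with hZdef
  have hZcoe : (Z : Set α) = ((R : Set α) \ {a | a ∈ rl}) ∪ {a | a ∈ xl} := by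
    rw [hZdef]
    ext a
    simp only [Finset.coe_union, Finset.coe_sdiff, List.coe_toFinset, Set.mem_union,
      Set.mem_diff, Finset.mem_coe, Set.mem_setOf_eq]
  have hxlR : ∀ e ∈ xl, e ∉ (R : Set α) := fun e he => (hTT' e (hxlT e he)).2.2
  have hdisj : Disjoint (R \ rl.toFinset) xl.toFinset := by
    rw [Finset.disjoint_right]
    intro a ha
    intro hmem2
    exact hxlR a (List.mem_toFinset.mp ha) (Finset.mem_coe.mpr (Finset.mem_sdiff.mp hmem2).1)
  have hrlsub : rl.toFinset ⊆ R := by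
    intro a ha
    exact Finset.mem_coe.mp (hrlR a (List.mem_toFinset.mp ha))
  have hZcard : Z.card = R.card + 1 := by
    rw [hZdef, Finset.card_union_of_disjoint hdisj, Finset.card_sdiff_of_subset hrlsub,
      List.toFinset_card_of_nodup hrlnd, List.toFinset_card_of_nodup hxlnd, hlen]
    have := Finset.card_le_card hrlsub
    rw [List.toFinset_card_of_nodup hrlnd] at this
    omega
  -- the tagging function
  set g : α → ι := fun a => if h : ∃ u, (a, u) ∈ D' then h.choose else f a with hgdef
  have hgD : ∀ a, ∀ (h : ∃ u, (a, u) ∈ D'), (a, g a) ∈ D' := by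
    intro a h
    rw [hgdef]
    simp only [dif_pos h]
    exact h.choose_spec
  have hgR : ∀ a ∈ (R : Set α), g a = f a := by
    intro a ha
    rw [hgdef]
    simp only []
    rw [dif_neg]
    rintro ⟨u, hu⟩
    exact (hD'mem (a, u) hu).2.2 ha
  have hxlD : ∀ e ∈ xl, ∃ u, (e, u) ∈ D' := fun e he => hxlT e he
  refine ⟨Z, g, hZcard, by rwa [hZcoe], by rwa [hZcoe], ?_, ?_⟩
  · -- injectivity
    intro a ha b hb hab
    rw [hZcoe] at ha hb
    rcases ha with ⟨haR, -⟩ | haxl <;> rcases hb with ⟨hbR, -⟩ | hbxl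
    · rw [hgR a haR, hgR b hbR] at hab
      exact hf haR hbR hab
    · exfalso
      have h1 : (b, g b) ∈ D' := hgD b (hxlD b hbxl)
      have h2 : g b ∉ R.image f := (Finset.mem_sdiff.mp (hD'mem _ h1).2.1).2
      rw [hgR a haR] at hab
      exact h2 (hab ▸ Finset.mem_image_of_mem f (Finset.mem_coe.mp haR))
    · exfalso
      have h1 : (a, g a) ∈ D' := hgD a (hxlD a haxl)
      have h2 : g a ∉ R.image f := (Finset.mem_sdiff.mp (hD'mem _ h1).2.1).2
      rw [hgR b hbR] at hab
      exact h2 (hab ▸ Finset.mem_image_of_mem f (Finset.mem_coe.mp hbR))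
    · have h1 : (a, g a) ∈ D' := hgD a (hxlD a haxl)
      have h2 : (b, g b) ∈ D' := hgD b (hxlD b hbxl)
      exact (hD'inj _ h1 _ h2).mpr hab
  · -- membership in the sets
    intro t ht
    have ht' : (t : α) ∈ (Z : Set α) := Finset.mem_coe.mpr ht
    rw [hZcoe] at ht'
    rcases ht' with ⟨htR, -⟩ | htxl
    · rw [hgR t htR]
      exact hmem t (Finset.mem_coe.mp htR)
    · exact (hD'mem _ (hgD t (hxlD t htxl))).1


lemma kz_steps {ι : Type*} [Fintype ι] [DecidableEq ι] [DecidableEq α] [Nonempty ι]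
    (M N : Matroid α) (A : ι → Finset α) (n : ℕ)
    (hM : ∀ i, M.Indep (A i : Set α)) (hN : ∀ i, N.Indep (A i : Set α))
    (hcard : ∀ i, n ≤ (A i).card) (hι : 2 * n - 1 ≤ Fintype.card ι) (hn : 1 ≤ n) :
    ∀ m, m ≤ n → Rainbow M N A m := by
  intro m
  induction m with
  | zero =>
    intro _
    exact ⟨∅, fun _ => Classical.arbitrary ι, rfl, by simp, by simp, by simp, by simp⟩
  | succ m ih =>
    intro hm
    obtain ⟨T, f, hTcard, hMT, hNT, hinj, hmem⟩ := ih (by omega)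
    have haug : Rainbow M N A (T.card + 1) := by
      refine rainbow_augment M N A T f hMT hNT hinj hmem ?_ ?_
      · intro u _
        refine ⟨hM u, hN u, ?_⟩
        have := hcard u
        omega
      · have h1 : (T.image f).card ≤ T.card := Finset.card_image_le
        have h2 : (Finset.univ \ T.image f).card = Fintype.card ι - (T.image f).card := by
          rw [Finset.card_sdiff_of_subset (Finset.subset_univ _), Finset.card_univ]
        omega
    rwa [hTcard] at haug

end KZ

open KZ in
/-- **Kotlar–Ziv.** Given `2n-1` sets of size `n`, each independent in both matroids
`M` and `N`, there is a partial rainbow set of size `n` independent in both. -/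
theorem kotlar_ziv {α : Type*} (M N : Matroid α) (n : ℕ)
    (A : Fin (2 * n - 1) → Finset α)
    (hM : ∀ i, M.Indep (A i : Set α)) (hN : ∀ i, N.Indep (A i : Set α))
    (hcard : ∀ i, (A i).card = n) :
    ∃ (ι : Fin n → Fin (2 * n - 1)) (x : Fin n → α),
      StrictMono ι ∧ Function.Injective x ∧ (∀ j, x j ∈ A (ι j)) ∧
        M.Indep (Set.range x) ∧ N.Indep (Set.range x) := by
  classical
  rcases Nat.eq_zero_or_pos n with rfl | hn
  · refine ⟨fun j => j.elim0, fun j => j.elim0, fun a => a.elim0, fun a => a.elim0,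
      fun j => j.elim0, ?_, ?_⟩ <;>
    · rw [Set.range_eq_empty]
      exact Matroid.empty_indep _
  · haveI : Nonempty (Fin (2 * n - 1)) := ⟨⟨0, by omega⟩⟩
    obtain ⟨T, f, hTcard, hMT, hNT, hinj, hmem⟩ :=
      kz_steps M N A n hM hN (fun i => le_of_eq (hcard i).symm)
        (by rw [Fintype.card_fin]) hn n le_rfl
    set J := T.image f with hJ
    have hJcard : J.card = n := by rw [hJ, Finset.card_image_of_injOn hinj, hTcard]
    set oi := J.orderIsoOfFin hJcard with hoi
    have hx : ∀ j : Fin n, ∃ t, t ∈ T ∧ f t = ↑(oi j) := by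
      intro j
      have hmem2 : (↑(oi j) : Fin (2 * n - 1)) ∈ J := (oi j).2
      obtain ⟨t, ht, hft⟩ := Finset.mem_image.mp hmem2
      exact ⟨t, ht, hft⟩
    choose x hxT hxf using hx
    have hrange : Set.range x ⊆ (T : Set α) := by
      rintro a ⟨j, rfl⟩
      exact hxT j
    refine ⟨fun j => ↑(oi j), x, ?_, ?_, ?_, hMT.subset hrange, hNT.subset hrange⟩
    · intro a b hab
      exact Subtype.coe_lt_coe.mpr (oi.lt_iff_lt.mpr hab)
    · intro a b hab
      have h1 : (↑(oi a) : Fin (2 * n - 1)) = ↑(oi b) := by rw [← hxf a, ← hxf b, hab]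
      exact oi.injective (Subtype.ext h1)
    · intro j
      have := hmem (x j) (hxT j)
      rwa [hxf j] at this
end

section
/- Given a collection of 2n-1 matchings M_1, …, M_{2n-1}, each of size n, in a bipartite graph G, there exists a partial rainbow matching of size n, i.e., pairwise vertex-disjoint edges e_1 ∈ M_{i_1}, …, e_n ∈ M_{i_n} with 1 ≤ i_1 < ⋯ < i_n ≤ 2n-1. -/
open Finset

namespace BipDrisko

variable {α : Type*}

def Rainbow {N : ℕ} (M : Fin N → Finset (α × α)) (R : Finset (Fin N × α × α)) : Prop :=
  (∀ t ∈ R, t.2 ∈ M t.1) ∧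
  Set.InjOn (fun t : Fin N × α × α => t.1) ↑R ∧
  Set.InjOn (fun t : Fin N × α × α => t.2.1) ↑R ∧
  Set.InjOn (fun t : Fin N × α × α => t.2.2) ↑R

lemma Rainbow.mono {N : ℕ} {M : Fin N → Finset (α × α)} {R S : Finset (Fin N × α × α)}
    (hSR : S ⊆ R) (h : Rainbow M R) : Rainbow M S := by
  have hc : (↑S : Set (Fin N × α × α)) ⊆ ↑R := Finset.coe_subset.2 hSR
  exact ⟨fun t ht => h.1 t (hSR ht), h.2.1.mono hc, h.2.2.1.mono hc, h.2.2.2.mono hc⟩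

lemma rainbow_insert {N : ℕ} {M : Fin N → Finset (α × α)} {Q : Finset (Fin N × α × α)}
    {p : Fin N × α × α} [DecidableEq (Fin N × α × α)] (hQ : Rainbow M Q) (hp : p.2 ∈ M p.1)
    (h1 : ∀ t ∈ Q, t.1 ≠ p.1) (h2 : ∀ t ∈ Q, t.2.1 ≠ p.2.1) (h3 : ∀ t ∈ Q, t.2.2 ≠ p.2.2) :
    Rainbow M (insert p Q) := by
  have hmem : ∀ t ∈ insert p Q, t = p ∨ t ∈ Q := fun t ht => Finset.mem_insert.1 ht
  refine ⟨?_, ?_, ?_, ?_⟩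
  · intro t ht
    rcases hmem t ht with rfl | ht'
    · exact hp
    · exact hQ.1 t ht'
  · intro a ha b hb hab
    rcases hmem a (Finset.mem_coe.1 ha) with rfl | ha' <;>
      rcases hmem b (Finset.mem_coe.1 hb) with rfl | hb'
    · rfl
    · exact absurd hab.symm (h1 b hb')
    · exact absurd hab (h1 a ha')
    · exact hQ.2.1 (Finset.mem_coe.2 ha') (Finset.mem_coe.2 hb') hab
  · intro a ha b hb hab
    rcases hmem a (Finset.mem_coe.1 ha) with rfl | ha' <;>
      rcases hmem b (Finset.mem_coe.1 hb) with rfl | hb'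
    · rfl
    · exact absurd hab.symm (h2 b hb')
    · exact absurd hab (h2 a ha')
    · exact hQ.2.2.1 (Finset.mem_coe.2 ha') (Finset.mem_coe.2 hb') hab
  · intro a ha b hb hab
    rcases hmem a (Finset.mem_coe.1 ha) with rfl | ha' <;>
      rcases hmem b (Finset.mem_coe.1 hb) with rfl | hb'
    · rfl
    · exact absurd hab.symm (h3 b hb')
    · exact absurd hab (h3 a ha')
    · exact hQ.2.2.2 (Finset.mem_coe.2 ha') (Finset.mem_coe.2 hb') hab

lemma fresh {N : ℕ} (s : Finset (Fin N)) (h : s.card < N) : ∃ c, c ∉ s := by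
  by_contra hc
  push_neg at hc
  have : s = Finset.univ := Finset.eq_univ_iff_forall.2 hc
  rw [this, Finset.card_univ, Fintype.card_fin] at h
  omega

lemma no_small_max [DecidableEq α] {n m : ℕ} {M : Fin (2 * n - 1) → Finset (α × α)}
    (h1 : ∀ i, Set.InjOn (fun p : α × α => p.1) ↑(M i))
    (h2 : ∀ i, Set.InjOn (fun p : α × α => p.2) ↑(M i))
    (hcard : ∀ i, (M i).card = n)
    {R : Finset (Fin (2 * n - 1) × α × α)} (hR : Rainbow M R) (hm : R.card = m)
    (hmax : ∀ S, Rainbow M S → S.card ≤ m) (hmn : m < n) : False := by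
  classical
  have hn1 : 1 ≤ n := by omega
  set Ys : Finset α := R.image (fun t => t.2.2) with hYsdef
  set Xs : Finset α := R.image (fun t => t.2.1) with hXsdef
  set Cs : Finset (Fin (2 * n - 1)) := R.image (fun t => t.1) with hCsdef
  have hYs : Ys.card = m := by rw [hYsdef, Finset.card_image_of_injOn hR.2.2.2, hm]
  have hXs : Xs.card = m := by rw [hXsdef, Finset.card_image_of_injOn hR.2.2.1, hm]
  have hCs : Cs.card = m := by rw [hCsdef, Finset.card_image_of_injOn hR.2.1, hm]
  -- selection function: for y ∈ Ys, sel y is the edge of R at y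
  have hselex : ∀ y : α, ∃ t : Fin (2 * n - 1) × α × α, y ∈ Ys → t ∈ R ∧ t.2.2 = y := by
    intro y
    by_cases hy : y ∈ Ys
    · obtain ⟨t, ht, hty⟩ := Finset.mem_image.1 hy
      exact ⟨t, fun _ => ⟨ht, hty⟩⟩
    · exact ⟨(⟨0, by omega⟩, y, y), fun h => absurd h hy⟩
  choose sel hsel using hselex
  have hselR : ∀ t ∈ R, sel t.2.2 = t := by
    intro t ht
    have hty : t.2.2 ∈ Ys := Finset.mem_image_of_mem _ ht
    obtain ⟨hsR, hs2⟩ := hsel t.2.2 hty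
    exact hR.2.2.2 (Finset.mem_coe.2 hsR) (Finset.mem_coe.2 ht) hs2
  have hselinj : ∀ y₁ ∈ Ys, ∀ y₂ ∈ Ys, (sel y₁).2.1 = (sel y₂).2.1 → y₁ = y₂ := by
    intro y₁ hy₁ y₂ hy₂ h
    obtain ⟨hR1, he1⟩ := hsel y₁ hy₁
    obtain ⟨hR2, he2⟩ := hsel y₂ hy₂
    have := hR.2.2.1 (Finset.mem_coe.2 hR1) (Finset.mem_coe.2 hR2) h
    rw [← he1, ← he2, this]
  -- the main invariant construction
  have key : ∀ i, i ≤ m + 1 → ∃ (cs : Finset (Fin (2 * n - 1))) (ys : Finset α),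
      cs.card = i ∧ ys.card = i ∧ (∀ c ∈ cs, c ∉ Cs) ∧ ys ⊆ Ys ∧
      ∀ y ∈ ys, ∃ Q, Rainbow M Q ∧ Q.card = m ∧ Q.image (fun t => t.2.2) = Ys ∧
        (∀ t ∈ Q, t.1 ∈ Cs ∨ t.1 ∈ cs) ∧
        (∀ t ∈ Q, t.2.2 ∉ ys → t.2.1 = (sel t.2.2).2.1) ∧
        (∀ t ∈ Q, t.2.1 ≠ (sel y).2.1) := by
    intro i
    induction i with
    | zero =>
      intro _
      exact ⟨∅, ∅, rfl, rfl, by simp, by simp, by simp⟩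
    | succ i ih =>
      intro hi1
      have hi : i ≤ m := by omega
      obtain ⟨cs, ys, hcsc, hysc, hcsd, hysY, hinv⟩ := ih (by omega)
      -- fresh color
      obtain ⟨c', hc'⟩ : ∃ c', c' ∉ Cs ∪ cs := by
        apply fresh
        calc (Cs ∪ cs).card ≤ Cs.card + cs.card := Finset.card_union_le _ _
        _ < 2 * n - 1 := by rw [hCs, hcsc]; omega
      have hc'Cs : c' ∉ Cs := fun h => hc' (Finset.mem_union_left _ h)
      have hc'cs : c' ∉ cs := fun h => hc' (Finset.mem_union_right _ h)
      -- exposed-vertex set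
      set E : Finset α := ys.image (fun y => (sel y).2.1) with hEdef
      have hE : E.card = i := by
        rw [hEdef, Finset.card_image_of_injOn, hysc]
        intro a ha b hb hab
        exact hselinj a (hysY ha) b (hysY hb) hab
      have hEX : E ⊆ Xs := by
        intro x hx
        obtain ⟨y, hy, rfl⟩ := Finset.mem_image.1 hx
        exact Finset.mem_image_of_mem _ (hsel y (hysY hy)).1
      -- candidate edges
      set cand : Finset (α × α) := (M c').filter (fun f => f.1 ∉ Xs \ E) with hcanddef
      have hcandM : cand ⊆ M c' := Finset.filter_subset _ _
      have hcandc : i + 1 ≤ cand.card := by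
        have hsplit : (M c').card ≤ cand.card + ((M c').filter (fun f => ¬ f.1 ∉ Xs \ E)).card := by
          rw [hcanddef]
          calc (M c').card = ((M c').filter (fun f => f.1 ∉ Xs \ E) ∪
              (M c').filter (fun f => ¬ f.1 ∉ Xs \ E)).card := by
                rw [Finset.filter_union_filter_not_eq]
          _ ≤ _ := Finset.card_union_le _ _
        have hblocked : ((M c').filter (fun f => ¬ f.1 ∉ Xs \ E)).card ≤ m - i := by
          have : ((M c').filter (fun f => ¬ f.1 ∉ Xs \ E)).card ≤ (Xs \ E).card := by
            apply Finset.card_le_card_of_injOn (fun f => f.1)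
            · intro f hf
              have := (Finset.mem_filter.1 hf).2
              simpa using this
            · exact (h1 c').mono (by
                intro f hf
                exact Finset.mem_coe.2 (Finset.filter_subset _ _ (Finset.mem_coe.1 hf)))
          rwa [Finset.card_sdiff_of_subset hEX, hXs, hE] at this
        have hMc : (M c').card = n := hcard c'
        omega
      -- sub-lemma: a rainbow matching exposing f.1, for each candidate f
      have aug : ∀ f ∈ cand, ∃ Q, Rainbow M Q ∧ Q.card = m ∧
          Q.image (fun t => t.2.2) = Ys ∧ (∀ t ∈ Q, t.1 ∈ Cs ∨ t.1 ∈ cs) ∧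
          (∀ t ∈ Q, t.2.2 ∉ ys → t.2.1 = (sel t.2.2).2.1) ∧
          (∀ t ∈ Q, t.2.1 ≠ f.1) := by
        intro f hf
        have hf1 : f.1 ∉ Xs \ E := by
          have := (Finset.mem_filter.1 hf).2
          simpa using this
        by_cases hx : f.1 ∈ Xs
        · have hfE : f.1 ∈ E := by
            by_contra h
            exact hf1 (Finset.mem_sdiff.2 ⟨hx, h⟩)
          obtain ⟨y0, hy0, hy0e⟩ := Finset.mem_image.1 hfE
          obtain ⟨Q, hQr, hQc, hQY, hQcol, hQag, hQexp⟩ := hinv y0 hy0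
          exact ⟨Q, hQr, hQc, hQY, hQcol, hQag, fun t ht => hy0e ▸ hQexp t ht⟩
        · refine ⟨R, hR, hm, rfl, fun t ht => Or.inl (Finset.mem_image_of_mem _ ht), ?_, ?_⟩
          · intro t ht _
            rw [hselR t ht]
          · intro t ht heq
            exact hx (heq ▸ Finset.mem_image_of_mem (fun t => t.2.1) ht)
      -- every candidate lands in Ys
      have hY : ∀ f ∈ cand, f.2 ∈ Ys := by
        intro f hf
        by_contra hfy
        obtain ⟨Q, hQr, hQc, hQY, hQcol, _, hQexp⟩ := aug f hf
        have hfM : f ∈ M c' := hcandM hf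
        have hcol : ∀ t ∈ Q, t.1 ≠ c' := by
          intro t ht heq
          rcases hQcol t ht with h | h
          · exact hc'Cs (heq ▸ h)
          · exact hc'cs (heq ▸ h)
        have hsec : ∀ t ∈ Q, t.2.2 ≠ f.2 := by
          intro t ht heq
          apply hfy
          rw [← heq, ← hQY]
          exact Finset.mem_image_of_mem _ ht
        have hbig : Rainbow M (insert (c', f) Q) := rainbow_insert hQr hfM hcol hQexp hsec
        have hnotmem : (c', f) ∉ Q := fun h => hcol _ h rfl
        have := hmax _ hbig
        rw [Finset.card_insert_of_notMem hnotmem, hQc] at this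
        omega
      -- some candidate has a new second coordinate
      obtain ⟨f, hf, hfy⟩ : ∃ f ∈ cand, f.2 ∉ ys := by
        by_contra h
        push_neg at h
        have : cand.card ≤ ys.card := by
          apply Finset.card_le_card_of_injOn (fun f => f.2) (fun f hf => h f hf)
          exact (h2 c').mono (by
            intro f hf
            exact Finset.mem_coe.2 (hcandM (Finset.mem_coe.1 hf)))
        omega
      have hfY : f.2 ∈ Ys := hY f hf
      have hfM : f ∈ M c' := hcandM hf
      obtain ⟨Q, hQr, hQc, hQY, hQcol, hQag, hQexp⟩ := aug f hf
      have : f.2 ∈ Q.image (fun t => t.2.2) := by rw [hQY]; exact hfY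
      obtain ⟨q, hqQ, hq2⟩ := Finset.mem_image.1 this
      have hqsel : q.2.1 = (sel f.2).2.1 := by
        have := hQag q hqQ (by rw [hq2]; exact hfy)
        rw [this, hq2]
      have hfq : f.1 ≠ q.2.1 := fun h => hQexp q hqQ h.symm
      have hcolQ : ∀ t ∈ Q, t.1 ≠ c' := by
        intro t ht heq
        rcases hQcol t ht with h | h
        · exact hc'Cs (heq ▸ h)
        · exact hc'cs (heq ▸ h)
      set Q' : Finset (Fin (2 * n - 1) × α × α) := insert (c', f) (Q.erase q) with hQ'def
      have hQ'r : Rainbow M Q' := by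
        apply rainbow_insert (hQr.mono (Finset.erase_subset _ _)) hfM
        · exact fun t ht => hcolQ t (Finset.mem_of_mem_erase ht)
        · exact fun t ht => hQexp t (Finset.mem_of_mem_erase ht)
        · intro t ht heq
          apply (Finset.mem_erase.1 ht).1
          exact hQr.2.2.2 (Finset.mem_coe.2 (Finset.mem_of_mem_erase ht))
            (Finset.mem_coe.2 hqQ) (by show t.2.2 = q.2.2; rw [hq2]; exact heq)
      have hm1 : 1 ≤ m := by
        rw [← hQc]
        exact Finset.card_pos.2 ⟨q, hqQ⟩
      have hQ'c : Q'.card = m := by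
        rw [hQ'def, Finset.card_insert_of_notMem
          (fun h => hcolQ _ (Finset.mem_of_mem_erase h) rfl),
          Finset.card_erase_of_mem hqQ, hQc]
        omega
      have hQ'Y : Q'.image (fun t => t.2.2) = Ys := by
        apply Finset.Subset.antisymm
        · intro z hz
          obtain ⟨t, ht, rfl⟩ := Finset.mem_image.1 hz
          rcases Finset.mem_insert.1 ht with rfl | ht'
          · exact hfY
          · rw [← hQY]
            exact Finset.mem_image_of_mem _ (Finset.mem_of_mem_erase ht')
        · intro z hz
          rw [← hQY] at hz
          obtain ⟨t, ht, rfl⟩ := Finset.mem_image.1 hz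
          by_cases htq : t = q
          · subst htq
            rw [hq2]
            exact Finset.mem_image.2 ⟨(c', f), Finset.mem_insert_self _ _, rfl⟩
          · exact Finset.mem_image_of_mem _
              (Finset.mem_insert_of_mem (Finset.mem_erase.2 ⟨htq, ht⟩))
      refine ⟨insert c' cs, insert f.2 ys, ?_, ?_, ?_, ?_, ?_⟩
      · rw [Finset.card_insert_of_notMem hc'cs, hcsc]
      · rw [Finset.card_insert_of_notMem hfy, hysc]
      · intro c hc
        rcases Finset.mem_insert.1 hc with rfl | hc'
        · exact hc'Cs
        · exact hcsd c hc'
      · exact Finset.insert_subset hfY hysY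
      · intro y hy
        rcases Finset.mem_insert.1 hy with rfl | hy'
        · -- new vertex f.2 : use Q'
          refine ⟨Q', hQ'r, hQ'c, hQ'Y, ?_, ?_, ?_⟩
          · intro t ht
            rcases Finset.mem_insert.1 ht with rfl | ht'
            · exact Or.inr (Finset.mem_insert_self _ _)
            · rcases hQcol t (Finset.mem_of_mem_erase ht') with h | h
              · exact Or.inl h
              · exact Or.inr (Finset.mem_insert_of_mem h)
          · intro t ht htys
            rcases Finset.mem_insert.1 ht with rfl | ht'
            · exact absurd (Finset.mem_insert_self _ _) htys
            · exact hQag t (Finset.mem_of_mem_erase ht')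
                (fun h => htys (Finset.mem_insert_of_mem h))
          · intro t ht
            rw [← hqsel]
            rcases Finset.mem_insert.1 ht with rfl | ht'
            · exact hfq
            · intro heq
              apply (Finset.mem_erase.1 ht').1
              exact hQr.2.2.1 (Finset.mem_coe.2 (Finset.mem_of_mem_erase ht'))
                (Finset.mem_coe.2 hqQ) (show t.2.1 = q.2.1 from heq)
        · -- old vertex: reuse old Q
          obtain ⟨Q₀, h₀r, h₀c, h₀Y, h₀col, h₀ag, h₀exp⟩ := hinv y hy'
          refine ⟨Q₀, h₀r, h₀c, h₀Y, ?_, ?_, h₀exp⟩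
          · intro t ht
            rcases h₀col t ht with h | h
            · exact Or.inl h
            · exact Or.inr (Finset.mem_insert_of_mem h)
          · intro t ht htys
            exact h₀ag t ht (fun h => htys (Finset.mem_insert_of_mem h))
  obtain ⟨cs, ys, _, hysc, _, hysY, _⟩ := key (m + 1) le_rfl
  have := Finset.card_le_card hysY
  rw [hysc, hYs] at this
  omega

lemma rainbow_empty {N : ℕ} (M : Fin N → Finset (α × α)) : Rainbow M ∅ := by
  refine ⟨by simp, ?_, ?_, ?_⟩ <;> simp

lemma core [DecidableEq α] (n : ℕ) (M : Fin (2 * n - 1) → Finset (α × α))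
    (h1 : ∀ i, Set.InjOn (fun p : α × α => p.1) ↑(M i))
    (h2 : ∀ i, Set.InjOn (fun p : α × α => p.2) ↑(M i))
    (hcard : ∀ i, (M i).card = n) :
    ∃ R : Finset (Fin (2 * n - 1) × α × α), R.card = n ∧ Rainbow M R := by
  classical
  set U : Finset (Fin (2 * n - 1) × α × α) :=
    Finset.univ.biUnion (fun i => (M i).image (Prod.mk i)) with hUdef
  have hsubU : ∀ S, Rainbow M S → S ⊆ U := by
    intro S hS t ht
    refine Finset.mem_biUnion.2 ⟨t.1, Finset.mem_univ _, ?_⟩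
    exact Finset.mem_image.2 ⟨t.2, hS.1 t ht, rfl⟩
  set s := U.powerset.filter (fun S => Rainbow M S) with hsdef
  have hne : s.Nonempty :=
    ⟨∅, Finset.mem_filter.2 ⟨Finset.empty_mem_powerset _, rainbow_empty M⟩⟩
  obtain ⟨R, hRs, hRm⟩ := Finset.exists_mem_eq_sup s hne Finset.card
  have hR : Rainbow M R := (Finset.mem_filter.1 hRs).2
  have hmax : ∀ S, Rainbow M S → S.card ≤ R.card := by
    intro S hS
    rw [← hRm]
    exact Finset.le_sup (Finset.mem_filter.2 ⟨Finset.mem_powerset.2 (hsubU S hS), hS⟩)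
  by_cases h : n ≤ R.card
  · obtain ⟨B, hBR, hBc⟩ := Finset.exists_subset_card_eq h
    exact ⟨B, hBc, hR.mono hBR⟩
  · exact absurd (no_small_max h1 h2 hcard hR rfl hmax (by omega)) not_false

end BipDrisko


/-- `M` is a matching of `G`: a set of edges of `G` that are pairwise vertex-disjoint. -/
def IsGraphMatching {α : Type*} (G : SimpleGraph α) (M : Finset (Sym2 α)) : Prop :=
  (∀ e ∈ M, e ∈ G.edgeSet) ∧
    ∀ e ∈ M, ∀ f ∈ M, e ≠ f → ∀ v : α, v ∈ e → v ∉ f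

/-- **Aharoni–Berger (bipartite Drisko).** A collection of `2n-1` matchings of size `n`
in a bipartite graph has a partial rainbow matching of size `n`. -/
theorem bipartite_drisko {α : Type*} (G : SimpleGraph α) (hbip : G.Colorable 2)
    (n : ℕ) (M : Fin (2 * n - 1) → Finset (Sym2 α))
    (hmatch : ∀ i, IsGraphMatching G (M i)) (hcard : ∀ i, (M i).card = n) :
    ∃ (ι : Fin n → Fin (2 * n - 1)) (e : Fin n → Sym2 α),
      StrictMono ι ∧ (∀ j, e j ∈ M (ι j)) ∧
        ∀ j k, j ≠ k → ∀ v : α, v ∈ e j → v ∉ e k := by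
  classical
  obtain ⟨C⟩ := hbip
  set orient : Sym2 α → α × α := fun e => if C (Quot.out e).1 = 0 then Quot.out e
    else ((Quot.out e).2, (Quot.out e).1) with hordef
  have hfin2 : ∀ a b : Fin 2, a ≠ b → (a = 0 ∧ b = 1) ∨ (a = 1 ∧ b = 0) := by decide
  have hor : ∀ e ∈ G.edgeSet, Sym2.mk (orient e).1 (orient e).2 = e ∧
      C (orient e).1 = 0 ∧ C (orient e).2 = 1 := by
    intro e he
    have h0 : Sym2.mk (Quot.out e).1 (Quot.out e).2 = e := Quot.out_eq e
    have hadj : G.Adj (Quot.out e).1 (Quot.out e).2 :=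
      G.mem_edgeSet.1 (show s((Quot.out e).1, (Quot.out e).2) ∈ G.edgeSet from h0.symm ▸ he)
    have hne := C.valid hadj
    rcases hfin2 _ _ hne with ⟨ha, hb⟩ | ⟨ha, hb⟩
    · rw [hordef]
      simp only [if_pos ha]
      exact ⟨h0, ha, hb⟩
    · rw [hordef]
      have hno : ¬ C (Quot.out e).1 = 0 := by rw [ha]; decide
      simp only [if_neg hno]
      refine ⟨?_, hb, ha⟩
      rw [show Sym2.mk (Quot.out e).2 (Quot.out e).1
        = s((Quot.out e).2, (Quot.out e).1) from rfl, Sym2.eq_swap]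
      exact h0
  set M' : Fin (2 * n - 1) → Finset (α × α) := fun i => (M i).image orient with hM'def
  have hmemE : ∀ i, ∀ e ∈ M i, e ∈ G.edgeSet := fun i => (hmatch i).1
  have h1 : ∀ i, Set.InjOn (fun p : α × α => p.1) ↑(M' i) := by
    intro i p hp q hq hpq
    obtain ⟨e, he, rfl⟩ := Finset.mem_image.1 (Finset.mem_coe.1 hp)
    obtain ⟨f, hf, rfl⟩ := Finset.mem_image.1 (Finset.mem_coe.1 hq)
    have hef : e = f := by
      by_contra hne
      have hv1 : (orient e).1 ∈ e := by
        conv_lhs => rw [← (hor e (hmemE i e he)).1]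
        exact Sym2.mem_mk_left (orient e).1 (orient e).2
      have hv2 : (orient f).1 ∈ f := by
        conv_lhs => rw [← (hor f (hmemE i f hf)).1]
        exact Sym2.mem_mk_left (orient f).1 (orient f).2
      refine (hmatch i).2 e he f hf hne _ hv1 ?_
      rw [show (orient e).1 = (orient f).1 from hpq]
      exact hv2
    rw [hef]
  have h2 : ∀ i, Set.InjOn (fun p : α × α => p.2) ↑(M' i) := by
    intro i p hp q hq hpq
    obtain ⟨e, he, rfl⟩ := Finset.mem_image.1 (Finset.mem_coe.1 hp)
    obtain ⟨f, hf, rfl⟩ := Finset.mem_image.1 (Finset.mem_coe.1 hq)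
    have hef : e = f := by
      by_contra hne
      have hv1 : (orient e).2 ∈ e := by
        conv_lhs => rw [← (hor e (hmemE i e he)).1]
        exact Sym2.mem_mk_right (orient e).1 (orient e).2
      have hv2 : (orient f).2 ∈ f := by
        conv_lhs => rw [← (hor f (hmemE i f hf)).1]
        exact Sym2.mem_mk_right (orient f).1 (orient f).2
      refine (hmatch i).2 e he f hf hne _ hv1 ?_
      rw [show (orient e).2 = (orient f).2 from hpq]
      exact hv2
    rw [hef]
  have hcard' : ∀ i, (M' i).card = n := by
    intro i
    rw [hM'def]
    rw [Finset.card_image_of_injOn, hcard i]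
    intro e he f hf hef
    have h1 := (hor e (hmemE i e (Finset.mem_coe.1 he))).1
    have h2 := (hor f (hmemE i f (Finset.mem_coe.1 hf))).1
    rw [← h1, ← h2, hef]
  obtain ⟨R, hRcard, hRr⟩ := BipDrisko.core n M' h1 h2 hcard'
  set S : Finset (Fin (2 * n - 1)) := R.image Prod.fst with hSdef
  have hScard : S.card = n := by
    rw [hSdef, Finset.card_image_of_injOn hRr.2.1, hRcard]
  set ι : Fin n → Fin (2 * n - 1) := fun j => ((S.orderIsoOfFin hScard) j : Fin (2 * n - 1))
    with hιdef
  have hιmono : StrictMono ι := by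
    intro a b hab
    exact_mod_cast (S.orderIsoOfFin hScard).strictMono hab
  have hιS : ∀ j, ι j ∈ S := fun j => ((S.orderIsoOfFin hScard) j).2
  have hts : ∀ j, ∃ u, u ∈ R ∧ u.1 = ι j := by
    intro j
    obtain ⟨u, hu, h⟩ := Finset.mem_image.1 (hιS j)
    exact ⟨u, hu, h⟩
  choose t htR htι using hts
  have hts2 : ∀ j, ∃ E, E ∈ M (ι j) ∧ orient E = (t j).2 := by
    intro j
    have := hRr.1 (t j) (htR j)
    rw [htι j] at this
    exact Finset.mem_image.1 this
  choose ed hed hored using hts2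
  have hedS : ∀ j, Sym2.mk ((t j).2).1 ((t j).2).2 = ed j ∧ C ((t j).2).1 = 0 ∧ C ((t j).2).2 = 1 := by
    intro j
    have hE := hmemE (ι j) _ (hed j)
    have h := hor (ed j) hE
    rw [hored j] at h
    exact h
  have hmem : ∀ j, ∀ v : α, v ∈ ed j → v = ((t j).2).1 ∨ v = ((t j).2).2 := by
    intro j v hv
    rw [← (hedS j).1] at hv
    exact Sym2.mem_iff.1 hv
  have htne : ∀ j k : Fin n, j ≠ k → t j ≠ t k := by
    intro j k hjk h
    apply hjk
    apply hιmono.injective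
    rw [← htι j, ← htι k, h]
  refine ⟨ι, ed, hιmono, fun j => hed j, ?_⟩
  intro j k hjk v hvj hvk
  have hj := hmem j v hvj
  have hk := hmem k v hvk
  have hfst : ((t j).2).1 ≠ ((t k).2).1 := by
    intro h
    exact htne j k hjk (hRr.2.2.1 (Finset.mem_coe.2 (htR j)) (Finset.mem_coe.2 (htR k)) h)
  have hsnd : ((t j).2).2 ≠ ((t k).2).2 := by
    intro h
    exact htne j k hjk (hRr.2.2.2 (Finset.mem_coe.2 (htR j)) (Finset.mem_coe.2 (htR k)) h)
  have hcross1 : ((t j).2).1 ≠ ((t k).2).2 := by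
    intro h
    have h0 := (hedS j).2.1
    have h1 := (hedS k).2.2
    rw [h, h1] at h0
    exact absurd h0 (by decide)
  have hcross2 : ((t j).2).2 ≠ ((t k).2).1 := by
    intro h
    have h0 := (hedS j).2.2
    have h1 := (hedS k).2.1
    rw [h, h1] at h0
    exact absurd h0 (by decide)
  rcases hj with rfl | rfl <;> rcases hk with h | h
  · exact hfst h
  · exact hcross1 h
  · exact hcross2 h
  · exact hsnd h
end

section
/- Let X be an n × (2n-1) matrix in which every column contains each of the integers 1, …, n exactly once. Then there is a set of n entries of X, no two in the same row and no two in the same column, containing each of the integers 1, …, n. -/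
open Function

section Drisko

variable {n : ℕ} {X : Fin n → Fin (2 * n - 1) → Fin n}

/-- A partial rainbow matching of size `m`. -/
structure PRM (X : Fin n → Fin (2 * n - 1) → Fin n) (m : ℕ) where
  r : Fin m → Fin n
  c : Fin m → Fin (2 * n - 1)
  hr : Function.Injective r
  hc : Function.Injective c
  hv : Function.Injective fun t => X (r t) (c t)

lemma snoc_injective {α : Type*} {m : ℕ} {f : Fin m → α} {x : α}
    (hf : Function.Injective f) (hx : ∀ t, x ≠ f t) :
    Function.Injective (Fin.snoc f x : Fin (m + 1) → α) := by
  intro i j hij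
  induction i using Fin.lastCases with
  | last =>
    induction j using Fin.lastCases with
    | last => rfl
    | cast j =>
      rw [Fin.snoc_last, Fin.snoc_castSucc] at hij
      exact absurd hij (hx j)
  | cast i =>
    induction j using Fin.lastCases with
    | last =>
      rw [Fin.snoc_last, Fin.snoc_castSucc] at hij
      exact absurd hij.symm (hx i)
    | cast j =>
      rw [Fin.snoc_castSucc, Fin.snoc_castSucc] at hij
      exact congrArg Fin.castSucc (hf hij)

/-- The tree-path extraction function: follow parent pointers, with fuel. -/
def pathAux {k : ℕ} (par : Fin k → Option (Fin k)) : ℕ → Fin k → Finset (Fin k)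
  | 0, t => {t}
  | f + 1, t =>
    match par t with
    | none => {t}
    | some s => insert t (pathAux par f s)

lemma path_spec {n m k : ℕ} (par : Fin k → Option (Fin k)) (b : Fin k → Fin m)
    (row : Fin k → Fin n) (ρ : Fin m → Fin n) (a₀ : Fin n)
    (hρ : Function.Injective ρ) (hb : Function.Injective b) (ha₀ : ∀ u, a₀ ≠ ρ u)
    (hpar : ∀ t, (par t = none ∧ row t = a₀) ∨
      ∃ s, par t = some s ∧ (s : ℕ) < (t : ℕ) ∧ row t = ρ (b s)) :
    ∀ f (t : Fin k), (t : ℕ) ≤ f →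
      t ∈ pathAux par f t ∧
      (∀ p ∈ pathAux par f t, (p : ℕ) ≤ (t : ℕ)) ∧
      Set.InjOn row ↑(pathAux par f t) ∧
      (pathAux par f t).image row
        = insert a₀ (((pathAux par f t).erase t).image fun s => ρ (b s)) := by
  intro f
  induction f with
  | zero =>
    intro t ht
    have hrow : row t = a₀ := by
      rcases hpar t with ⟨_, h⟩ | ⟨s, _, hs, _⟩
      · exact h
      · omega
    simp only [pathAux]
    refine ⟨Finset.mem_singleton_self t, ?_, ?_, ?_⟩
    · intro p hp; rw [Finset.mem_singleton] at hp; omega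
    · intro x hx y hy _; simp at hx hy; rw [hx, hy]
    · simp [hrow]
  | succ f ih =>
    intro t ht
    rcases hpar t with ⟨hnone, hrow⟩ | ⟨s, hsome, hlt, hrow⟩
    · have : pathAux par (f + 1) t = {t} := by
        simp only [pathAux, hnone]
      rw [this]
      refine ⟨Finset.mem_singleton_self t, ?_, ?_, ?_⟩
      · intro p hp; rw [Finset.mem_singleton] at hp; omega
      · intro x hx y hy _; simp at hx hy; rw [hx, hy]
      · simp [hrow]
    · have hPdef : pathAux par (f + 1) t = insert t (pathAux par f s) := by
        simp only [pathAux, hsome]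
      have hs' : (s : ℕ) ≤ f := by omega
      obtain ⟨hmem, hle, hinj, himg⟩ := ih s hs'
      set Q := pathAux par f s with hQ
      have htQ : t ∉ Q := fun h => by have := hle t h; omega
      rw [hPdef]
      have hrownot : ∀ p ∈ Q, row t ≠ row p := by
        intro p hp heq
        have : row p ∈ Q.image row := Finset.mem_image_of_mem row hp
        rw [himg] at this
        rcases Finset.mem_insert.mp this with h | h
        · rw [← heq, hrow] at h; exact ha₀ (b s) h.symm
        · obtain ⟨p', hp', hpe⟩ := Finset.mem_image.mp h
          rw [← heq, hrow] at hpe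
          have : s = p' := hb (hρ hpe.symm)
          rw [this] at hp'
          exact (Finset.ne_of_mem_erase hp') rfl
      refine ⟨Finset.mem_insert_self t Q, ?_, ?_, ?_⟩
      · intro p hp
        rcases Finset.mem_insert.mp hp with h | h
        · omega
        · have := hle p h; omega
      · intro x hx y hy hxy
        simp only [Finset.coe_insert, Set.mem_insert_iff, Finset.mem_coe] at hx hy
        rcases hx with rfl | hx
        · rcases hy with rfl | hy
          · rfl
          · exact absurd hxy (hrownot y hy)
        · rcases hy with rfl | hy
          · exact absurd hxy.symm (hrownot x hx)
          · exact hinj hx hy hxy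
      · rw [Finset.image_insert, himg, hrow]
        rw [Finset.insert_comm]
        congr 1
        have h1 : (insert t Q).erase t = Q := Finset.erase_insert htQ
        rw [h1]
        rw [← Finset.image_insert (fun s => ρ (b s)) s (Q.erase s),
          Finset.insert_erase hmem]

lemma build {m k : ℕ} (R : PRM X m)
    (b : Fin k → Fin m) (col : Fin k → Fin (2 * n - 1)) (row : Fin k → Fin n)
    (hb : Function.Injective b)
    (hcolinj : Function.Injective col)
    (hfresh : ∀ t u, col t ≠ R.c u)
    (hval : ∀ t, X (row t) (col t) = X (R.r (b t)) (R.c (b t)))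
    (P : Finset (Fin k)) (a : Fin n) (c : Fin (2 * n - 1))
    (H1 : Set.InjOn row ↑P)
    (H2 : ∀ s ∈ P, row s ≠ a)
    (H3 : ∀ s ∈ P, ∀ u, row s = R.r u → ∃ p ∈ P, u = b p)
    (H5 : ∀ u, a = R.r u → ∃ p ∈ P, u = b p)
    (hcR : ∀ u, c ≠ R.c u) (hccol : ∀ t, c ≠ col t)
    (hnewv : ∀ u, X a c ≠ X (R.r u) (R.c u)) :
    Nonempty (PRM X (m + 1)) := by
  classical
  set g : Fin m → Fin n × Fin (2 * n - 1) := fun u =>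
    if h : ∃ p, p ∈ P ∧ b p = u then (row h.choose, col h.choose)
    else (R.r u, R.c u) with hg
  -- case analysis on g
  have hcases : ∀ u : Fin m, (∃ p, p ∈ P ∧ b p = u ∧ g u = (row p, col p)) ∨
      ((∀ p ∈ P, b p ≠ u) ∧ g u = (R.r u, R.c u)) := by
    intro u
    by_cases h : ∃ p, p ∈ P ∧ b p = u
    · left
      refine ⟨h.choose, h.choose_spec.1, h.choose_spec.2, ?_⟩
      rw [hg]; simp only [dif_pos h]
    · right
      exact ⟨fun p hp hbp => h ⟨p, hp, hbp⟩, by rw [hg]; simp only [dif_neg h]⟩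
  set ρ' : Fin m → Fin n := fun u => (g u).1 with hρ'
  set γ' : Fin m → Fin (2 * n - 1) := fun u => (g u).2 with hγ'
  -- values are preserved
  have hvg : ∀ u, X (ρ' u) (γ' u) = X (R.r u) (R.c u) := by
    intro u
    rcases hcases u with ⟨p, hp, hbp, hgu⟩ | ⟨_, hgu⟩
    · rw [hρ', hγ']; simp only [hgu]; rw [← hbp]; exact hval p
    · rw [hρ', hγ']; simp only [hgu]
  -- row injectivity
  have hρinj : Function.Injective ρ' := by
    intro u1 u2 h
    rcases hcases u1 with ⟨p1, hp1, hb1, hg1⟩ | ⟨hk1, hg1⟩ <;>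
      rcases hcases u2 with ⟨p2, hp2, hb2, hg2⟩ | ⟨hk2, hg2⟩
    · rw [hρ'] at h; simp only [hg1, hg2] at h
      rw [← hb1, ← hb2, H1 hp1 hp2 h]
    · rw [hρ'] at h; simp only [hg1, hg2] at h
      obtain ⟨p, hp, hu2⟩ := H3 p1 hp1 u2 h
      exact absurd hu2.symm (hk2 p hp)
    · rw [hρ'] at h; simp only [hg1, hg2] at h
      obtain ⟨p, hp, hu1⟩ := H3 p2 hp2 u1 h.symm
      exact absurd hu1.symm (hk1 p hp)
    · rw [hρ'] at h; simp only [hg1, hg2] at h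
      exact R.hr h
  -- col injectivity
  have hγinj : Function.Injective γ' := by
    intro u1 u2 h
    rcases hcases u1 with ⟨p1, hp1, hb1, hg1⟩ | ⟨hk1, hg1⟩ <;>
      rcases hcases u2 with ⟨p2, hp2, hb2, hg2⟩ | ⟨hk2, hg2⟩
    · rw [hγ'] at h; simp only [hg1, hg2] at h
      rw [← hb1, ← hb2, hcolinj h]
    · rw [hγ'] at h; simp only [hg1, hg2] at h
      exact absurd h (hfresh p1 u2)
    · rw [hγ'] at h; simp only [hg1, hg2] at h
      exact absurd h.symm (hfresh p2 u1)
    · rw [hγ'] at h; simp only [hg1, hg2] at h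
      exact R.hc h
  -- a is a fresh row
  have ha' : ∀ u, a ≠ ρ' u := by
    intro u h
    rcases hcases u with ⟨p, hp, hbp, hgu⟩ | ⟨hk, hgu⟩
    · rw [hρ'] at h; simp only [hgu] at h
      exact H2 p hp h.symm
    · rw [hρ'] at h; simp only [hgu] at h
      obtain ⟨p, hp, hu⟩ := H5 u h
      exact hk p hp hu.symm
  have hc' : ∀ u, c ≠ γ' u := by
    intro u h
    rcases hcases u with ⟨p, hp, hbp, hgu⟩ | ⟨hk, hgu⟩
    · rw [hγ'] at h; simp only [hgu] at h
      exact hccol p h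
    · rw [hγ'] at h; simp only [hgu] at h
      exact hcR u h
  refine ⟨⟨Fin.snoc ρ' a, Fin.snoc γ' c, snoc_injective hρinj ha',
    snoc_injective hγinj hc', ?_⟩⟩
  have hfun : (fun t : Fin (m + 1) => X ((Fin.snoc ρ' a : Fin (m+1) → Fin n) t) ((Fin.snoc γ' c : Fin (m+1) → Fin (2*n-1)) t))
      = Fin.snoc (fun u => X (ρ' u) (γ' u)) (X a c) := by
    funext t
    induction t using Fin.lastCases with
    | last => simp
    | cast i => simp
  rw [hfun]
  apply snoc_injective
  · have : (fun u => X (ρ' u) (γ' u)) = fun u => X (R.r u) (R.c u) := funext hvg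
    rw [this]; exact R.hv
  · intro u; rw [hvg u]; exact hnewv u

/-- Alternating-tree data of size `k` over the partial rainbow matching `R`,
rooted at the uncovered row `a₀`. -/
def TreeData (X : Fin n → Fin (2 * n - 1) → Fin n) (m : ℕ) (R : PRM X m)
    (a₀ : Fin n) (k : ℕ) : Prop :=
  ∃ (b : Fin k → Fin m) (col : Fin k → Fin (2 * n - 1)) (row : Fin k → Fin n)
    (par : Fin k → Option (Fin k)),
    Function.Injective b ∧ Function.Injective col ∧
    (∀ t u, col t ≠ R.c u) ∧
    (∀ t, X (row t) (col t) = X (R.r (b t)) (R.c (b t))) ∧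
    (∀ t, (par t = none ∧ row t = a₀) ∨
      ∃ s, par t = some s ∧ (s : ℕ) < (t : ℕ) ∧ row t = R.r (b s))

/-- Extend the tree by one node. -/
lemma extend {m k : ℕ} (R : PRM X m) (a₀ : Fin n)
    (b : Fin k → Fin m) (col : Fin k → Fin (2 * n - 1)) (row : Fin k → Fin n)
    (par : Fin k → Option (Fin k))
    (hb : Function.Injective b) (hcolinj : Function.Injective col)
    (hfresh : ∀ t u, col t ≠ R.c u)
    (hval : ∀ t, X (row t) (col t) = X (R.r (b t)) (R.c (b t)))
    (hpar : ∀ t, (par t = none ∧ row t = a₀) ∨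
      ∃ s, par t = some s ∧ (s : ℕ) < (t : ℕ) ∧ row t = R.r (b s))
    (a : Fin n) (c : Fin (2 * n - 1)) (pt : Option (Fin k))
    (hpt : (pt = none ∧ a = a₀) ∨ ∃ s, pt = some s ∧ a = R.r (b s))
    (u : Fin m) (hu : X a c = X (R.r u) (R.c u)) (hub : ∀ s, b s ≠ u)
    (hcR : ∀ v, c ≠ R.c v) (hccol : ∀ t, c ≠ col t) :
    TreeData X m R a₀ (k + 1) := by
  refine ⟨Fin.snoc b u, Fin.snoc col c, Fin.snoc row a,
    Fin.snoc (fun i => (par i).map Fin.castSucc) (pt.map Fin.castSucc),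
    ?_, ?_, ?_, ?_, ?_⟩
  · exact fun i j h => by
      have := snoc_injective hb (fun s h' => hub s h'.symm)
      exact this h
  · exact snoc_injective hcolinj hccol
  · intro t v
    induction t using Fin.lastCases with
    | last => rw [Fin.snoc_last]; exact hcR v
    | cast i => rw [Fin.snoc_castSucc]; exact hfresh i v
  · intro t
    induction t using Fin.lastCases with
    | last => simp only [Fin.snoc_last]; exact hu
    | cast i => simp only [Fin.snoc_castSucc]; exact hval i
  · intro t
    induction t using Fin.lastCases with
    | last =>
      rcases hpt with ⟨hn, ha⟩ | ⟨s, hs, ha⟩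
      · left
        simp only [Fin.snoc_last, hn, Option.map_none, ha]
        exact ⟨trivial, trivial⟩
      · right
        refine ⟨Fin.castSucc s, ?_, ?_, ?_⟩
        · simp only [Fin.snoc_last, hs, Option.map_some]
        · simp only [Fin.coe_castSucc, Fin.val_last]; exact s.isLt
        · simp only [Fin.snoc_last, Fin.snoc_castSucc]; exact ha
    | cast i =>
      rcases hpar i with ⟨hn, ha⟩ | ⟨s, hs, hlt, ha⟩
      · left
        simp only [Fin.snoc_castSucc, hn, Option.map_none, ha]
        exact ⟨trivial, trivial⟩
      · right
        refine ⟨Fin.castSucc s, ?_, ?_, ?_⟩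
        · simp only [Fin.snoc_castSucc, hs, Option.map_some]
        · simpa using hlt
        · simp only [Fin.snoc_castSucc]; exact ha

/-- Augment along the tree path: produce a bigger rainbow matching. -/
lemma augment {m k : ℕ} (R : PRM X m) (a₀ : Fin n) (ha₀ : ∀ u, a₀ ≠ R.r u)
    (b : Fin k → Fin m) (col : Fin k → Fin (2 * n - 1)) (row : Fin k → Fin n)
    (par : Fin k → Option (Fin k))
    (hb : Function.Injective b) (hcolinj : Function.Injective col)
    (hfresh : ∀ t u, col t ≠ R.c u)
    (hval : ∀ t, X (row t) (col t) = X (R.r (b t)) (R.c (b t)))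
    (hpar : ∀ t, (par t = none ∧ row t = a₀) ∨
      ∃ s, par t = some s ∧ (s : ℕ) < (t : ℕ) ∧ row t = R.r (b s))
    (a : Fin n) (c : Fin (2 * n - 1))
    (ha : a = a₀ ∨ ∃ s₀, a = R.r (b s₀))
    (hcR : ∀ v, c ≠ R.c v) (hccol : ∀ t, c ≠ col t)
    (hnewv : ∀ u, X a c ≠ X (R.r u) (R.c u)) :
    Nonempty (PRM X (m + 1)) := by
  rcases ha with rfl | ⟨s₀, rfl⟩
  · -- root case: empty path
    refine build R b col row hb hcolinj hfresh hval ∅ a c ?_ ?_ ?_ ?_ hcR hccol hnewv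
    · simp [Set.InjOn]
    · intro s hs; exact absurd hs (Finset.notMem_empty s)
    · intro s hs; exact absurd hs (Finset.notMem_empty s)
    · intro u h; exact absurd h (ha₀ u)
  · -- path from s₀
    obtain ⟨hmem, hle, hinj, himg⟩ :=
      path_spec par b row R.r a₀ R.hr hb ha₀ hpar (s₀ : ℕ) s₀ le_rfl
    set P := pathAux par (s₀ : ℕ) s₀ with hP
    have hrowmem : ∀ s ∈ P, row s = a₀ ∨ ∃ p ∈ P.erase s₀, row s = R.r (b p) := by
      intro s hs
      have : row s ∈ P.image row := Finset.mem_image_of_mem row hs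
      rw [himg] at this
      rcases Finset.mem_insert.mp this with h | h
      · exact Or.inl h
      · obtain ⟨p, hp, hpe⟩ := Finset.mem_image.mp h
        exact Or.inr ⟨p, hp, hpe.symm⟩
    refine build R b col row hb hcolinj hfresh hval P (R.r (b s₀)) c
      hinj ?_ ?_ ?_ hcR hccol hnewv
    · intro s hs heq
      rcases hrowmem s hs with h | ⟨p, hp, h⟩
      · rw [heq] at h; exact ha₀ (b s₀) h.symm
      · rw [heq] at h
        have : b s₀ = b p := R.hr h
        have : s₀ = p := hb this
        rw [this] at hp
        exact (Finset.ne_of_mem_erase hp) rfl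
    · intro s hs u heq
      rcases hrowmem s hs with h | ⟨p, hp, h⟩
      · rw [heq] at h; exact absurd h.symm (ha₀ u)
      · rw [heq] at h
        exact ⟨p, Finset.mem_of_mem_erase hp, R.hr h⟩
    · intro u h
      exact ⟨s₀, hmem, (R.hr h).symm⟩

/-- One step of the augmenting process: either we can already augment, or the
tree grows. -/
lemma step (hcol : ∀ j, Function.Bijective fun i => X i j)
    {m : ℕ} (hm : m < n) (R : PRM X m) (a₀ : Fin n) (ha₀ : ∀ u, a₀ ≠ R.r u)
    {k : ℕ} (hk : k ≤ m) (T : TreeData X m R a₀ k) :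
    Nonempty (PRM X (m + 1)) ∨ TreeData X m R a₀ (k + 1) := by
  classical
  obtain ⟨b, col, row, par, hb, hcolinj, hfresh, hval, hpar⟩ := T
  -- pick a fresh column
  set used : Finset (Fin (2 * n - 1)) :=
    (Finset.univ.image R.c) ∪ (Finset.univ.image col) with hused
  have hcard : used.card < 2 * n - 1 := by
    have h1 : used.card ≤ (Finset.univ.image R.c).card + (Finset.univ.image col).card :=
      Finset.card_union_le _ _
    have h2 : (Finset.univ.image R.c).card ≤ m := by
      refine le_trans (Finset.card_image_le) ?_
      simp
    have h3 : (Finset.univ.image col).card ≤ k := by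
      refine le_trans (Finset.card_image_le) ?_
      simp
    omega
  obtain ⟨c, hcused⟩ : ∃ c, c ∉ used := by
    by_contra h
    push_neg at h
    have : used = Finset.univ := Finset.eq_univ_iff_forall.mpr h
    rw [this, Finset.card_univ, Fintype.card_fin] at hcard
    omega
  have hcR : ∀ v, c ≠ R.c v := by
    intro v h
    exact hcused (Finset.mem_union_left _
      (Finset.mem_image.mpr ⟨v, Finset.mem_univ v, h.symm⟩))
  have hccol : ∀ t, c ≠ col t := by
    intro t h
    exact hcused (Finset.mem_union_right _
      (Finset.mem_image.mpr ⟨t, Finset.mem_univ t, h.symm⟩))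
  -- the tree rows
  set Trow : Fin (k + 1) → Fin n := Fin.cases a₀ (fun s => R.r (b s)) with hTrow
  have hTinj : Function.Injective Trow := by
    intro i j h
    rcases Fin.eq_zero_or_eq_succ i with rfl | ⟨i', rfl⟩ <;>
      rcases Fin.eq_zero_or_eq_succ j with rfl | ⟨j', rfl⟩
    · rfl
    · rw [hTrow] at h; simp only [Fin.cases_zero, Fin.cases_succ] at h
      exact absurd h (ha₀ (b j'))
    · rw [hTrow] at h; simp only [Fin.cases_zero, Fin.cases_succ] at h
      exact absurd h.symm (ha₀ (b i'))
    · rw [hTrow] at h; simp only [Fin.cases_succ] at h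
      rw [hb (R.hr h)]
  -- one of the k+1 tree rows gives a value outside the tree values
  have key : ∃ t : Fin (k + 1), ∀ s : Fin k,
      X (Trow t) c ≠ X (R.r (b s)) (R.c (b s)) := by
    by_contra h
    push_neg at h
    choose hfn hh using h
    have hfninj : Function.Injective hfn := by
      intro t1 t2 e
      have h1 : X (Trow t1) c = X (Trow t2) c := by rw [hh t1, hh t2, e]
      exact hTinj ((hcol c).injective h1)
    have := Fintype.card_le_of_injective hfn hfninj
    simp only [Fintype.card_fin] at this
    omega
  obtain ⟨t, hav⟩ := key
  rcases Fin.eq_zero_or_eq_succ t with rfl | ⟨s₀, rfl⟩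
  · -- row is the root a₀
    have hTa : Trow 0 = a₀ := by rw [hTrow]; simp
    rw [hTa] at hav
    by_cases hex : ∃ u, X a₀ c = X (R.r u) (R.c u)
    · obtain ⟨u, hu⟩ := hex
      have hub : ∀ s, b s ≠ u := by
        intro s e
        exact hav s (by rw [hu, e])
      exact Or.inr (extend R a₀ b col row par hb hcolinj hfresh hval hpar
        a₀ c none (Or.inl ⟨rfl, rfl⟩) u hu hub hcR hccol)
    · push_neg at hex
      exact Or.inl (augment R a₀ ha₀ b col row par hb hcolinj hfresh hval hpar
        a₀ c (Or.inl rfl) hcR hccol hex)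
  · -- row is R.r (b s₀)
    have hTa : Trow s₀.succ = R.r (b s₀) := by rw [hTrow]; simp
    rw [hTa] at hav
    by_cases hex : ∃ u, X (R.r (b s₀)) c = X (R.r u) (R.c u)
    · obtain ⟨u, hu⟩ := hex
      have hub : ∀ s, b s ≠ u := by
        intro s e
        exact hav s (by rw [hu, e])
      exact Or.inr (extend R a₀ b col row par hb hcolinj hfresh hval hpar
        (R.r (b s₀)) c (some s₀) (Or.inr ⟨s₀, rfl, rfl⟩) u hu hub hcR hccol)
    · push_neg at hex
      exact Or.inl (augment R a₀ ha₀ b col row par hb hcolinj hfresh hval hpar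
        (R.r (b s₀)) c (Or.inr ⟨s₀, rfl⟩) hcR hccol hex)

/-- The engine: iterate `step` until augmentation must happen. -/
lemma engine (hcol : ∀ j, Function.Bijective fun i => X i j)
    {m : ℕ} (hm : m < n) (R : PRM X m) (a₀ : Fin n) (ha₀ : ∀ u, a₀ ≠ R.r u) :
    ∀ d k, k + d = m → TreeData X m R a₀ k → Nonempty (PRM X (m + 1)) := by
  intro d
  induction d with
  | zero =>
    intro k hdk T
    rcases step hcol hm R a₀ ha₀ (by omega) T with h | T'
    · exact h
    · -- impossible: an injection Fin (m+1) → Fin m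
      exfalso
      obtain ⟨b, _, _, _, hb, _⟩ := T'
      have := Fintype.card_le_of_injective b hb
      simp only [Fintype.card_fin] at this
      omega
  | succ d ih =>
    intro k hdk T
    rcases step hcol hm R a₀ ha₀ (by omega) T with h | T'
    · exact h
    · exact ih (k + 1) (by omega) T'

lemma exists_prm (hcol : ∀ j, Function.Bijective fun i => X i j) :
    ∀ m, m ≤ n → Nonempty (PRM X m) := by
  intro m
  induction m with
  | zero =>
    intro _
    exact ⟨⟨Fin.elim0, Fin.elim0, fun t => t.elim0, fun t => t.elim0, fun t => t.elim0⟩⟩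
  | succ m ih =>
    intro hm
    obtain ⟨R⟩ := ih (by omega)
    -- find an uncovered row
    obtain ⟨a₀, ha₀⟩ : ∃ a₀, ∀ u, a₀ ≠ R.r u := by
      by_contra h
      push_neg at h
      have hsurj : Function.Surjective R.r := by
        intro a
        obtain ⟨u, hu⟩ := h a
        exact ⟨u, hu.symm⟩
      have := Fintype.card_le_of_surjective R.r hsurj
      simp only [Fintype.card_fin] at this
      omega
    exact engine hcol (by omega) R a₀ ha₀ m 0 (by omega)
      ⟨Fin.elim0, Fin.elim0, Fin.elim0, Fin.elim0,
        fun t => t.elim0, fun t => t.elim0, fun t => t.elim0,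
        fun t => t.elim0, fun t => t.elim0⟩

end Drisko

/-- **Drisko.** If `X` is an `n × (2n-1)` matrix (rows indexed by `Fin n`, columns by
`Fin (2n-1)`) in which every column contains each of the `n` values exactly once
(i.e. each column is a bijection `Fin n → Fin n`), then there is a diagonal — `n`
entries with distinct rows `r t` and distinct columns `c t` — containing every value. -/
theorem drisko (n : ℕ) (X : Fin n → Fin (2 * n - 1) → Fin n)
    (hcol : ∀ j, Function.Bijective fun i => X i j) :
    ∃ (r : Fin n → Fin n) (c : Fin n → Fin (2 * n - 1)),
      Function.Injective r ∧ Function.Injective c ∧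
        Function.Surjective fun t => X (r t) (c t) := by
  obtain ⟨R⟩ := exists_prm hcol n le_rfl
  exact ⟨R.r, R.c, R.hr, R.hc, Finite.surjective_of_injective R.hv⟩
end

section
/- Let M be a matroid with ground set V and let X be an n × (2n-1) matrix whose entries are elements of V such that each column of X forms an independent set of M of size n. Then there exists a diagonal of X of size n (n entries, no two in the same row or column) whose set of entries is independent in M. -/
open Set Function

namespace ChappellAux

variable {α : Type*} {M : Matroid α} {I S P A : Set α} {x y : α}

/-- If `S` is independent and contained in the closure of an independent set `I`,
then `S` is no larger than `I`. -/
lemma encard_le_of_indep_subset_closure (hI : M.Indep I) (hS : M.Indep S)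
    (hSI : S ⊆ M.closure I) : S.encard ≤ I.encard := by
  obtain ⟨J, hJ, hSJ⟩ := hS.subset_isBasis_of_subset hSI (M.closure_subset_ground I)
  calc S.encard ≤ J.encard := Set.encard_mono hSJ
    _ = I.encard := hJ.encard_eq_encard hI.isBasis_closure

/-- Key exchange lemma: if `x ∈ cl(I) \ cl(P)` with `P ⊆ I`, `I` independent and finite,
then some `y ∈ I \ P` can be exchanged for `x`. -/
lemma exists_swap_elt (hI : M.Indep I) (hfin : I.Finite)
    (hx : x ∈ M.closure I) (hxI : x ∉ I) (hP : P ⊆ I) (hxP : x ∉ M.closure P) :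
    ∃ y ∈ I \ P, M.Indep (insert x (I \ {y})) := by
  have hPi : M.Indep P := hI.subset hP
  have hxE : x ∈ M.E := M.mem_ground_of_mem_closure hx
  have hPx : M.Indep (insert x P) := by
    rw [hPi.insert_indep_iff_of_notMem (fun h => hxI (hP h))]
    exact ⟨hxE, hxP⟩
  have hIb : M.IsBasis I (insert x I) :=
    hI.isBasis_of_subset_of_subset_closure (subset_insert _ _)
      (insert_subset hx (M.subset_closure I hI.subset_ground))
  obtain ⟨J, hJ, hPJ⟩ := hPx.subset_isBasis_of_subset (insert_subset_insert hP)
      (insert_subset hxE hI.subset_ground)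
  have hcard : J.encard = I.encard := hJ.encard_eq_encard hIb
  have hxJ : x ∈ J := hPJ (mem_insert _ _)
  have hJI : J ⊆ insert x I := hJ.subset
  have hInsFin : (insert x I).Finite := hfin.insert x
  have hIJ : ¬ (I ⊆ J) := by
    intro hsub
    have h1 : insert x I ⊆ J := insert_subset hxJ hsub
    have hii : M.Indep (insert x I) := hJ.indep.subset h1
    rw [hI.insert_indep_iff_of_notMem hxI] at hii
    exact hii.2 hx
  obtain ⟨y, hyI, hyJ⟩ := not_subset.1 hIJ
  refine ⟨y, ⟨hyI, fun hyP => hyJ (hPJ (mem_insert_of_mem _ hyP))⟩, ?_⟩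
  have hJsub : J ⊆ insert x (I \ {y}) := by
    intro z hz
    rcases hJI hz with rfl | hzI
    · exact mem_insert _ _
    · exact mem_insert_of_mem _ ⟨hzI, fun hzy => hyJ (hzy ▸ hz)⟩
  have hfin2 : (insert x (I \ {y})).Finite := hfin.diff.insert x
  have hcard2 : (insert x (I \ {y})).encard ≤ J.encard := by
    rw [hcard, Set.encard_insert_of_notMem (fun h => hxI h.1)]
    rw [← Set.encard_diff_singleton_add_one hyI]
  have : J = insert x (I \ {y}) := hfin2.eq_of_subset_of_encard_le' hJsub hcard2
  rw [← this]; exact hJ.indep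

/-- Exchanging an element `y ∈ A` for `x ∈ cl(A)` preserves the closure. -/
lemma closure_exchange (hA : M.Indep A) (hy : y ∈ A) (hxA : x ∉ A)
    (hx : x ∈ M.closure A) (hind : M.Indep (insert x (A \ {y}))) :
    M.closure (insert x (A \ {y})) = M.closure A := by
  have h1 : insert x (A \ {y}) ⊆ M.closure A :=
    insert_subset hx (diff_subset.trans (M.subset_closure A hA.subset_ground))
  have hsub : M.closure (insert x (A \ {y})) ⊆ M.closure A :=
    M.closure_subset_closure_of_subset_closure h1
  have hyE : y ∈ M.E := hA.subset_ground hy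
  have hymem : y ∈ M.closure (insert x (A \ {y})) := by
    by_contra hyc
    have hynm : y ∉ insert x (A \ {y}) := by
      rintro (rfl | hmem)
      · exact hxA hy
      · exact hmem.2 rfl
    have hins : M.Indep (insert y (insert x (A \ {y}))) := by
      rw [hind.insert_indep_iff_of_notMem hynm]
      exact ⟨hyE, hyc⟩
    have heq : insert y (insert x (A \ {y})) = insert x A := by
      rw [insert_comm, Set.insert_diff_singleton, Set.insert_eq_self.2 hy]
    rw [heq, hA.insert_indep_iff_of_notMem hxA] at hins
    exact hins.2 hx
  have h2 : A ⊆ M.closure (insert x (A \ {y})) := by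
    intro z hz
    by_cases hzy : z = y
    · exact hzy ▸ hymem
    · exact M.subset_closure _ hind.subset_ground (mem_insert_of_mem _ ⟨hz, hzy⟩)
  exact hsub.antisymm (M.closure_subset_closure_of_subset_closure h2)


/-! ### The swap machinery -/

section Machinery

variable {n : ℕ}

/-- The statement we are trying to prove for the matrix `X` : an independent diagonal
of size `n`. -/
def NPID (M : Matroid α) (X : Fin n → Fin (2 * n - 1) → α) : Prop :=
  ∃ (r : Fin n → Fin n) (c : Fin n → Fin (2 * n - 1)),
    Function.Injective r ∧ Function.Injective c ∧
      Function.Injective (fun t => X (r t) (c t)) ∧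
      M.Indep (Set.range fun t => X (r t) (c t))

/-- A *state*: a partial independent diagonal of size `n-1`, with free row `f`,
where row `r ≠ f` uses column `g r`.  The value `g f` is junk. -/
structure St (M : Matroid α) (X : Fin n → Fin (2 * n - 1) → α) : Type _ where
  f : Fin n
  g : Fin n → Fin (2 * n - 1)
  inj : ∀ ⦃r₁ r₂ : Fin n⦄, r₁ ≠ f → r₂ ≠ f → g r₁ = g r₂ → r₁ = r₂
  einj : ∀ ⦃r₁ r₂ : Fin n⦄, r₁ ≠ f → r₂ ≠ f → X r₁ (g r₁) = X r₂ (g r₂) → r₁ = r₂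
  ind : M.Indep ((fun r => X r (g r)) '' {r | r ≠ f})

variable {M : Matroid α} {X : Fin n → Fin (2 * n - 1) → α}

/-- The matrix entry used by a state at row `r`. -/
def el (σ : St M X) (r : Fin n) : α := X r (σ.g r)

/-- The set of entries of a state. -/
def ES (σ : St M X) : Set α := el σ '' {r | r ≠ σ.f}

lemma ES_indep (σ : St M X) : M.Indep (ES σ) := σ.ind

lemma el_mem_ES {σ : St M X} {r : Fin n} (hr : r ≠ σ.f) : el σ r ∈ ES σ :=
  ⟨r, hr, rfl⟩

lemma mem_ES_iff {σ : St M X} {z : α} : z ∈ ES σ ↔ ∃ r, r ≠ σ.f ∧ el σ r = z := by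
  constructor
  · rintro ⟨r, hr, rfl⟩; exact ⟨r, hr, rfl⟩
  · rintro ⟨r, hr, rfl⟩; exact ⟨r, hr, rfl⟩

/-- Column `c` is unused by the state `σ`. -/
def Unused (σ : St M X) (c : Fin (2 * n - 1)) : Prop := ∀ r : Fin n, r ≠ σ.f → σ.g r ≠ c

/-- If there is no independent diagonal of size `n`, then the entry of any unused column
at the free row lies in the closure of the entries of the state. -/
lemma augment (hno : ¬ NPID M X)
    (hcol : ∀ j, Function.Injective (fun i => X i j) ∧ M.Indep (Set.range fun i => X i j))
    (σ : St M X) {c : Fin (2 * n - 1)} (hc : Unused σ c) :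
    X σ.f c ∈ M.closure (ES σ) := by
  classical
  by_contra hcl
  have hxE : X σ.f c ∈ M.E := (hcol c).2.subset_ground ⟨σ.f, rfl⟩
  have hES : M.Indep (ES σ) := σ.ind
  have hxES : X σ.f c ∉ ES σ := fun h => hcl (M.subset_closure _ hES.subset_ground h)
  have hins : M.Indep (insert (X σ.f c) (ES σ)) := by
    rw [hES.insert_indep_iff_of_notMem hxES]
    exact ⟨hxE, hcl⟩
  apply hno
  refine ⟨id, fun t => if t = σ.f then c else σ.g t, fun a b h => h, ?_, ?_, ?_⟩
  · -- column injectivity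
    intro t₁ t₂ h
    replace h : (if t₁ = σ.f then c else σ.g t₁) = (if t₂ = σ.f then c else σ.g t₂) := h
    by_cases h₁ : t₁ = σ.f <;> by_cases h₂ : t₂ = σ.f
    · rw [h₁, h₂]
    · rw [if_pos h₁, if_neg h₂] at h
      exact absurd h.symm (hc t₂ h₂)
    · rw [if_pos h₂, if_neg h₁] at h
      exact absurd h (hc t₁ h₁)
    · rw [if_neg h₁, if_neg h₂] at h
      exact σ.inj h₁ h₂ h
  · -- entry injectivity
    intro t₁ t₂ h
    replace h : X t₁ (if t₁ = σ.f then c else σ.g t₁) = X t₂ (if t₂ = σ.f then c else σ.g t₂) := h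
    by_cases h₁ : t₁ = σ.f <;> by_cases h₂ : t₂ = σ.f
    · rw [h₁, h₂]
    · rw [if_pos h₁, if_neg h₂, h₁] at h
      exact absurd ⟨t₂, h₂, h.symm⟩ hxES
    · rw [if_pos h₂, if_neg h₁, h₂] at h
      exact absurd ⟨t₁, h₁, h⟩ hxES
    · rw [if_neg h₁, if_neg h₂] at h
      exact σ.einj h₁ h₂ h
  · -- independence of the range
    have hrange : (Set.range fun t => X (id t) (if t = σ.f then c else σ.g t))
        = insert (X σ.f c) (ES σ) := by
      ext z
      constructor
      · rintro ⟨t, rfl⟩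
        show X t (if t = σ.f then c else σ.g t) ∈ _
        by_cases ht : t = σ.f
        · rw [if_pos ht, ht]; exact mem_insert _ _
        · rw [if_neg ht]; exact mem_insert_of_mem _ (el_mem_ES ht)
      · rintro (rfl | ⟨r, hr, rfl⟩)
        · exact ⟨σ.f, by show X σ.f (if σ.f = σ.f then c else _) = _; rw [if_pos rfl]⟩
        · exact ⟨r, by show X r (if r = σ.f then c else σ.g r) = el σ r; rw [if_neg hr]; rfl⟩
    show M.Indep (Set.range fun t => X (id t) (if t = σ.f then c else σ.g t))
    rw [hrange]
    exact hins

/-- The swap step relation: `τ` is obtained from `σ` by inserting an unused column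
(not in the reserved set `U`) at the free row of `σ` and evicting the cell at
row `τ.f`. The inserted column is `τ.g σ.f`. -/
def IsStep (U : Finset (Fin (2 * n - 1))) (σ τ : St M X) : Prop :=
  τ.g σ.f ∉ U ∧ Unused σ (τ.g σ.f) ∧ τ.f ≠ σ.f ∧
    ∀ r : Fin n, r ≠ σ.f → r ≠ τ.f → τ.g r = σ.g r

/-- Reachability via swap steps avoiding the reserved set `U`. -/
def Reach (U : Finset (Fin (2 * n - 1))) (σ₀ σ : St M X) : Prop :=
  Relation.ReflTransGen (IsStep U) σ₀ σ

lemma step_el {U : Finset (Fin (2 * n - 1))} {σ τ : St M X} (h : IsStep U σ τ)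
    {r : Fin n} (h1 : r ≠ σ.f) (h2 : r ≠ τ.f) : el τ r = el σ r := by
  unfold el; rw [h.2.2.2 r h1 h2]

/-- The effect of a step on the entry set. -/
lemma step_ES {U : Finset (Fin (2 * n - 1))} {σ τ : St M X} (h : IsStep U σ τ) :
    ES τ = insert (el τ σ.f) (ES σ \ {el σ τ.f}) := by
  have hff : τ.f ≠ σ.f := h.2.2.1
  ext z
  constructor
  · rintro ⟨r, hr, rfl⟩
    by_cases hrf : r = σ.f
    · rw [hrf]; exact mem_insert _ _
    · have hel : el τ r = el σ r := step_el h hrf hr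
      refine mem_insert_of_mem _ ⟨⟨r, hrf, hel.symm⟩, ?_⟩
      rw [hel]
      intro hz
      exact hr (σ.einj hrf hff hz)
  · rintro (rfl | ⟨⟨r, hr, rfl⟩, hz⟩)
    · exact ⟨σ.f, Ne.symm hff, rfl⟩
    · have hrτ : r ≠ τ.f := fun hrr => hz (by rw [hrr]; exact rfl)
      exact ⟨r, hrτ, step_el h hr hrτ⟩

/-- Either the inserted entry is genuinely new, or the evicted cell held precisely it. -/
lemma step_x_cases {U : Finset (Fin (2 * n - 1))} {σ τ : St M X} (h : IsStep U σ τ) :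
    el τ σ.f ∉ ES σ ∨ el σ τ.f = el τ σ.f := by
  by_cases hx : el τ σ.f ∈ ES σ
  · right
    obtain ⟨r₀, hr₀, hel⟩ := hx
    by_cases hrτ : r₀ = τ.f
    · rw [← hrτ]; exact hel
    · exfalso
      have h1 : el τ r₀ = el τ σ.f := by rw [step_el h hr₀ hrτ]; exact hel
      exact hr₀ (τ.einj hrτ (Ne.symm h.2.2.1) h1)
  · left; exact hx

/-- Constructing a swap step. -/
lemma exists_step {U : Finset (Fin (2 * n - 1))} (σ : St M X) {c : Fin (2 * n - 1)} {r : Fin n}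
    (hU : c ∉ U) (hc : Unused σ c) (hr : r ≠ σ.f)
    (h1 : M.Indep (insert (X σ.f c) (ES σ \ {el σ r})))
    (h2 : X σ.f c ∉ ES σ \ {el σ r}) :
    ∃ τ : St M X, IsStep U σ τ ∧ τ.f = r ∧ τ.g σ.f = c := by
  classical
  have himage : ((fun r' => X r' (Function.update σ.g σ.f c r')) '' {r' | r' ≠ r})
      = insert (X σ.f c) (ES σ \ {el σ r}) := by
    ext z
    constructor
    · rintro ⟨r', hr', rfl⟩
      show X r' (Function.update σ.g σ.f c r') ∈ _
      by_cases hrf : r' = σ.f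
      · subst hrf
        rw [Function.update_self]
        exact mem_insert _ _
      · rw [Function.update_of_ne hrf]
        exact mem_insert_of_mem _ ⟨el_mem_ES hrf, fun hz => hr' (σ.einj hrf hr hz)⟩
    · rintro (rfl | ⟨⟨r', hr', rfl⟩, hz⟩)
      · refine ⟨σ.f, Ne.symm hr, ?_⟩
        show X σ.f (Function.update σ.g σ.f c σ.f) = _
        rw [Function.update_self]
      · have hrr : r' ≠ r := fun hrr => hz (by rw [hrr]; exact rfl)
        refine ⟨r', hrr, ?_⟩
        show X r' (Function.update σ.g σ.f c r') = el σ r'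
        rw [Function.update_of_ne hr']
        rfl
  refine ⟨⟨r, Function.update σ.g σ.f c, ?_, ?_, ?_⟩, ⟨?_, ?_, hr, ?_⟩, rfl,
    by show Function.update σ.g σ.f c σ.f = c; rw [Function.update_self]⟩
  · -- column injectivity
    intro r₁ r₂ h₁ h₂ hgg
    by_cases e₁ : r₁ = σ.f <;> by_cases e₂ : r₂ = σ.f
    · rw [e₁, e₂]
    · rw [e₁, Function.update_self, Function.update_of_ne e₂] at hgg
      exact absurd hgg.symm (hc r₂ e₂)
    · rw [e₂, Function.update_self, Function.update_of_ne e₁] at hgg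
      exact absurd hgg (hc r₁ e₁)
    · rw [Function.update_of_ne e₁, Function.update_of_ne e₂] at hgg
      exact σ.inj e₁ e₂ hgg
  · -- entry injectivity
    intro r₁ r₂ h₁ h₂ hgg
    by_cases e₁ : r₁ = σ.f <;> by_cases e₂ : r₂ = σ.f
    · rw [e₁, e₂]
    · exfalso
      rw [e₁, Function.update_self, Function.update_of_ne e₂] at hgg
      exact h2 ⟨⟨r₂, e₂, hgg.symm⟩, fun hy => h₂ (σ.einj e₂ hr (hgg.symm.trans hy))⟩
    · exfalso
      rw [e₂, Function.update_self, Function.update_of_ne e₁] at hgg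
      exact h2 ⟨⟨r₁, e₁, hgg⟩, fun hy => h₁ (σ.einj e₁ hr (hgg.trans hy))⟩
    · rw [Function.update_of_ne e₁, Function.update_of_ne e₂] at hgg
      exact σ.einj e₁ e₂ hgg
  · -- independence
    show M.Indep ((fun r' => X r' (Function.update σ.g σ.f c r')) '' {r' | r' ≠ r})
    rw [himage]; exact h1
  · show Function.update σ.g σ.f c σ.f ∉ U
    rwa [Function.update_self]
  · show Unused σ (Function.update σ.g σ.f c σ.f)
    rwa [Function.update_self]
  · intro r' h₁ h₂
    show Function.update σ.g σ.f c r' = σ.g r'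
    rw [Function.update_of_ne h₁]


variable {U : Finset (Fin (2 * n - 1))} {σ₀ σ τ : St M X}

/-- Reserved columns stay unused along reachability. -/
lemma reach_unused (hU : ∀ c ∈ U, Unused σ₀ c) (h : Reach U σ₀ σ) :
    ∀ c ∈ U, Unused σ c := by
  induction h with
  | refl => exact hU
  | tail _ hstep ih =>
    rename_i τ' τ _
    intro c hcU r hrf
    by_cases hrr : r = τ'.f
    · rw [hrr]
      intro hcontra
      exact hstep.1 (hcontra ▸ hcU)
    · rw [hstep.2.2.2 r hrr hrf]
      exact ih c hcU r hrr

/-- Swap steps are reversible. -/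
lemma step_reverse (hU3 : ∀ c ∈ U, Unused σ c) (h : IsStep U σ τ) : IsStep U τ σ := by
  obtain ⟨hcU, hc, hff, hg⟩ := h
  refine ⟨?_, ?_, Ne.symm hff, fun r h₁ h₂ => (hg r h₂ h₁).symm⟩
  · -- σ.g τ.f ∉ U
    intro hmem
    exact hU3 _ hmem τ.f hff rfl
  · -- Unused τ (σ.g τ.f)
    intro r hrτ
    by_cases hrσ : r = σ.f
    · rw [hrσ]
      intro hcontra
      exact hc τ.f hff hcontra.symm
    · rw [hg r hrσ hrτ]
      intro hcontra
      exact hrτ (σ.inj hrσ hff hcontra)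

lemma reach_symm (hU : ∀ c ∈ U, Unused σ₀ c) (h : Reach U σ₀ σ) : Reach U σ σ₀ := by
  induction h with
  | refl => exact Relation.ReflTransGen.refl
  | tail hr hstep ih =>
    rename_i τ' τ
    exact Relation.ReflTransGen.head (step_reverse (reach_unused hU hr) hstep) ih

lemma reach_mono {U' : Finset (Fin (2 * n - 1))} (hsub : U' ⊆ U) (h : Reach U σ₀ σ) :
    Reach U' σ₀ σ := by
  induction h with
  | refl => exact Relation.ReflTransGen.refl
  | tail _ hstep ih =>
    exact ih.tail ⟨fun hmem => hstep.1 (hsub hmem), hstep.2⟩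

/-- The set of rows that occur as free rows of states reachable from `σ₀`. -/
def HS (U : Finset (Fin (2 * n - 1))) (σ₀ : St M X) : Set (Fin n) :=
  {ρ | ∃ σ : St M X, Reach U σ₀ σ ∧ σ.f = ρ}

lemma f_mem_HS (h : Reach U σ₀ σ) : σ.f ∈ HS U σ₀ := ⟨σ, h, rfl⟩

/-- The set of *active* entries of a state: entries in rows belonging to `HS`. -/
def AS (U : Finset (Fin (2 * n - 1))) (σ₀ : St M X) (σ : St M X) : Set α :=
  el σ '' (HS U σ₀ \ {σ.f})

lemma AS_subset_ES : AS U σ₀ σ ⊆ ES σ := by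
  rintro z ⟨r, hr, rfl⟩
  exact ⟨r, hr.2, rfl⟩

lemma AS_indep : M.Indep (AS U σ₀ σ) := σ.ind.subset AS_subset_ES

lemma AS_finite : (AS U σ₀ σ).Finite := (Set.toFinite (HS U σ₀ \ {σ.f})).image _

/-- If the inserted entry of a step out of a reachable state were not in the closure of
the active set, we could free a never-freed row, which is absurd by definition of `HS`. -/
lemma step_x_closure (hno : ¬ NPID M X)
    (hcol : ∀ j, Function.Injective (fun i => X i j) ∧ M.Indep (Set.range fun i => X i j))
    (hreach : Reach U σ₀ σ) (hstep : IsStep U σ τ) :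
    el τ σ.f ∈ M.closure (AS U σ₀ σ) := by
  by_contra hxcl
  rcases step_x_cases hstep with hxE | hyx
  · -- the new entry is not among the old entries : use the exchange lemma
    have hxcls : el τ σ.f ∈ M.closure (ES σ) := augment hno hcol σ hstep.2.1
    obtain ⟨y', hy', hind⟩ := exists_swap_elt σ.ind (Set.toFinite _) hxcls hxE
      (AS_subset_ES (σ₀ := σ₀) (U := U)) hxcl
    obtain ⟨r', hr'f, hr'el⟩ := hy'.1
    have hr'H : r' ∉ HS U σ₀ := fun hmem => hy'.2 ⟨r', ⟨hmem, hr'f⟩, hr'el⟩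
    rw [← hr'el] at hind
    obtain ⟨τ₂, hstep₂, hf₂, -⟩ := exists_step σ hstep.1 hstep.2.1 hr'f hind
      (fun hmem => hxE hmem.1)
    exact hr'H (hf₂ ▸ f_mem_HS (hreach.tail hstep₂))
  · -- the evicted entry equals the inserted entry, which therefore is active
    refine hxcl (M.subset_closure _ AS_indep.subset_ground ?_)
    exact ⟨τ.f, ⟨f_mem_HS (hreach.tail hstep), hstep.2.2.1⟩, hyx⟩

/-- The effect of a step on the active entry set. -/
lemma step_AS (hreach : Reach U σ₀ σ) (hstep : IsStep U σ τ) :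
    AS U σ₀ τ = insert (el τ σ.f) (AS U σ₀ σ \ {el σ τ.f}) := by
  have hff : τ.f ≠ σ.f := hstep.2.2.1
  have hσH : σ.f ∈ HS U σ₀ := f_mem_HS hreach
  have hτH : τ.f ∈ HS U σ₀ := f_mem_HS (hreach.tail hstep)
  ext z
  constructor
  · rintro ⟨r, ⟨hrH, hrf⟩, rfl⟩
    by_cases hrσ : r = σ.f
    · rw [hrσ]; exact mem_insert _ _
    · have hel : el τ r = el σ r := step_el hstep hrσ hrf
      refine mem_insert_of_mem _ ⟨⟨r, ⟨hrH, hrσ⟩, hel.symm⟩, ?_⟩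
      rw [hel]
      intro hz
      exact (hrf : r ≠ τ.f) (σ.einj hrσ hff hz)
  · rintro (rfl | ⟨⟨r, ⟨hrH, hrσ⟩, rfl⟩, hz⟩)
    · exact ⟨σ.f, ⟨hσH, Ne.symm hff⟩, rfl⟩
    · have hrτ : r ≠ τ.f := fun hrr => hz (by rw [hrr]; exact rfl)
      exact ⟨r, ⟨hrH, hrτ⟩, step_el hstep hrσ hrτ⟩

/-- Steps preserve the closure of the active entry set. -/
lemma step_AS_closure (hno : ¬ NPID M X)
    (hcol : ∀ j, Function.Injective (fun i => X i j) ∧ M.Indep (Set.range fun i => X i j))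
    (hreach : Reach U σ₀ σ) (hstep : IsStep U σ τ) :
    M.closure (AS U σ₀ τ) = M.closure (AS U σ₀ σ) := by
  have hx := step_x_closure hno hcol hreach hstep
  have hAS := step_AS hreach hstep
  rcases step_x_cases hstep with hxE | hyx
  · -- genuinely new entry : exchange preserves closure
    rw [hAS]
    refine closure_exchange AS_indep ?_ ?_ hx ?_
    · exact ⟨τ.f, ⟨f_mem_HS (hreach.tail hstep), hstep.2.2.1⟩, rfl⟩
    · exact fun hmem => hxE (AS_subset_ES hmem)
    · rw [← hAS]; exact AS_indep
  · -- trivial exchange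
    rw [hAS, ← hyx]
    have hyAS : el σ τ.f ∈ AS U σ₀ σ :=
      ⟨τ.f, ⟨f_mem_HS (hreach.tail hstep), hstep.2.2.1⟩, rfl⟩
    rw [Set.insert_diff_singleton, Set.insert_eq_self.2 hyAS]

/-- The closure of the active entry set is invariant along reachability. -/
lemma reach_AS_closure (hno : ¬ NPID M X)
    (hcol : ∀ j, Function.Injective (fun i => X i j) ∧ M.Indep (Set.range fun i => X i j))
    (hreach : Reach U σ₀ σ) :
    M.closure (AS U σ₀ σ) = M.closure (AS U σ₀ σ₀) := by
  induction hreach with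
  | refl => rfl
  | tail hr hstep ih =>
    rw [step_AS_closure hno hcol hr hstep, ih]


/-- The main induction: from a start state with a nonempty reserved set satisfying the
ledger inequality, we derive a contradiction. -/
lemma inner (hno : ¬ NPID M X)
    (hcol : ∀ j, Function.Injective (fun i => X i j) ∧ M.Indep (Set.range fun i => X i j)) :
    ∀ u : ℕ, ∀ (σ₀ : St M X) (U : Finset (Fin (2 * n - 1))), U.card = u → U.Nonempty →
      (∀ c ∈ U, Unused σ₀ c) → n + 1 ≤ u + (HS U σ₀).ncard → False := by
  intro u
  induction u using Nat.strong_induction_on with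
  | _ u IH =>
  intro σ₀ U hcard hUne hUun hledger
  by_cases hspend : ∃ σ : St M X, Reach U σ₀ σ ∧ ∃ c ∈ U, ∃ r : Fin n, r ∉ HS U σ₀ ∧
      r ≠ σ.f ∧ M.Indep (insert (X σ.f c) (ES σ \ {el σ r})) ∧ X σ.f c ∉ ES σ \ {el σ r}
  · -- CASE A : spend a reserved column to free a new row
    obtain ⟨σ, hreach, c₁, hcU, r, hrH, hrf, h1, h2⟩ := hspend
    have hcun : Unused σ c₁ := reach_unused hUun hreach c₁ hcU
    obtain ⟨τ, hstepτ, hfτ, hgτ⟩ :=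
      exists_step (U := U.erase c₁) σ (Finset.notMem_erase _ _) hcun hrf h1 h2
    have hHfin : (HS U σ₀).Finite := Set.toFinite _
    have hu2 : 2 ≤ u := by
      by_contra hlt
      have hu1 : u = 1 := by
        have := Finset.card_pos.mpr hUne
        omega
      have hn_le : n ≤ (HS U σ₀).ncard := by omega
      have huniv : HS U σ₀ = Set.univ := by
        apply Set.eq_of_subset_of_ncard_le (Set.subset_univ _) _ (Set.toFinite _)
        rwa [Set.ncard_univ, Nat.card_eq_fintype_card, Fintype.card_fin]
      exact hrH (huniv ▸ Set.mem_univ r)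
    have hsubU : U.erase c₁ ⊆ U := Finset.erase_subset _ _
    have hcard' : (U.erase c₁).card = u - 1 := by
      rw [Finset.card_erase_of_mem hcU, hcard]
    have hUne' : (U.erase c₁).Nonempty := Finset.card_pos.mp (by omega)
    have hUun' : ∀ c ∈ U.erase c₁, Unused τ c := by
      intro c hc r' hr'
      by_cases hr'' : r' = σ.f
      · rw [hr'', hgτ]
        exact (Finset.ne_of_mem_erase hc).symm
      · rw [hstepτ.2.2.2 r' hr'' hr']
        exact reach_unused hUun hreach c (hsubU hc) r' hr''
    have hHsub : insert r (HS U σ₀) ⊆ HS (U.erase c₁) τ := by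
      rintro ρ (rfl | hρ)
      · exact ⟨τ, Relation.ReflTransGen.refl, hfτ⟩
      · obtain ⟨σρ, hσρ, rfl⟩ := hρ
        refine ⟨σρ, ?_, rfl⟩
        refine Relation.ReflTransGen.head
          (step_reverse (fun c hc => reach_unused hUun hreach c (hsubU hc)) hstepτ) ?_
        exact reach_mono hsubU ((reach_symm hUun hreach).trans hσρ)
    have hncard : (HS U σ₀).ncard + 1 ≤ (HS (U.erase c₁) τ).ncard := by
      have hh1 : (insert r (HS U σ₀)).ncard = (HS U σ₀).ncard + 1 :=
        Set.ncard_insert_of_notMem hrH hHfin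
      have hh2 : (insert r (HS U σ₀)).ncard ≤ (HS (U.erase c₁) τ).ncard :=
        Set.ncard_le_ncard hHsub (Set.toFinite _)
      omega
    exact IH (u - 1) (by omega) τ (U.erase c₁) hcard' hUne' hUun' (by omega)
  · -- CASE B : every reserved column is blocked at every reachable free row
    push_neg at hspend
    obtain ⟨c₁, hcU⟩ := hUne
    have hkey : ∀ ρ ∈ HS U σ₀, X ρ c₁ ∈ M.closure (AS U σ₀ σ₀) := by
      rintro ρ ⟨σρ, hσρ, rfl⟩
      rw [← reach_AS_closure hno hcol hσρ]
      by_contra hxcl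
      have hcun : Unused σρ c₁ := reach_unused hUun hσρ c₁ hcU
      have hxES : X σρ.f c₁ ∈ M.closure (ES σρ) := augment hno hcol σρ hcun
      by_cases hxE : X σρ.f c₁ ∈ ES σρ
      · obtain ⟨r₀, hr₀f, hr₀el⟩ := hxE
        by_cases hr₀H : r₀ ∈ HS U σ₀
        · exact hxcl (M.subset_closure _ AS_indep.subset_ground ⟨r₀, ⟨hr₀H, hr₀f⟩, hr₀el⟩)
        · have h1 : M.Indep (insert (X σρ.f c₁) (ES σρ \ {el σρ r₀})) := by
            rw [← hr₀el, Set.insert_diff_singleton,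
              Set.insert_eq_self.2 (el_mem_ES hr₀f)]
            exact σρ.ind
          have h2 : X σρ.f c₁ ∉ ES σρ \ {el σρ r₀} :=
            fun hmem => hmem.2 (Set.mem_singleton_iff.mpr hr₀el.symm)
          exact h2 (hspend σρ hσρ c₁ hcU r₀ hr₀H hr₀f h1)
      · obtain ⟨y', hy', hind⟩ := exists_swap_elt σρ.ind (Set.toFinite _) hxES hxE
          AS_subset_ES hxcl
        obtain ⟨r', hr'f, hr'el⟩ := hy'.1
        have hr'H : r' ∉ HS U σ₀ := fun hmem => hy'.2 ⟨r', ⟨hmem, hr'f⟩, hr'el⟩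
        rw [← hr'el] at hind
        have h2 : X σρ.f c₁ ∉ ES σρ \ {el σρ r'} := fun hmem => hxE hmem.1
        exact h2 (hspend σρ hσρ c₁ hcU r' hr'H hr'f hind)
    have hSV : ((fun ρ => X ρ c₁) '' (HS U σ₀)) ⊆ M.closure (AS U σ₀ σ₀) := by
      rintro z ⟨ρ, hρ, rfl⟩
      exact hkey ρ hρ
    have hSind : M.Indep ((fun ρ => X ρ c₁) '' (HS U σ₀)) :=
      (hcol c₁).2.subset (by rintro z ⟨ρ, hρ, rfl⟩; exact ⟨ρ, rfl⟩)
    have hencard := encard_le_of_indep_subset_closure (AS_indep (σ := σ₀)) hSind hSV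
    have hScard : ((fun ρ => X ρ c₁) '' (HS U σ₀)).ncard = (HS U σ₀).ncard :=
      Set.ncard_image_of_injOn (fun a _ b _ h => (hcol c₁).1 h)
    have hAcard : (AS U σ₀ σ₀).ncard = (HS U σ₀).ncard - 1 := by
      have hh1 : (AS U σ₀ σ₀).ncard = (HS U σ₀ \ {σ₀.f}).ncard :=
        Set.ncard_image_of_injOn (fun a ha b hb h => σ₀.einj ha.2 hb.2 h)
      rw [hh1, Set.ncard_diff_singleton_of_mem (f_mem_HS Relation.ReflTransGen.refl)]
    have hHpos : 1 ≤ (HS U σ₀).ncard := by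
      have := (Set.ncard_pos (Set.toFinite _)).mpr
        ⟨σ₀.f, f_mem_HS (Relation.ReflTransGen.refl (r := IsStep U))⟩
      omega
    have hncard_le : ((fun ρ => X ρ c₁) '' (HS U σ₀)).ncard ≤ (AS U σ₀ σ₀).ncard := by
      have hSfin : ((fun ρ => X ρ c₁) '' (HS U σ₀)).Finite :=
        (Set.toFinite (HS U σ₀)).image _
      have hAfin : (AS U σ₀ σ₀).Finite := AS_finite
      rw [← hSfin.cast_ncard_eq, ← hAfin.cast_ncard_eq] at hencard
      exact_mod_cast hencard
    omega

end Machinery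

section Entry

variable {n : ℕ} {M : Matroid α} {X : Fin n → Fin (2 * n - 1) → α}

/-- Entry point: given any state (a partial independent diagonal of size `n-1`) and no
independent diagonal of size `n`, we get a contradiction. -/
lemma start_false (hno : ¬ NPID M X)
    (hcol : ∀ j, Function.Injective (fun i => X i j) ∧ M.Indep (Set.range fun i => X i j))
    (hn : 0 < n) (σ₀ : St M X) : False := by
  classical
  set used := (Finset.univ.filter (fun r : Fin n => r ≠ σ₀.f)).image σ₀.g with hused
  set U₀ := (Finset.univ : Finset (Fin (2 * n - 1))) \ used with hU₀
  have hUun : ∀ c ∈ U₀, Unused σ₀ c := by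
    intro c hc r hr hgc
    rw [hU₀, Finset.mem_sdiff] at hc
    exact hc.2 (Finset.mem_image.mpr ⟨r, Finset.mem_filter.mpr ⟨Finset.mem_univ _, hr⟩, hgc⟩)
  have husedcard : used.card ≤ n - 1 := by
    calc used.card ≤ (Finset.univ.filter (fun r : Fin n => r ≠ σ₀.f)).card :=
          Finset.card_image_le
      _ = n - 1 := by
          rw [Finset.filter_ne', Finset.card_erase_of_mem (Finset.mem_univ _),
            Finset.card_univ, Fintype.card_fin]
  have hcardU : n ≤ U₀.card := by
    rw [hU₀, Finset.card_sdiff_of_subset (Finset.subset_univ _), Finset.card_univ, Fintype.card_fin]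
    omega
  have hUne : U₀.Nonempty := Finset.card_pos.mp (by omega)
  have hHpos : 1 ≤ (HS U₀ σ₀).ncard := by
    have := (Set.ncard_pos (Set.toFinite _)).mpr
      ⟨σ₀.f, f_mem_HS (Relation.ReflTransGen.refl (r := IsStep U₀))⟩
    omega
  exact inner hno hcol U₀.card σ₀ U₀ rfl hUne hUun (by omega)

end Entry

/-- The main theorem, proved by strong induction on `n`. -/
theorem aux : ∀ (n : ℕ) (M : Matroid α) (X : Fin n → Fin (2 * n - 1) → α),
    (∀ j, Function.Injective (fun i => X i j) ∧ M.Indep (Set.range fun i => X i j)) →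
    NPID M X := by
  intro n
  induction n using Nat.strong_induction_on with
  | _ n IH =>
  intro M X hcol
  rcases Nat.eq_zero_or_pos n with rfl | hn
  · -- trivial case
    refine ⟨id, fun t => t.elim0, fun a b h => h, fun a b _ => a.elim0,
      fun a b _ => a.elim0, ?_⟩
    have hempty : (Set.range fun t : Fin 0 => X (id t) ((fun t : Fin 0 => t.elim0) t)) = ∅ :=
      Set.range_eq_empty _
    rw [hempty]
    exact M.empty_indep
  · obtain ⟨m, rfl⟩ := Nat.exists_eq_succ_of_ne_zero (Nat.pos_iff_ne_zero.mp hn)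
    have hm1 : m ≤ m + 1 := Nat.le_succ m
    have hle : 2 * m - 1 ≤ 2 * (m + 1) - 1 := by omega
    -- the sub-instance
    set Y : Fin m → Fin (2 * m - 1) → α :=
      fun i j => X (Fin.castLE hm1 i) (Fin.castLE hle j) with hY
    have hcolY : ∀ j, Function.Injective (fun i => Y i j) ∧
        M.Indep (Set.range fun i => Y i j) := by
      intro j
      constructor
      · intro a b h
        replace h : X (Fin.castLE hm1 a) (Fin.castLE hle j)
            = X (Fin.castLE hm1 b) (Fin.castLE hle j) := h
        exact Fin.castLE_injective hm1 ((hcol (Fin.castLE hle j)).1 h)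
      · refine (hcol (Fin.castLE hle j)).2.subset ?_
        rintro z ⟨i, rfl⟩
        exact ⟨Fin.castLE hm1 i, rfl⟩
    obtain ⟨r', c', hr'i, hc'i, he'i, hind'⟩ := IH m (Nat.lt_succ_self m) M Y hcolY
    -- build the initial state
    have hbij : Function.Bijective r' := Finite.injective_iff_bijective.mp hr'i
    set e : Fin m ≃ Fin m := Equiv.ofBijective r' hbij with he
    have hψ1 : ∀ x, r' (e.symm x) = x := fun x => e.apply_symm_apply x
    have hψ2 : ∀ t, e.symm (r' t) = t := fun t => e.symm_apply_apply t
    have hlast : ∀ ρ : Fin (m + 1), ρ ≠ Fin.last m → (ρ : ℕ) < m := by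
      intro ρ h
      rcases Nat.lt_succ_iff_lt_or_eq.mp ρ.isLt with h' | h'
      · exact h'
      · exact absurd (Fin.ext (h'.trans (Fin.val_last m).symm)) h
    set g₀ : Fin (m + 1) → Fin (2 * (m + 1) - 1) :=
      fun ρ => if h : (ρ : ℕ) < m then Fin.castLE hle (c' (e.symm ⟨(ρ : ℕ), h⟩))
        else ⟨0, by omega⟩ with hg₀
    have hg₀eq : ∀ (ρ : Fin (m + 1)) (hρ : (ρ : ℕ) < m),
        g₀ ρ = Fin.castLE hle (c' (e.symm ⟨(ρ : ℕ), hρ⟩)) := by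
      intro ρ hρ
      rw [hg₀]
      exact dif_pos hρ
    have hcast : ∀ (ρ : Fin (m + 1)) (hρ : (ρ : ℕ) < m),
        Fin.castLE hm1 (⟨(ρ : ℕ), hρ⟩ : Fin m) = ρ := fun ρ hρ => Fin.ext rfl
    have hent : ∀ (ρ : Fin (m + 1)) (hρ : (ρ : ℕ) < m),
        X ρ (g₀ ρ) = Y (r' (e.symm ⟨(ρ : ℕ), hρ⟩)) (c' (e.symm ⟨(ρ : ℕ), hρ⟩)) := by
      intro ρ hρ
      rw [hg₀eq ρ hρ, hψ1]
      show X ρ (Fin.castLE hle (c' (e.symm ⟨(ρ : ℕ), hρ⟩)))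
        = X (Fin.castLE hm1 ⟨(ρ : ℕ), hρ⟩) (Fin.castLE hle (c' (e.symm ⟨(ρ : ℕ), hρ⟩)))
      rw [hcast ρ hρ]
    have hσ₀ : ∃ _ : St M X, True := by
      refine ⟨⟨Fin.last m, g₀, ?_, ?_, ?_⟩, trivial⟩
      · -- column injectivity
        intro r₁ r₂ h₁ h₂ hgg
        have e₁ := hlast r₁ h₁
        have e₂ := hlast r₂ h₂
        rw [hg₀eq r₁ e₁, hg₀eq r₂ e₂] at hgg
        have h3 := e.symm.injective (hc'i (Fin.castLE_injective hle hgg))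
        have h4 : (r₁ : ℕ) = (r₂ : ℕ) := congrArg (fun z : Fin m => (z : ℕ)) h3
        exact Fin.ext h4
      · -- entry injectivity
        intro r₁ r₂ h₁ h₂ hgg
        have e₁ := hlast r₁ h₁
        have e₂ := hlast r₂ h₂
        rw [hent r₁ e₁, hent r₂ e₂] at hgg
        have h3 := e.symm.injective (he'i hgg)
        have h4 : (r₁ : ℕ) = (r₂ : ℕ) := congrArg (fun z : Fin m => (z : ℕ)) h3
        exact Fin.ext h4
      · -- independence
        have himg : ((fun r => X r (g₀ r)) '' {r | r ≠ Fin.last m})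
            = Set.range fun t => Y (r' t) (c' t) := by
          ext z
          constructor
          · rintro ⟨ρ, hρne, rfl⟩
            have hρ := hlast ρ hρne
            exact ⟨e.symm ⟨(ρ : ℕ), hρ⟩, (hent ρ hρ).symm⟩
          · rintro ⟨t, rfl⟩
            have hρlt : ((Fin.castLE hm1 (r' t) : Fin (m + 1)) : ℕ) < m := (r' t).isLt
            have hne : Fin.castLE hm1 (r' t) ≠ Fin.last m := by
              intro hcontra
              have h5 := congrArg Fin.val hcontra
              simp only [Fin.coe_castLE, Fin.val_last] at h5
              have h7 := (r' t).isLt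
              omega
            refine ⟨Fin.castLE hm1 (r' t), hne, ?_⟩
            show X (Fin.castLE hm1 (r' t)) (g₀ (Fin.castLE hm1 (r' t))) = Y (r' t) (c' t)
            rw [hent _ hρlt]
            have h6 : (⟨((Fin.castLE hm1 (r' t) : Fin (m + 1)) : ℕ), hρlt⟩ : Fin m) = r' t :=
              Fin.ext rfl
            rw [h6, hψ2]
        rw [himg]
        exact hind'
    obtain ⟨σ₀, -⟩ := hσ₀
    by_contra hno
    exact start_false hno hcol (Nat.succ_pos m) σ₀

end ChappellAux

/-- **Chappell.** Let `X` be an `n × (2n-1)` matrix with entries in the ground set of a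
matroid `M`, each column of which has distinct entries forming an independent set of
size `n`. Then there is a diagonal of size `n` (distinct rows, distinct columns,
distinct entries) whose set of entries is independent in `M`. -/
theorem chappell {α : Type*} (M : Matroid α) (n : ℕ)
    (X : Fin n → Fin (2 * n - 1) → α)
    (hcol : ∀ j, Function.Injective (fun i => X i j) ∧
      M.Indep (Set.range fun i => X i j)) :
    ∃ (r : Fin n → Fin n) (c : Fin n → Fin (2 * n - 1)),
      Function.Injective r ∧ Function.Injective c ∧
        Function.Injective (fun t => X (r t) (c t)) ∧
        M.Indep (Set.range fun t => X (r t) (c t)) :=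
  ChappellAux.aux n M X hcol
end

section
/- For even n, consider the complete bipartite graph with both sides equal to {1,…,n}, and for each 1 ≤ i ≤ n the perfect matching M_i = {(j, j+i mod n) : j ∈ {1,…,n}}. Then this collection of n matchings of size n has no rainbow matching of size n, i.e., there is no choice of n pairwise disjoint edges, one from each M_i. -/
lemma sum_zmod_ne_zero (n : ℕ) [NeZero n] (hn : 0 < n) (he : Even n) :
    (∑ i : ZMod n, i) ≠ 0 := by
  have h1 : (∑ i : ZMod n, i) = ∑ i ∈ Finset.range n, (i : ZMod n) := by
    refine Finset.sum_nbij' (fun i => ZMod.val i) (fun j => (j : ZMod n)) ?_ ?_ ?_ ?_ ?_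
    · intro a _; exact Finset.mem_range.mpr (ZMod.val_lt a)
    · intro a _; exact Finset.mem_univ _
    · intro a _; exact ZMod.natCast_rightInverse a
    · intro a ha; exact ZMod.val_natCast_of_lt (Finset.mem_range.mp ha)
    · intro a _; exact (ZMod.natCast_rightInverse a).symm
  obtain ⟨m, hmm⟩ := he
  rw [h1, ← Nat.cast_sum]
  intro h
  rw [ZMod.natCast_eq_zero_iff] at h
  obtain ⟨k, hk⟩ := h
  have hg := Finset.sum_range_id_mul_two n
  rw [hk] at hg
  have : k * 2 = n - 1 :=
    Nat.eq_of_mul_eq_mul_left hn (by rw [← mul_assoc]; exact hg)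
  omega

/-- **Sharpness example.** For `n` even and positive, in the complete bipartite graph on
`ZMod n × ZMod n` with the `n` matchings `M i = {(j, j + i) : j}`, there is no rainbow
matching of size `n`: there is no choice `f i` of a first coordinate for each `i`
(so the edge chosen from `M i` is `(f i, f i + i)`) making the edges pairwise disjoint,
i.e. making both coordinate maps injective. -/
theorem no_rainbow_matching_complete_bipartite (n : ℕ) (hn : 0 < n) (he : Even n) :
    ¬ ∃ f : ZMod n → ZMod n,
        Function.Injective f ∧ Function.Injective fun i => f i + i := by
  rintro ⟨f, hf, hg⟩
  haveI : NeZero n := ⟨hn.ne'⟩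
  have hS : (∑ i : ZMod n, f i) = ∑ i : ZMod n, i :=
    Fintype.sum_bijective f (Finite.injective_iff_bijective.mp hf) _ _ (fun _ => rfl)
  have hS2 : (∑ i : ZMod n, (f i + i)) = ∑ i : ZMod n, i :=
    Fintype.sum_bijective _ (Finite.injective_iff_bijective.mp hg) _ _ (fun _ => rfl)
  rw [Finset.sum_add_distrib, hS] at hS2
  have hz : (∑ i : ZMod n, i) = 0 :=
    add_left_cancel (a := ∑ i : ZMod n, i) (by rw [add_zero]; exact hS2)
  exact sum_zmod_ne_zero n hn he hz
end

section
/- Let C_{2n} be the cycle on 2n vertices, and let M and M' be its two perfect matchings. The collection of 2n-2 matchings consisting of n-1 copies of M and n-1 copies of M' has no partial rainbow matching of size n. Hence the bound 2n-1 in the bipartite Drisko theorem is sharp. -/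
private lemma par_aux (m : ℕ) (x y : ZMod (2 * m)) : 2 * x ≠ 2 * y + 1 := by
  intro h
  have h2 := congrArg (ZMod.castHom (dvd_mul_right 2 m) (ZMod 2)) h
  simp only [map_add, map_mul, map_one, map_ofNat] at h2
  have hz : (2 : ZMod 2) = 0 := rfl
  rw [hz, zero_mul, zero_mul, zero_add] at h2
  exact one_ne_zero h2.symm

set_option maxHeartbeats 2000000 in
/-- **Sharpness of the bipartite Drisko theorem.** Consider the cycle on `2n` vertices
`ZMod (2n)` (edges `{v, v+1}`), and its two perfect matchings
`M = {{2i, 2i+1}}` and `M' = {{2i+1, 2i+2}}`. The collection of `2n - 2` matchings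
consisting of `n-1` copies of `M` followed by `n-1` copies of `M'` has no partial
rainbow matching of size `n`. -/
theorem cycle_no_rainbow_matching (n : ℕ) (hn : 1 ≤ n)
    (M M' : Set (Sym2 (ZMod (2 * n))))
    (hM : M = {s | ∃ i : ZMod (2 * n), s = s(2 * i, 2 * i + 1)})
    (hM' : M' = {s | ∃ i : ZMod (2 * n), s = s(2 * i + 1, 2 * i + 2)})
    (A : Fin (2 * n - 2) → Set (Sym2 (ZMod (2 * n))))
    (hA : ∀ k : Fin (2 * n - 2), A k = if k.1 < n - 1 then M else M') :
    ¬ ∃ (ι : Fin n → Fin (2 * n - 2)) (e : Fin n → Sym2 (ZMod (2 * n))),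
        StrictMono ι ∧ (∀ j, e j ∈ A (ι j)) ∧
          ∀ j k, j ≠ k → ∀ v, v ∈ e j → v ∉ e k := by
  rintro ⟨ι, e, hmono, hmem, hdisj⟩
  rcases Nat.lt_or_ge n 2 with hn2 | hn2
  · have := (ι ⟨0, by omega⟩).isLt
    omega
  -- n ≥ 2 from now on
  haveI : NeZero (2 * n) := ⟨by omega⟩
  have h1 : (1 : ZMod (2 * n)) ≠ 0 := by
    intro h
    have hd : 2 * n ∣ 1 := by
      rwa [← Nat.cast_one, ZMod.natCast_eq_zero_iff] at h
    have := Nat.le_of_dvd one_pos hd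
    omega
  have h2 : (2 : ZMod (2 * n)) ≠ 0 := by
    intro h
    have hd : 2 * n ∣ 2 := by
      rwa [show ((2 : ZMod (2 * n)) = ((2 : ℕ) : ZMod (2 * n))) by push_cast; ring,
        ZMod.natCast_eq_zero_iff] at h
    have := Nat.le_of_dvd two_pos hd
    omega
  -- strict monotonicity bounds
  have mono_add : ∀ (m d : ℕ) (h : m + d < n),
      (ι ⟨m, by omega⟩).1 + d ≤ (ι ⟨m + d, h⟩).1 := by
    intro m d
    induction d with
    | zero => intro h; simp
    | succ d ih =>
      intro h
      have h' : m + d < n := by omega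
      have hih := ih h'
      have hlt : ι ⟨m + d, h'⟩ < ι ⟨m + (d + 1), h⟩ := by
        apply hmono
        rw [Fin.mk_lt_mk]
        omega
      rw [Fin.lt_def] at hlt
      omega
  have hn0 : 0 < n := by omega
  have hns : 0 + (n - 1) < n := by omega
  have hn1 : n - 1 < n := by omega
  have key : (ι ⟨0, hn0⟩).1 + (n - 1) ≤ (ι ⟨0 + (n - 1), hns⟩).1 :=
    mono_add 0 (n - 1) hns
  have hjl_eq : (⟨0 + (n - 1), hns⟩ : Fin n) = ⟨n - 1, hn1⟩ := by
    ext; simp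
  rw [hjl_eq] at key
  have hisLt := (ι ⟨n - 1, hn1⟩).isLt
  have hfirst : (ι ⟨0, hn0⟩).1 < n - 1 := by omega
  have hlast : ¬ (ι ⟨n - 1, hn1⟩).1 < n - 1 := by omega
  have hM0 : e ⟨0, hn0⟩ ∈ M := by
    have h := hmem ⟨0, hn0⟩
    rw [hA, if_pos hfirst] at h
    exact h
  have hMl : e ⟨n - 1, hn1⟩ ∈ M' := by
    have h := hmem ⟨n - 1, hn1⟩
    rw [hA, if_neg hlast] at h
    exact h
  -- every edge has the form s(a, a+1)
  have hedge : ∀ j, ∃ a : ZMod (2 * n), e j = s(a, a + 1) := by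
    intro j
    have h := hmem j
    rw [hA] at h
    split_ifs at h
    · rw [hM] at h
      obtain ⟨i, hi⟩ := h
      exact ⟨2 * i, hi⟩
    · rw [hM'] at h
      obtain ⟨i, hi⟩ := h
      exact ⟨2 * i + 1, by rw [hi, show (2 * i + 2 : ZMod (2 * n)) = (2 * i + 1) + 1 from by ring]⟩
  choose a ha using hedge
  have hmem_iff : ∀ j v, v ∈ e j ↔ v = a j ∨ v = a j + 1 := by
    intro j v; rw [ha j, Sym2.mem_iff]
  -- coverage: every vertex is in some edge
  set F : Fin n → Finset (ZMod (2 * n)) := fun j => {a j, a j + 1} with hF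
  have hFmem : ∀ j v, v ∈ F j ↔ v ∈ e j := by
    intro j v
    rw [hmem_iff]
    simp [hF]
  have hFcard : ∀ j, (F j).card = 2 := by
    intro j
    rw [hF]
    rw [Finset.card_insert_of_notMem, Finset.card_singleton]
    simp only [Finset.mem_singleton]
    intro h
    exact h1 (by linear_combination -h)
  have hbi : Finset.univ.biUnion F = Finset.univ := by
    apply Finset.eq_univ_of_card
    rw [Finset.card_biUnion]
    · simp only [hFcard, Finset.sum_const, Finset.card_univ, Fintype.card_fin, smul_eq_mul]
      rw [ZMod.card]
      ring
    · intro x _ y _ hxy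
      rw [Function.onFun, Finset.disjoint_left]
      intro v hv hvy
      exact hdisj x y hxy v ((hFmem x v).1 hv) ((hFmem y v).1 hvy)
  have cover : ∀ v : ZMod (2 * n), ∃ j, v ∈ e j := by
    intro v
    have hv : v ∈ Finset.univ.biUnion F := hbi ▸ Finset.mem_univ v
    obtain ⟨j, _, hj⟩ := Finset.mem_biUnion.1 hv
    exact ⟨j, (hFmem j v).1 hj⟩
  -- propagation step
  have step : ∀ c : ZMod (2 * n), (∃ j, e j = s(2 * c + 1, 2 * c + 2)) →
      (∃ j, e j = s(2 * (c + 1) + 1, 2 * (c + 1) + 2)) := by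
    rintro c ⟨j, hj⟩
    obtain ⟨k, hk⟩ := cover (2 * c + 3)
    have hjk : j ≠ k := by
      rintro rfl
      rw [hj, Sym2.mem_iff] at hk
      rcases hk with h | h
      · exact h2 (by linear_combination h)
      · exact h1 (by linear_combination h)
    have hmk := hmem k
    rw [hA] at hmk
    split_ifs at hmk
    · rw [hM] at hmk
      obtain ⟨d, hd⟩ := hmk
      rw [hd, Sym2.mem_iff] at hk
      rcases hk with h | h
      · exact absurd (show (2 * d : ZMod (2 * n)) = 2 * (c + 1) + 1 by linear_combination -h)
          (par_aux n d (c + 1))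
      · refine absurd (show (2 * c + 2 : ZMod (2 * n)) ∈ e k from ?_)
          (hdisj j k hjk _ (by rw [hj, Sym2.mem_iff]; right; rfl))
        rw [hd, Sym2.mem_iff]
        left
        linear_combination h
    · rw [hM'] at hmk
      obtain ⟨d, hd⟩ := hmk
      rw [hd, Sym2.mem_iff] at hk
      rcases hk with h | h
      · refine ⟨k, ?_⟩
        rw [hd, show (2 * d + 1 : ZMod (2 * n)) = 2 * (c + 1) + 1 by linear_combination -h,
          show (2 * d + 2 : ZMod (2 * n)) = 2 * (c + 1) + 2 by linear_combination -h]
      · exact absurd (show (2 * (d + 1) : ZMod (2 * n)) = 2 * (c + 1) + 1 by linear_combination -h)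
          (par_aux n (d + 1) (c + 1))
  -- the matching contains an M'-edge
  rw [hM'] at hMl
  obtain ⟨c0, hc0⟩ := hMl
  have allm : ∀ m : ℕ, ∃ j, e j = s(2 * (c0 + (m : ZMod (2 * n))) + 1, 2 * (c0 + m) + 2) := by
    intro m
    induction m with
    | zero => simp only [Nat.cast_zero, add_zero]; exact ⟨_, hc0⟩
    | succ m ih =>
      simp only [Nat.cast_add, Nat.cast_one, ← add_assoc]
      exact step _ ih
  have allc : ∀ c : ZMod (2 * n), ∃ j, e j = s(2 * c + 1, 2 * c + 2) := by
    intro c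
    have h := allm (c - c0).val
    rwa [ZMod.natCast_val, ZMod.cast_id, show c0 + (c - c0) = c from by ring] at h
  -- the matching contains an M-edge: contradiction
  rw [hM] at hM0
  obtain ⟨b, hb⟩ := hM0
  obtain ⟨k, hk⟩ := allc b
  have hne : (⟨0, hn0⟩ : Fin n) ≠ k := by
    rintro rfl
    have hh : (2 * b : ZMod (2 * n)) ∈ e ⟨0, hn0⟩ := by
      rw [hb, Sym2.mem_iff]; left; rfl
    rw [hk, Sym2.mem_iff] at hh
    rcases hh with h | h
    · exact h1 (by linear_combination -h)
    · exact h2 (by linear_combination -h)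
  exact hdisj _ k hne (2 * b + 1) (by rw [hb, Sym2.mem_iff]; right; rfl)
    (by rw [hk, Sym2.mem_iff]; left; rfl)
end

section
/- Let N be a matroid with circuit set Circ(N), viewed as a hypergraph on the ground set V. Let x ∈ V, let C_1, …, C_r be all circuits containing x, and fix i ≤ r. Let H be the hypergraph whose edges are all circuits of N, and let H' be obtained from H by deleting the edges C_1, …, C_{i−1} and then contracting C_i. Then the independence complexes satisfy I(H') = I(H/C_i); that is, a set S ⊆ V ∖ C_i contains no set of the form C_j ∖ C_i (j < i) other than via circuits, because whenever C_j ∖ C_i ⊆ S with j < i there is a circuit C' of N with x ∉ C', C' ⊆ C_i ∪ C_j, and C' ∖ C_i ⊆ C_j ∖ C_i ⊆ S. -/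
open Set

/-- `C` is a circuit of the matroid `M`: a minimal dependent subset of the ground set. -/
def Matroid.IsCircuitSet {α : Type*} (M : Matroid α) (C : Set α) : Prop :=
  C ⊆ M.E ∧ ¬ M.Indep C ∧ ∀ D : Set α, D ⊂ C → M.Indep D

/-- Every dependent set contains a circuit (fundamental circuit construction). -/
lemma Matroid.Dep.exists_isCircuitSet_subset {α : Type*} {M : Matroid α} {X : Set α}
    (hX : M.Dep X) : ∃ C ⊆ X, M.IsCircuitSet C := by
  obtain ⟨I, hI⟩ := M.exists_isBasis' X
  have hIX : I ⊆ X := hI.subset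
  have hInd : M.Indep I := hI.indep
  have hIne : I ≠ X := by rintro rfl; exact hX.1 hInd
  obtain ⟨e, heX, heI⟩ : ∃ e ∈ X, e ∉ I := by
    rcases Set.exists_of_ssubset (hIX.ssubset_of_ne hIne) with ⟨e, he, he'⟩
    exact ⟨e, he, he'⟩
  have heE : e ∈ M.E := hX.2 heX
  have hecl : e ∈ M.closure I := by
    rw [hI.closure_eq_closure]
    exact M.mem_closure_of_mem' heX heE
  -- fundamental circuit
  set J : Set α := {y ∈ I | e ∉ M.closure (I \ {y})} with hJ
  have hJI : J ⊆ I := fun y hy => hy.1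
  have hJind : M.Indep J := hInd.subset hJI
  have heJ : e ∉ J := fun h => heI (hJI h)
  -- e ∈ closure J
  have heclJ : e ∈ M.closure J := by
    by_cases hne : (I \ J).Nonempty
    · have hset : {(I \ {y}) | y ∈ I \ J}.Nonempty := by
        obtain ⟨y, hy⟩ := hne; exact ⟨I \ {y}, y, hy, rfl⟩
      have hsub : ∀ T ∈ {(I \ {y}) | y ∈ I \ J}, T ⊆ I := by
        rintro T ⟨y, _, rfl⟩; exact Set.diff_subset
      have hcl := hInd.closure_sInter_eq_biInter_closure_of_forall_subset hset hsub
      have hsInter : ⋂₀ {(I \ {y}) | y ∈ I \ J} = J := by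
        apply Set.Subset.antisymm
        · intro z hz
          by_contra hzJ
          by_cases hzI : z ∈ I
          · have hzIJ : z ∈ I \ J := ⟨hzI, hzJ⟩
            have := hz (I \ {z}) ⟨z, hzIJ, rfl⟩
            exact this.2 rfl
          · obtain ⟨y, hy⟩ := hne
            have := hz (I \ {y}) ⟨y, hy, rfl⟩
            exact hzI this.1
        · intro z hzJ
          rintro T ⟨y, hy, rfl⟩
          refine ⟨hJI hzJ, ?_⟩
          rintro rfl
          exact hy.2 hzJ
      rw [hsInter] at hcl
      rw [hcl, Set.mem_iInter₂]
      rintro T ⟨y, hy, rfl⟩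
      by_contra h
      exact hy.2 ⟨hy.1, h⟩
    · rw [Set.not_nonempty_iff_eq_empty, Set.diff_eq_empty] at hne
      have : J = I := Set.Subset.antisymm hJI hne
      rw [this]; exact hecl
  refine ⟨insert e J, Set.insert_subset heX (hJI.trans hIX), ?_, ?_, ?_⟩
  · exact Set.insert_subset heE ((hJI.trans hIX).trans hX.2)
  · intro hind
    exact (hJind.insert_dep_iff.2 ⟨heclJ, heJ⟩).1 hind
  · intro D hD
    -- D ⊂ insert e J; find z ∈ insert e J \ D, show (insert e J) \ {z} indep
    obtain ⟨z, hzC, hzD⟩ := Set.exists_of_ssubset hD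
    have hDsub : D ⊆ insert e J \ {z} := by
      intro w hw
      refine ⟨hD.1 hw, ?_⟩
      rintro rfl; exact hzD hw
    suffices h : M.Indep (insert e J \ {z}) from h.subset hDsub
    rcases hzC with rfl | hzJ
    · have : insert z J \ {z} ⊆ J := by
        intro w hw
        rcases hw.1 with rfl | h
        · exact absurd rfl hw.2
        · exact h
      exact hJind.subset this
    · have hzI : z ∈ I := hJI hzJ
      have hzcl : e ∉ M.closure (I \ {z}) := hzJ.2
      have hsub : insert e J \ {z} ⊆ insert e (J \ {z}) := by
        intro w hw
        rcases hw.1 with rfl | h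
        · exact Set.mem_insert _ _
        · exact Set.mem_insert_of_mem _ ⟨h, hw.2⟩
      have hJz : M.Indep (J \ {z}) := hJind.subset Set.diff_subset
      have heJz : e ∉ J \ {z} := fun h => heJ h.1
      have hecl' : e ∉ M.closure (J \ {z}) :=
        fun h => hzcl (M.closure_subset_closure
          (Set.diff_subset_diff_left hJI) h)
      have : M.Indep (insert e (J \ {z})) := by
        rw [Matroid.Indep.insert_indep_iff_of_notMem hJz heJz]
        exact ⟨heE, hecl'⟩
      exact this.subset hsub

/-- Circuit elimination: if `C₁ ≠ C₂` are circuits and `x ∈ C₁ ∩ C₂`, there is a circuit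
contained in `(C₁ ∪ C₂) \ {x}`. -/
lemma Matroid.circuit_elimination {α : Type*} {M : Matroid α} {C₁ C₂ : Set α} {x : α}
    (h₁ : M.IsCircuitSet C₁) (h₂ : M.IsCircuitSet C₂) (hne : C₁ ≠ C₂)
    (hx₁ : x ∈ C₁) (hx₂ : x ∈ C₂) :
    ∃ C' ⊆ (C₁ ∪ C₂) \ {x}, M.IsCircuitSet C' := by
  obtain ⟨hE₁, hd₁, hmin₁⟩ := h₁
  obtain ⟨hE₂, hd₂, hmin₂⟩ := h₂
  have hDep : M.Dep ((C₁ ∪ C₂) \ {x}) := by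
    constructor
    swap
    · exact Set.diff_subset.trans (Set.union_subset hE₁ hE₂)
    intro hind
    -- x ∈ closure (Cᵢ \ {x})
    have hcl : ∀ (D : Set α), D ⊆ M.E → ¬ M.Indep D → x ∈ D →
        (∀ E : Set α, E ⊂ D → M.Indep E) → x ∈ M.closure (D \ {x}) := by
      intro D hDE hDd hxD hDmin
      have hind' : M.Indep (D \ {x}) :=
        hDmin _ (Set.sdiff_singleton_ssubset.2 hxD)
      have : M.Dep (insert x (D \ {x})) := by
        rw [Set.insert_diff_singleton, Set.insert_eq_of_mem hxD]
        exact ⟨hDd, hDE⟩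
      exact (hind'.insert_dep_iff.1 this).1
    have hx1cl : x ∈ M.closure (C₁ \ {x}) := hcl C₁ hE₁ hd₁ hx₁ hmin₁
    have hx2cl : x ∈ M.closure (C₂ \ {x}) := hcl C₂ hE₂ hd₂ hx₂ hmin₂
    -- pick f ∈ C₂ \ C₁
    have hfne : (C₂ \ C₁).Nonempty := by
      rw [Set.sdiff_nonempty]
      intro hsub
      rcases hsub.ssubset_of_ne (Ne.symm hne) with hss
      exact hd₂ (hmin₁ _ hss)
    obtain ⟨f, hfC₂, hfC₁⟩ := hfne
    have hfx : f ≠ x := by rintro rfl; exact hfC₁ hx₁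
    -- f ∈ closure (C₂ \ {f})
    have hfcl : f ∈ M.closure (C₂ \ {f}) := by
      have hind' : M.Indep (C₂ \ {f}) :=
        hmin₂ _ (Set.sdiff_singleton_ssubset.2 hfC₂)
      have hdep : M.Dep (insert f (C₂ \ {f})) := by
        rw [Set.insert_diff_singleton, Set.insert_eq_of_mem hfC₂]
        exact ⟨hd₂, hE₂⟩
      exact (hind'.insert_dep_iff.1 hdep).1
    set D' : Set α := ((C₁ ∪ C₂) \ {x}) \ {f} with hD'
    have hC₁sub : C₁ \ {x} ⊆ D' := by
      intro w hw
      exact ⟨⟨Or.inl hw.1, hw.2⟩, fun h => hfC₁ (h ▸ hw.1)⟩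
    have hxD' : x ∈ M.closure D' := M.closure_subset_closure hC₁sub hx1cl
    have hC₂sub : C₂ \ {f} ⊆ insert x D' := by
      intro w hw
      by_cases hwx : w = x
      · exact hwx ▸ Set.mem_insert _ _
      · exact Set.mem_insert_of_mem _ ⟨⟨Or.inr hw.1, hwx⟩, hw.2⟩
    have hfclD : f ∈ M.closure D' := by
      have h1 : f ∈ M.closure (insert x D') :=
        M.closure_subset_closure hC₂sub hfcl
      rwa [closure_insert_eq_of_mem_closure hxD'] at h1
    have hfmem : f ∈ (C₁ ∪ C₂) \ {x} := ⟨Or.inr hfC₂, hfx⟩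
    exact Matroid.Indep.notMem_closure_sdiff_of_mem hind hfmem hfclD
  obtain ⟨C', hsub, hC'⟩ := hDep.exists_isCircuitSet_subset
  exact ⟨C', hsub, hC'⟩

/-- Let `N` be a matroid, `x` an element, and `C 0, …, C (r-1)` an enumeration of all
circuits of `N` containing `x`; fix `i`. Let `H` be the hypergraph of all circuits of
`N`, and let `H'` be obtained from `H` by deleting the edges `C 0, …, C (i-1)` and then
contracting `C i`. Then `I(H') = I(H / C i)`: a subset `S` of `V \ C i` contains no
edge `D \ C i` of the full contraction `H / C i` iff it contains no edge of `H'`,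
because (by strong circuit elimination) whenever `(C j) \ C i ⊆ S` for some `j < i`
there is a circuit `C'` of `N` with `x ∉ C'`, `C' ⊆ C i ∪ C j` and
`C' \ C i ⊆ (C j) \ C i ⊆ S`. -/
theorem indep_complex_delete_then_contract {α : Type*} (N : Matroid α) (x : α)
    (r : ℕ) (C : Fin r → Set α) (hCinj : Function.Injective C)
    (hCcirc : ∀ j, N.IsCircuitSet (C j) ∧ x ∈ C j)
    (hCall : ∀ D : Set α, N.IsCircuitSet D → x ∈ D → ∃ j, D = C j)
    (i : Fin r) :
    {S : Set α | S ⊆ N.E \ C i ∧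
        ∀ D : Set α, N.IsCircuitSet D → (∀ j : Fin r, j < i → D ≠ C j) →
          ¬ D ⊆ C i → ¬ D \ C i ⊆ S}
      = {S : Set α | S ⊆ N.E \ C i ∧
        ∀ D : Set α, N.IsCircuitSet D → ¬ D ⊆ C i → ¬ D \ C i ⊆ S} := by
  ext S
  simp only [Set.mem_setOf_eq]
  refine ⟨fun ⟨hS, h⟩ => ⟨hS, fun D hD hDCi hDS => ?_⟩, fun ⟨hS, h⟩ =>
    ⟨hS, fun D hD _ hDCi hDS => h D hD hDCi hDS⟩⟩
  by_cases hj : ∀ j : Fin r, j < i → D ≠ C j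
  · exact h D hD hj hDCi hDS
  push_neg at hj
  obtain ⟨j, hji, rfl⟩ := hj
  have hji' : j ≠ i := ne_of_lt hji
  have hCCne : C i ≠ C j := fun hEq => hji' (hCinj hEq).symm
  obtain ⟨C', hC'sub, hC'⟩ := Matroid.circuit_elimination (hCcirc i).1 (hCcirc j).1
    hCCne (hCcirc i).2 (hCcirc j).2
  have hxC' : x ∉ C' := fun hx => (hC'sub hx).2 rfl
  have hC'ne : ∀ k : Fin r, k < i → C' ≠ C k := by
    rintro k _ rfl
    exact hxC' (hCcirc k).2
  have hC'not : ¬ C' ⊆ C i := by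
    intro hsub
    have hss : C' ⊂ C i :=
      hsub.ssubset_of_ne (by rintro rfl; exact hxC' (hCcirc i).2)
    exact hC'.2.1 ((hCcirc i).1.2.2 C' hss)
  have hC'S : C' \ C i ⊆ S := by
    intro w hw
    have hw' : w ∈ C j \ C i := by
      rcases (hC'sub hw.1).1 with h1 | h2
      · exact absurd h1 hw.2
      · exact ⟨h2, hw.2⟩
    exact hDS hw'
  exact h C' hC' hC'ne hC'not hC'S
end
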